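/- arXiv:1706.02004 — 8 statements merged into one kernel-verified Lean document; each statement's English description precedes it below -/
import Mathlib

section
/- If P is a set of n points lying on a strictly convex plane curve in ℝ^d (a planar convex curve that every hyperplane meets in at most 2 points), then any set of hyperplanes separating P has size at least (n−1)/2. -/
/-- Evaluation of the affine functional of a hyperplane `h = (w, c)` in `ℝ^d`,
where the hyperplane is `{x : ⟪w, x⟫ = c}`. -/
def hypVal {d : ℕ} (h : (Fin d → ℝ) × ℝ) (x : Fin d → ℝ) : ℝ :=
  (∑ k, h.1 k * x k) - h.2

/-- If `P` is a set of `n` points lying on a strictly convex plane curve `γ` in `ℝ^d`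
(an injective continuous curve that every hyperplane meets in at most 2 points),
then any set of hyperplanes separating `P` has size at least `(n−1)/2`. -/
theorem stmt_2 (d n : ℕ) (f : ℝ → Fin d → ℝ)
    (hf : Continuous f) (hinj : Function.Injective f)
    (γ : Set (Fin d → ℝ)) (hγ : γ = Set.range f)
    (hcurve : ∀ h : (Fin d → ℝ) × ℝ, h.1 ≠ 0 →
      ∀ x ∈ {z ∈ γ | hypVal h z = 0}, ∀ y ∈ {z ∈ γ | hypVal h z = 0},
        ∀ w ∈ {z ∈ γ | hypVal h z = 0}, x = y ∨ x = w ∨ y = w)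
    (P : Finset (Fin d → ℝ)) (hPγ : ↑P ⊆ γ) (hn : P.card = n)
    (H : Finset ((Fin d → ℝ) × ℝ))
    (hsep : ∀ p ∈ P, ∀ q ∈ P, p ≠ q → ∃ h ∈ H, h.1 ≠ 0 ∧ hypVal h p * hypVal h q < 0) :
    n - 1 ≤ 2 * H.card := by
  subst hγ
  subst hn
  rcases hm : P.card with _ | m
  · simp
  -- preimage of P under f
  set T : Finset ℝ := P.preimage f (Set.injOn_of_injective hinj) with hT
  have hTP : T.image f = P := by
    ext p
    simp only [Finset.mem_image, hT, Finset.mem_preimage]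
    constructor
    · rintro ⟨t, ht, rfl⟩; exact ht
    · intro hp
      obtain ⟨t, rfl⟩ := hPγ hp
      exact ⟨t, hp, rfl⟩
  have hTn : T.card = m + 1 := by
    rw [← hm, ← hTP, Finset.card_image_of_injective _ hinj]
  set e := T.orderIsoOfFin hTn with he
  set t : Fin (m + 1) → ℝ := fun i => (e i : ℝ) with ht
  have htmono : StrictMono t := fun i j hij => by
    exact Subtype.coe_lt_coe.mpr (e.lt_iff_lt.mpr hij)
  have htP : ∀ i, f (t i) ∈ P := fun i => by
    have : t i ∈ T := (e i).2
    simpa [hT, Finset.mem_preimage] using this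
  -- for each consecutive pair, find a hyperplane and a root in between
  have key : ∀ i : Fin m, ∃ x : ((Fin d → ℝ) × ℝ) × ℝ,
      x.1 ∈ H ∧ x.1.1 ≠ 0 ∧ hypVal x.1 (f x.2) = 0 ∧
      x.2 ∈ Set.Ioo (t i.castSucc) (t i.succ) := by
    intro i
    have hab : t i.castSucc < t i.succ := htmono (Fin.castSucc_lt_succ (i := i))
    have hfne : f (t i.castSucc) ≠ f (t i.succ) := fun hc =>
      absurd (hinj hc) (ne_of_lt hab)
    obtain ⟨h, hH, hne, hmul⟩ := hsep _ (htP i.castSucc) _ (htP i.succ) hfne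
    set F : ℝ → ℝ := fun s => hypVal h (f s) with hF
    have hFc : Continuous F := by
      have : Continuous fun s => (∑ k, h.1 k * f s k) - h.2 :=
        (continuous_finset_sum _ fun k _ =>
          continuous_const.mul ((continuous_apply k).comp hf)).sub continuous_const
      simpa [hF, hypVal] using this
    rcases mul_neg_iff.mp hmul with ⟨h1, h2⟩ | ⟨h1, h2⟩
    · -- F a > 0, F b < 0
      have := intermediate_value_Ioo' (le_of_lt hab) hFc.continuousOn
        (show (0:ℝ) ∈ Set.Ioo (F (t i.succ)) (F (t i.castSucc)) from ⟨h2, h1⟩)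
      obtain ⟨r, hr, hr0⟩ := this
      exact ⟨(h, r), hH, hne, hr0, hr⟩
    · have := intermediate_value_Ioo (le_of_lt hab) hFc.continuousOn
        (show (0:ℝ) ∈ Set.Ioo (F (t i.castSucc)) (F (t i.succ)) from ⟨h1, h2⟩)
      obtain ⟨r, hr, hr0⟩ := this
      exact ⟨(h, r), hH, hne, hr0, hr⟩
  choose g hg1 hg2 hg3 hg4 using key
  have glt : ∀ i j : Fin m, i < j → g i ≠ g j := by
    intro i j hij heq
    have h1 := hg4 i
    have h2 := hg4 j
    have hr : (g i).2 = (g j).2 := congrArg Prod.snd heq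
    have hle : t i.succ ≤ t j.castSucc := by
      apply htmono.monotone
      simp only [Fin.le_def, Fin.val_succ, Fin.coe_castSucc]
      omega
    have : (g i).2 < (g j).2 := lt_of_lt_of_le h1.2 (le_trans hle (le_of_lt h2.1))
    rw [hr] at this
    exact lt_irrefl _ this
  have ginj : Function.Injective g := by
    intro i j hij
    rcases lt_trichotomy i j with h | h | h
    · exact absurd hij (glt i j h)
    · exact h
    · exact absurd hij.symm (glt j i h)
  set R : Finset (((Fin d → ℝ) × ℝ) × ℝ) := Finset.image g Finset.univ with hR
  have hcardR : R.card = m := by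
    rw [hR, Finset.card_image_of_injective _ ginj, Finset.card_univ, Fintype.card_fin]
  have hprops : ∀ x ∈ R, x.1 ∈ H ∧ x.1.1 ≠ 0 ∧ hypVal x.1 (f x.2) = 0 := by
    intro x hx
    rw [hR, Finset.mem_image] at hx
    obtain ⟨i, _, rfl⟩ := hx
    exact ⟨hg1 i, hg2 i, hg3 i⟩
  have hfib : R.card = ∑ h ∈ H, (R.filter fun x => x.1 = h).card :=
    Finset.card_eq_sum_card_fiberwise fun x hx => (hprops x hx).1
  have hfib2 : ∀ h ∈ H, (R.filter fun x => x.1 = h).card ≤ 2 := by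
    intro h hH
    by_contra hc
    push_neg at hc
    obtain ⟨a, b, c, ha, hb, hc', hab, hac, hbc⟩ := Finset.two_lt_card_iff.mp hc
    rw [Finset.mem_filter] at ha hb hc'
    obtain ⟨haR, ha1⟩ := ha
    obtain ⟨hbR, hb1⟩ := hb
    obtain ⟨hcR, hc1⟩ := hc'
    have hpa := hprops a haR
    have hpb := hprops b hbR
    have hpc := hprops c hcR
    have hne0 : h.1 ≠ 0 := ha1 ▸ hpa.2.1
    have hmema : f a.2 ∈ {z ∈ Set.range f | hypVal h z = 0} :=
      ⟨Set.mem_range_self _, ha1 ▸ hpa.2.2⟩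
    have hmemb : f b.2 ∈ {z ∈ Set.range f | hypVal h z = 0} :=
      ⟨Set.mem_range_self _, hb1 ▸ hpb.2.2⟩
    have hmemc : f c.2 ∈ {z ∈ Set.range f | hypVal h z = 0} :=
      ⟨Set.mem_range_self _, hc1 ▸ hpc.2.2⟩
    rcases hcurve h hne0 _ hmema _ hmemb _ hmemc with heq | heq | heq
    · exact hab (Prod.ext (ha1.trans hb1.symm) (hinj heq))
    · exact hac (Prod.ext (ha1.trans hc1.symm) (hinj heq))
    · exact hbc (Prod.ext (hb1.trans hc1.symm) (hinj heq))
  have : m ≤ 2 * H.card := by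
    calc m = R.card := hcardR.symm
    _ = ∑ h ∈ H, (R.filter fun x => x.1 = h).card := hfib
    _ ≤ ∑ _h ∈ H, 2 := Finset.sum_le_sum hfib2
    _ = 2 * H.card := by rw [Finset.sum_const, smul_eq_mul, mul_comm]
  simpa using this
end

section
/- Let P be a set of n points in the plane in general position (no three collinear). If a set L' of m lines separates P where points are allowed to lie on separating lines (weak separation), then there exists a set of at most 3m lines that strictly separates P (no point of P lies on any line, and each pair is strictly separated). -/
/-- Evaluation of a line `(a,b,c)` at a point. -/
def lineVal (ℓ : ℝ × ℝ × ℝ) (p : ℝ × ℝ) : ℝ := ℓ.1 * p.1 + ℓ.2.1 * p.2 + ℓ.2.2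

def IsLine (ℓ : ℝ × ℝ × ℝ) : Prop := ℓ.1 ≠ 0 ∨ ℓ.2.1 ≠ 0

lemma lineVal_shift (ℓ : ℝ × ℝ × ℝ) (p : ℝ × ℝ) (t : ℝ) :
    lineVal (ℓ.1, ℓ.2.1, ℓ.2.2 + t) p = lineVal ℓ p + t := by
  simp [lineVal]; ring

/-- If `P` (in general position) is weakly separated by `m` lines (points may lie on
the separating lines), then `P` is strictly separated by at most `3m` lines. -/
theorem stmt_3 (P : Finset (ℝ × ℝ))
    (hgen : ∀ p ∈ P, ∀ q ∈ P, ∀ s ∈ P, p ≠ q → p ≠ s → q ≠ s →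
      ¬ Collinear ℝ ({p, q, s} : Set (ℝ × ℝ)))
    (L' : Finset (ℝ × ℝ × ℝ)) (hL' : ∀ ℓ ∈ L', IsLine ℓ)
    (hweak : ∀ p ∈ P, ∀ q ∈ P, p ≠ q → ∃ ℓ ∈ L',
      lineVal ℓ p * lineVal ℓ q ≤ 0 ∧ ¬ (lineVal ℓ p = 0 ∧ lineVal ℓ q = 0)) :
    ∃ L : Finset (ℝ × ℝ × ℝ), L.card ≤ 3 * L'.card ∧ (∀ ℓ ∈ L, IsLine ℓ) ∧
      (∀ ℓ ∈ L, ∀ p ∈ P, lineVal ℓ p ≠ 0) ∧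
      (∀ p ∈ P, ∀ q ∈ P, p ≠ q → ∃ ℓ ∈ L, lineVal ℓ p * lineVal ℓ q < 0) := by
  classical
  -- choose ε > 0 smaller than every nonzero |lineVal ℓ p|
  set S : Finset ℝ :=
    insert (1 : ℝ) (((L' ×ˢ P).image (fun x => |lineVal x.1 x.2|)).filter (0 < ·)) with hS
  have hSne : S.Nonempty := ⟨1, Finset.mem_insert_self _ _⟩
  set ε : ℝ := S.min' hSne / 2 with hε
  have hεpos : 0 < ε := by
    have : 0 < S.min' hSne := by
      rw [Finset.lt_min'_iff]
      intro y hy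
      rcases Finset.mem_insert.mp hy with h | h
      · simp [h]
      · exact (Finset.mem_filter.mp h).2
    linarith
  have hεsmall : ∀ ℓ ∈ L', ∀ p ∈ P, lineVal ℓ p ≠ 0 → ε < |lineVal ℓ p| := by
    intro ℓ hℓ p hp hne
    have hmem : |lineVal ℓ p| ∈ S := by
      apply Finset.mem_insert_of_mem
      refine Finset.mem_filter.mpr ⟨?_, abs_pos.mpr hne⟩
      exact Finset.mem_image.mpr ⟨(ℓ, p), Finset.mem_product.mpr ⟨hℓ, hp⟩, rfl⟩
    have := S.min'_le _ hmem
    have : 0 < |lineVal ℓ p| := abs_pos.mpr hne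
    have h2 := S.min'_le _ hmem
    have hpos : 0 < S.min' hSne := by linarith [hεpos, hε]
    calc ε = S.min' hSne / 2 := hε
      _ < S.min' hSne := by linarith
      _ ≤ |lineVal ℓ p| := h2
  -- the new lines
  set f : (ℝ × ℝ × ℝ) → (ℝ × ℝ × ℝ) := fun ℓ => (ℓ.1, ℓ.2.1, ℓ.2.2 + ε) with hf
  set g : (ℝ × ℝ × ℝ) → (ℝ × ℝ × ℝ) := fun ℓ => (ℓ.1, ℓ.2.1, ℓ.2.2 + (-ε)) with hg
  refine ⟨L'.image f ∪ L'.image g, ?_, ?_, ?_, ?_⟩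
  · calc (L'.image f ∪ L'.image g).card ≤ (L'.image f).card + (L'.image g).card :=
        Finset.card_union_le _ _
      _ ≤ L'.card + L'.card :=
        add_le_add Finset.card_image_le Finset.card_image_le
      _ ≤ 3 * L'.card := by omega
  · intro ℓ hℓ
    rcases Finset.mem_union.mp hℓ with h | h <;>
    · obtain ⟨ℓ', hℓ', rfl⟩ := Finset.mem_image.mp h
      exact hL' ℓ' hℓ'
  · intro ℓ hℓ p hp
    have key : ∀ ℓ' ∈ L', ∀ t : ℝ, |t| = ε → lineVal (ℓ'.1, ℓ'.2.1, ℓ'.2.2 + t) p ≠ 0 := by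
      intro ℓ' hℓ' t ht
      rw [lineVal_shift]
      by_cases h0 : lineVal ℓ' p = 0
      · rw [h0, zero_add]
        intro h; rw [h] at ht; simp at ht; linarith
      · have := hεsmall ℓ' hℓ' p hp h0
        intro h
        have : |lineVal ℓ' p| = |t| := by
          have : lineVal ℓ' p = -t := by linarith
          rw [this, abs_neg]
        rw [ht] at this
        linarith [hεsmall ℓ' hℓ' p hp h0]
    rcases Finset.mem_union.mp hℓ with h | h <;>
      obtain ⟨ℓ', hℓ', rfl⟩ := Finset.mem_image.mp h
    · exact key ℓ' hℓ' ε (abs_of_pos hεpos) 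
    · exact key ℓ' hℓ' (-ε) (by rw [abs_neg]; exact abs_of_pos hεpos)
  · intro p hp q hq hpq
    obtain ⟨ℓ, hℓ, hprod, hnb⟩ := hweak p hp q hq hpq
    set vp := lineVal ℓ p with hvp
    set vq := lineVal ℓ q with hvq
    have hfp : lineVal (f ℓ) p = vp + ε := lineVal_shift ℓ p ε
    have hfq : lineVal (f ℓ) q = vq + ε := lineVal_shift ℓ q ε
    have hgp : lineVal (g ℓ) p = vp - ε := by
      have := lineVal_shift ℓ p (-ε); simpa [sub_eq_add_neg] using this
    have hgq : lineVal (g ℓ) q = vq - ε := by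
      have := lineVal_shift ℓ q (-ε); simpa [sub_eq_add_neg] using this
    have hfmem : f ℓ ∈ L'.image f ∪ L'.image g :=
      Finset.mem_union_left _ (Finset.mem_image_of_mem f hℓ)
    have hgmem : g ℓ ∈ L'.image f ∪ L'.image g :=
      Finset.mem_union_right _ (Finset.mem_image_of_mem g hℓ)
    by_cases hp0 : vp = 0
    · have hq0 : vq ≠ 0 := fun h => hnb ⟨hp0, h⟩
      have hqε : ε < |vq| := hεsmall ℓ hℓ q hq hq0
      rcases lt_or_gt_of_ne hq0 with hneg | hpos
      · -- vq < 0 : use f ℓ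
        refine ⟨f ℓ, hfmem, ?_⟩
        rw [hfp, hfq, hp0, zero_add]
        have : vq + ε < 0 := by rw [abs_of_neg hneg] at hqε; linarith
        nlinarith
      · -- vq > 0 : use g ℓ
        refine ⟨g ℓ, hgmem, ?_⟩
        rw [hgp, hgq, hp0, zero_sub]
        have : 0 < vq - ε := by rw [abs_of_pos hpos] at hqε; linarith
        nlinarith
    · by_cases hq0 : vq = 0
      · have hpε : ε < |vp| := hεsmall ℓ hℓ p hp hp0
        rcases lt_or_gt_of_ne hp0 with hneg | hpos
        · refine ⟨f ℓ, hfmem, ?_⟩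
          rw [hfp, hfq, hq0, zero_add]
          have : vp + ε < 0 := by rw [abs_of_neg hneg] at hpε; linarith
          nlinarith
        · refine ⟨g ℓ, hgmem, ?_⟩
          rw [hgp, hgq, hq0, zero_sub]
          have : 0 < vp - ε := by rw [abs_of_pos hpos] at hpε; linarith
          nlinarith
      · -- both nonzero, product < 0, opposite signs, f ℓ works
        have hpε : ε < |vp| := hεsmall ℓ hℓ p hp hp0
        have hqε : ε < |vq| := hεsmall ℓ hℓ q hq hq0
        have hlt : vp * vq < 0 := lt_of_le_of_ne hprod (mul_ne_zero hp0 hq0)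
        refine ⟨f ℓ, hfmem, ?_⟩
        rw [hfp, hfq]
        rcases mul_neg_iff.mp hlt with ⟨h1, h2⟩ | ⟨h1, h2⟩
        · have : vq + ε < 0 := by rw [abs_of_neg h2] at hqε; linarith
          nlinarith
        · have : vp + ε < 0 := by rw [abs_of_neg h1] at hpε; linarith
          nlinarith
end

section
/- Any set P of n points in ℝ^d with no three points collinear can be strictly separated by at most ⌈n/2⌉ hyperplanes. -/
namespace Sep

variable {d : ℕ}

abbrev Pt (d : ℕ) := Fin d → ℝ

noncomputable def dot (u v : Pt d) : ℝ := ∑ k, u k * v k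

lemma dot_self_pos {v : Pt d} (hv : v ≠ 0) : 0 < dot v v := by
  have h1 : ∀ k ∈ Finset.univ, (0:ℝ) ≤ v k * v k := fun k _ => mul_self_nonneg _
  obtain ⟨k, hk⟩ : ∃ k, v k ≠ 0 := by
    by_contra h
    push_neg at h
    exact hv (funext h)
  exact Finset.sum_pos' h1 ⟨k, Finset.mem_univ k, mul_self_pos.2 hk⟩

lemma hypVal_eval (h : Pt d × ℝ) (x : Pt d) : hypVal h x = dot h.1 x - h.2 := rfl

/-- evaluation as a linear map in the hyperplane -/
noncomputable def evL (x : Pt d) : ((Pt d × ℝ)) →ₗ[ℝ] ℝ where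
  toFun h := hypVal h x
  map_add' := by
    intro g h
    simp [hypVal, Finset.sum_add_distrib, add_mul]
    ring
  map_smul' := by
    intro c h
    simp only [hypVal, Prod.smul_fst, Prod.smul_snd, Pi.smul_apply, smul_eq_mul,
      RingHom.id_apply]
    rw [mul_sub, Finset.mul_sum]
    congr 1
    exact Finset.sum_congr rfl (by intros; ring)

lemma evL_apply (x : Pt d) (h : Pt d × ℝ) : evL x h = hypVal h x := rfl

lemma hypVal_add (g h : Pt d × ℝ) (x : Pt d) :
    hypVal (g + h) x = hypVal g x + hypVal h x := (evL x).map_add g h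

lemma hypVal_sub (g h : Pt d × ℝ) (x : Pt d) :
    hypVal (g - h) x = hypVal g x - hypVal h x := (evL x).map_sub g h

lemma hypVal_smul (c : ℝ) (h : Pt d × ℝ) (x : Pt d) :
    hypVal (c • h) x = c * hypVal h x := (evL x).map_smul c h


lemma dot_sub_right (w u v : Pt d) : dot w u - dot w v = dot w (u - v) := by
  simp [dot, ← Finset.sum_sub_distrib, mul_sub]

lemma dot_comm (u v : Pt d) : dot u v = dot v u := by
  simp [dot, mul_comm]

lemma dot_smul_right (c : ℝ) (u v : Pt d) : dot u (c • v) = c * dot u v := by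
  simp [dot, Finset.mul_sum]
  exact Finset.sum_congr rfl (by intros; ring)

lemma dot_add_right (w u v : Pt d) : dot w (u + v) = dot w u + dot w v := by
  simp [dot, ← Finset.sum_add_distrib, mul_add]

/-- a hyperplane through `u` not through `z` -/
lemma exists_vanish_one {u z : Pt d} (h : u ≠ z) :
    ∃ v : Pt d × ℝ, hypVal v u = 0 ∧ hypVal v z ≠ 0 := by
  refine ⟨(z - u, dot (z - u) u), by simp [hypVal_eval], ?_⟩
  have : hypVal (z - u, dot (z - u) u) z = dot (z - u) (z - u) := by
    simp [hypVal_eval, dot_sub_right]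
  rw [this]
  exact ne_of_gt (dot_self_pos (sub_ne_zero.2 (Ne.symm h)))

/-- a hyperplane through `u` and `v`, not through `z` -/
lemma exists_vanish_two {u v z : Pt d} (huv : u ≠ v)
    (hz : ∀ κ : ℝ, z ≠ u + κ • (v - u)) :
    ∃ w : Pt d × ℝ, hypVal w u = 0 ∧ hypVal w v = 0 ∧ hypVal w z ≠ 0 := by
  set D : ℝ := dot (v - u) (v - u) with hD
  have hDpos : 0 < D := dot_self_pos (sub_ne_zero.2 (Ne.symm huv))
  set κ0 : ℝ := dot (v - u) (z - u) / D with hκ0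
  set z' : Pt d := (z - u) - κ0 • (v - u) with hz'
  have hzne : z' ≠ 0 := by
    intro h0
    apply hz κ0
    have : z - u = κ0 • (v - u) := by
      have := sub_eq_zero.1 h0
      linear_combination (norm := module) this
    linear_combination (norm := module) this
  have h3 : dot (v - u) z' = 0 := by
    rw [hz', ← dot_sub_right, dot_smul_right, hκ0, ← hD]
    field_simp
    ring
  refine ⟨(z', dot z' u), by simp [hypVal_eval], ?_, ?_⟩
  · have h1 : hypVal (z', dot z' u) v = dot z' (v - u) := by
      simp [hypVal_eval, dot_sub_right]
    rw [h1, dot_comm]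
    exact h3
  · have h1 : hypVal (z', dot z' u) z = dot z' (z - u) := by
      simp [hypVal_eval, dot_sub_right]
    rw [h1]
    have h2 : dot z' (z - u) = dot z' z' + κ0 * dot z' (v - u) := by
      have h4 : (z - u) = z' + κ0 • (v - u) := by
        rw [hz']; module
      rw [h4, dot_add_right, dot_smul_right]
    rw [h2, dot_comm z' (v-u), h3]
    simpa using ne_of_gt (dot_self_pos hzne)

lemma hypVal_lineComb (h : Pt d × ℝ) (a b : Pt d) (t : ℝ) :
    hypVal h (a + t • (b - a)) = (1 - t) * hypVal h a + t * hypVal h b := by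
  simp only [hypVal]
  have : ∀ k ∈ Finset.univ, h.1 k * (a + t • (b - a)) k
      = (1-t) * (h.1 k * a k) + t * (h.1 k * b k) := by
    intro k _
    simp [Pi.add_apply, Pi.smul_apply, Pi.sub_apply, smul_eq_mul]
    ring
  rw [Finset.sum_congr rfl this, Finset.sum_add_distrib, ← Finset.mul_sum, ← Finset.mul_sum]
  ring

lemma opp_signs_of_comb {h : Pt d × ℝ} {a b : Pt d} {t : ℝ} (ht : 0 < t) (ht1 : t < 1)
    (h0 : hypVal h (a + t • (b - a)) = 0) (ha : hypVal h a ≠ 0) :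
    hypVal h a * hypVal h b < 0 := by
  rw [hypVal_lineComb] at h0
  have h2 : (0:ℝ) < hypVal h a * hypVal h a := mul_self_pos.2 ha
  have h3 : (1 - t) * (hypVal h a * hypVal h a) + t * (hypVal h a * hypVal h b) = 0 := by
    linear_combination hypVal h a * h0
  nlinarith [h2, mul_pos (show (0:ℝ) < 1 - t by linarith) h2]

lemma param_line_avoid {a x u v : Pt d} (hv : ∀ ν : ℝ, a ≠ x + ν • v) :
    {t : ℝ | ∃ μ : ℝ, a + t • u = x + μ • v}.Subsingleton := by
  intro t ht t' ht'
  by_contra hne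
  obtain ⟨μ, hμ⟩ := ht
  obtain ⟨μ', hμ'⟩ := ht'
  have hsub : (t - t') • u = (μ - μ') • v := by
    linear_combination (norm := module) hμ - hμ'
  have htne : (t - t') ≠ 0 := sub_ne_zero.2 hne
  have hu : u = ((t - t')⁻¹ * (μ - μ')) • v := by
    have := congrArg (fun w : Pt d => ((t - t')⁻¹ : ℝ) • w) hsub
    simpa [smul_smul, inv_mul_cancel₀ htne] using this
  apply hv (μ - t * ((t - t')⁻¹ * (μ - μ')))
  have := hμ
  rw [hu] at this
  linear_combination (norm := module) this

lemma exists_avoid {ι : Type*} (s : Finset ι) (f : ι → Set ℝ)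
    (hf : ∀ i ∈ s, (f i).Subsingleton) {I : Set ℝ} (hI : I.Infinite) :
    ∃ t ∈ I, ∀ i ∈ s, t ∉ f i := by
  have hfin : (⋃ i ∈ s, f i).Finite :=
    Set.Finite.biUnion s.finite_toSet (fun i hi => (hf i hi).finite)
  obtain ⟨t, ht⟩ := (hI.diff hfin).nonempty
  refine ⟨t, ht.1, fun i hi hmem => ht.2 ?_⟩
  exact Set.mem_biUnion hi hmem

/-- generic choice avoiding finitely many linear conditions, inside the kernel of ψ -/
lemma multiavoid {V W : Type*} [AddCommGroup V] [Module ℝ V]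
    [AddCommGroup W] [Module ℝ W] (ψ : V →ₗ[ℝ] W) {ι : Type*}
    (s : Finset ι) (φ : ι → V →ₗ[ℝ] ℝ)
    (hw : ∀ i ∈ s, ∃ v, ψ v = 0 ∧ φ i v ≠ 0) :
    ∃ v, ψ v = 0 ∧ ∀ i ∈ s, φ i v ≠ 0 := by
  classical
  induction s using Finset.induction_on with
  | empty => exact ⟨0, by simp, by simp⟩
  | @insert j s hj ih =>
    obtain ⟨v0, hv0, hv0s⟩ := ih (fun i hi => hw i (Finset.mem_insert_of_mem hi))
    obtain ⟨w, hwψ, hwj⟩ := hw j (Finset.mem_insert_self j s)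
    have hsub : ∀ i ∈ insert j s, ({t : ℝ | φ i v0 + t * φ i w = 0}).Subsingleton := by
      intro i hi t ht t' ht'
      simp only [Set.mem_setOf_eq] at ht ht'
      rcases Finset.mem_insert.1 hi with rfl | his
      · have : (t - t') * φ i w = 0 := by linarith
        rcases mul_eq_zero.1 this with h | h
        · linarith [sub_eq_zero.1 h]
        · exact absurd h hwj
      · by_cases hb : φ i w = 0
        · exfalso; rw [hb] at ht; simp at ht; exact hv0s i his ht
        · have : (t - t') * φ i w = 0 := by linarith
          rcases mul_eq_zero.1 this with h | h
          · linarith [sub_eq_zero.1 h]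
          · exact absurd h hb
    obtain ⟨t, _, htav⟩ := exists_avoid (insert j s) _ hsub (Set.Ioo_infinite (show (0:ℝ) < 1 by norm_num))
    refine ⟨v0 + t • w, by simp [map_add, hv0, hwψ], ?_⟩
    intro i hi
    have := htav i hi
    simp only [Set.mem_setOf_eq] at this
    simpa [map_add, map_smul, smul_eq_mul] using this

lemma collinear_of_comb {x y a : Pt d} {ν : ℝ} (h : a = x + ν • (y - x)) :
    Collinear ℝ ({x, y, a} : Set (Pt d)) := by
  rw [collinear_iff_exists_forall_eq_smul_vadd]
  refine ⟨x, y - x, ?_⟩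
  rintro p (rfl | rfl | rfl)
  · exact ⟨0, by simp⟩
  · exact ⟨1, by simp⟩
  · exact ⟨ν, by rw [h]; simp [vadd_eq_add]; abel⟩

lemma normal_ne_zero {h : Pt d × ℝ} {p q : Pt d}
    (hpq : hypVal h p * hypVal h q < 0) : h.1 ≠ 0 := by
  intro h0
  have hp : hypVal h p = -h.2 := by simp [hypVal, h0]
  have hq : hypVal h q = -h.2 := by simp [hypVal, h0]
  rw [hp, hq] at hpq
  nlinarith

lemma eq_of_smul_sub_eq_zero {c : ℝ} (hc : c ≠ 0) {u v : Pt d}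
    (h : c • (u - v) = 0) : u = v := by
  rcases smul_eq_zero.1 h with h | h
  · exact absurd h hc
  · exact sub_eq_zero.1 h

lemma eq_comb_of_smul {c : ℝ} (hc : c ≠ 0) {m x : Pt d} {μ : ℝ} {v : Pt d}
    (h : c • m - c • x - μ • v = 0) : m = x + (c⁻¹ * μ) • v := by
  have h2 : c • (m - (x + (c⁻¹ * μ) • v)) = 0 := by
    rw [smul_sub, smul_add, smul_smul, ← mul_assoc, mul_inv_cancel₀ hc, one_mul]
    linear_combination (norm := module) h
  exact eq_of_smul_sub_eq_zero hc h2

lemma rec_main (P : Finset (Pt d))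
    (hgen : ∀ p ∈ P, ∀ q ∈ P, ∀ s ∈ P, p ≠ q → p ≠ s → q ≠ s →
      ¬ Collinear ℝ ({p, q, s} : Set (Pt d))) :
    ∀ n : ℕ, ∀ Q : Finset (Pt d), Q.card = n → 1 ≤ n → Q ⊆ P →
    ∀ a b : Pt d, a ∈ P → b ∈ P → a ≠ b →
    ∀ w : Pt d × ℝ, 0 < hypVal w a → 0 < hypVal w b →
    (∀ x ∈ Q, hypVal w x < 0) →
    ∃ H : Finset (Pt d × ℝ), H.card ≤ (n + 1) / 2 ∧
      (∀ h ∈ H, h.1 ≠ 0) ∧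
      (∃ h ∈ H, hypVal h a * hypVal h b < 0) ∧
      (∀ x ∈ Q, ∀ y ∈ Q, x ≠ y → ∃ h ∈ H, hypVal h x * hypVal h y < 0) := by
  classical
  intro n
  induction n using Nat.strong_induction_on with
  | _ n ih =>
  intro Q hQcard hn hQP a b haP hbP hab w hwa hwb hwQ
  have haQ : a ∉ Q := fun h => by have := hwQ a h; linarith
  have hbQ : b ∉ Q := fun h => by have := hwQ b h; linarith
  have hnc_xya : ∀ x ∈ Q, ∀ y ∈ Q, x ≠ y → ∀ ν : ℝ, a ≠ x + ν • (y - x) := by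
    intro x hx y hy hxy ν h
    have hxa : x ≠ a := fun e => haQ (e ▸ hx)
    have hya : y ≠ a := fun e => haQ (e ▸ hy)
    exact hgen x (hQP hx) y (hQP hy) a haP hxy hxa hya (collinear_of_comb h)
  by_cases h3 : 3 ≤ n
  ------------------------------------------------------------------
  -- main recursive case: n ≥ 3
  ------------------------------------------------------------------
  · have hQne : Q.Nonempty := Finset.card_pos.1 (by omega)
    -- choose t
    obtain ⟨t, htI, htB⟩ := exists_avoid (Q.offDiag)
      (fun p => {t : ℝ | ∃ μ : ℝ, a + t • (b - a) = p.1 + μ • (p.2 - p.1)})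
      (fun p hp => by
        obtain ⟨h1, h2, h3⟩ := Finset.mem_offDiag.1 hp
        exact param_line_avoid (hnc_xya _ h1 _ h2 h3))
      (Set.Ioo_infinite (show (0:ℝ) < 1 by norm_num))
    obtain ⟨ht0, ht1⟩ := htI
    set m : Pt d := a + t • (b - a) with hm
    have hmline : ∀ x ∈ Q, ∀ y ∈ Q, x ≠ y → ∀ μ : ℝ, m ≠ x + μ • (y - x) := by
      intro x hx y hy hxy μ he
      exact htB (x, y) (Finset.mem_offDiag.2 ⟨hx, hy, hxy⟩) ⟨μ, he⟩
    have hmQ : ∀ x ∈ Q, m ≠ x := by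
      intro x hx he
      obtain ⟨y, hy, hyx⟩ := Finset.exists_mem_ne (show 1 < Q.card by omega) x
      apply hmline x hx y hy (Ne.symm hyx) 0
      rw [he]; simp
    have hma : m ≠ a := by
      intro e
      have h0 : t • (b - a) = 0 := by
        linear_combination (norm := module) e
      rcases smul_eq_zero.1 h0 with h | h
      · linarith
      · exact hab (sub_eq_zero.1 h).symm
    have hwm : 0 < hypVal w m := by
      rw [hm, hypVal_lineComb]
      nlinarith
    -- the linear functional positive on Q, zero at m
    set g' : Pt d × ℝ := (-w.1, -(hypVal w m + w.2)) with hg'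
    have hg'eval : ∀ z, hypVal g' z = hypVal w m - hypVal w z := by
      intro z
      simp only [hypVal, hg', Pi.neg_apply, neg_mul, Finset.sum_neg_distrib]
      ring
    have hG : ∀ x ∈ Q, 0 < hypVal g' x := by
      intro x hx
      rw [hg'eval]
      have := hwQ x hx
      linarith
    have hg'm : hypVal g' m = 0 := by rw [hg'eval]; ring
    -- generic c with distinct ratios
    obtain ⟨c, hcm, hcpair⟩ := multiavoid (evL m) (Q.offDiag)
      (fun p => (hypVal g' p.2) • evL p.1 - (hypVal g' p.1) • evL p.2)
      (by
        intro p hp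
        obtain ⟨hx, hy, hxy⟩ := Finset.mem_offDiag.1 hp
        have hz : ∀ κ : ℝ, p.2 ≠ m + κ • (p.1 - m) := by
          intro κ he
          by_cases hκ0 : κ = 0
          · rw [hκ0] at he; simp at he
            exact (hmQ p.2 hy) he.symm
          by_cases hκ1 : κ = 1
          · rw [hκ1, one_smul] at he
            have : p.2 = p.1 := by rw [he]; abel
            exact hxy this.symm
          · have h1κ : (1 - κ) ≠ 0 := sub_ne_zero.2 (Ne.symm hκ1)
            apply hmline p.1 hx p.2 hy hxy ((1 - κ)⁻¹ * 1)
            apply eq_comb_of_smul h1κ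
            linear_combination (norm := module) -he
        obtain ⟨wv, hw1, hw2, hw3⟩ := exists_vanish_two (hmQ p.1 hx) hz
        refine ⟨wv, hw1, ?_⟩
        simp only [LinearMap.sub_apply, LinearMap.smul_apply, evL_apply, smul_eq_mul,
          hw2, mul_zero, zero_sub, neg_ne_zero]
        exact mul_ne_zero (ne_of_gt (hG p.1 hx)) hw3)
    rw [evL_apply] at hcm
    -- ratios
    set ρ : Pt d → ℝ := fun z => hypVal c z / hypVal g' z with hρ
    have hρinj : ∀ x ∈ Q, ∀ y ∈ Q, x ≠ y → ρ x ≠ ρ y := by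
      intro x hx y hy hxy he
      apply hcpair (x, y) (Finset.mem_offDiag.2 ⟨hx, hy, hxy⟩)
      simp only [LinearMap.sub_apply, LinearMap.smul_apply, evL_apply, smul_eq_mul]
      have h1 := (div_eq_div_iff (ne_of_gt (hG x hx)) (ne_of_gt (hG y hy))).1 he
      linarith
    -- top two
    obtain ⟨v1, hv1Q, hv1max⟩ := Finset.exists_max_image Q ρ hQne
    set Q1 := Q.erase v1 with hQ1
    have hQ1card : Q1.card = n - 1 := by rw [hQ1, Finset.card_erase_of_mem hv1Q, hQcard]
    have hQ1ne : Q1.Nonempty := Finset.card_pos.1 (by omega)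
    obtain ⟨v2, hv2Q1, hv2max⟩ := Finset.exists_max_image Q1 ρ hQ1ne
    have hv2Q : v2 ∈ Q := Finset.mem_of_mem_erase hv2Q1
    have hv21 : v2 ≠ v1 := Finset.ne_of_mem_erase hv2Q1
    set Q2 := Q1.erase v2 with hQ2
    have hQ2card : Q2.card = n - 2 := by
      rw [hQ2, Finset.card_erase_of_mem hv2Q1, hQ1card]; omega
    have hQ2ne : Q2.Nonempty := Finset.card_pos.1 (by omega)
    obtain ⟨v3, hv3Q2, hv3max⟩ := Finset.exists_max_image Q2 ρ hQ2ne
    have hv3Q1 : v3 ∈ Q1 := Finset.mem_of_mem_erase hv3Q2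
    have hv3Q : v3 ∈ Q := Finset.mem_of_mem_erase hv3Q1
    have hρ21 : ρ v2 < ρ v1 :=
      lt_of_le_of_ne (hv1max v2 hv2Q) (hρinj v2 hv2Q v1 hv1Q hv21)
    have hρ32 : ρ v3 < ρ v2 :=
      lt_of_le_of_ne (hv2max v3 hv3Q1)
        (hρinj v3 hv3Q v2 hv2Q (Finset.ne_of_mem_erase hv3Q2))
    set μ0 : ℝ := (ρ v3 + ρ v2) / 2 with hμ0
    set ℓ0 : Pt d × ℝ := c - μ0 • g' with hℓ0
    have hℓ0eval : ∀ z, hypVal ℓ0 z = hypVal c z - μ0 * hypVal g' z := by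
      intro z; rw [hℓ0, hypVal_sub, hypVal_smul]
    have hℓ0m : hypVal ℓ0 m = 0 := by rw [hℓ0eval, hcm, hg'm]; ring
    have hQsign : ∀ x ∈ Q, hypVal ℓ0 x = (ρ x - μ0) * hypVal g' x := by
      intro x hx
      rw [hℓ0eval, hρ]
      have hGne := ne_of_gt (hG x hx)
      field_simp
    have hv1pos : 0 < hypVal ℓ0 v1 := by
      rw [hQsign v1 hv1Q]
      exact mul_pos (by rw [hμ0]; linarith) (hG v1 hv1Q)
    have hv2pos : 0 < hypVal ℓ0 v2 := by
      rw [hQsign v2 hv2Q]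
      exact mul_pos (by rw [hμ0]; linarith) (hG v2 hv2Q)
    have hQ2neg : ∀ x ∈ Q2, hypVal ℓ0 x < 0 := by
      intro x hx
      have hxQ : x ∈ Q := Finset.mem_of_mem_erase (Finset.mem_of_mem_erase hx)
      rw [hQsign x hxQ]
      have := hv3max x hx
      exact mul_neg_of_neg_of_pos (by rw [hμ0]; linarith) (hG x hxQ)
    have hQnonzero : ∀ x ∈ Q, hypVal ℓ0 x ≠ 0 := by
      intro x hx
      by_cases h1 : x = v1
      · rw [h1]; exact ne_of_gt hv1pos
      by_cases h2 : x = v2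
      · rw [h2]; exact ne_of_gt hv2pos
      · exact ne_of_lt (hQ2neg x (Finset.mem_erase.2 ⟨h2, Finset.mem_erase.2 ⟨h1, hx⟩⟩))
    -- perturbation so that a is off the hyperplane
    obtain ⟨h', hh'm, hh'a⟩ := exists_vanish_one hma
    set δ : ℝ := Q.inf' hQne (fun x => |hypVal ℓ0 x| / (|hypVal h' x| + 1)) with hδ
    have hδpos : 0 < δ := by
      rw [hδ, Finset.lt_inf'_iff]
      intro x hx
      exact div_pos (abs_pos.2 (hQnonzero x hx)) (by positivity)
    obtain ⟨ε, hεI, hεB⟩ := exists_avoid {0}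
      (fun _ : ℕ => {ε : ℝ | hypVal ℓ0 a + ε * hypVal h' a = 0})
      (by
        intro i _ e he e' he'
        simp only [Set.mem_setOf_eq] at he he'
        have : (e - e') * hypVal h' a = 0 := by linarith
        rcases mul_eq_zero.1 this with h | h
        · linarith [sub_eq_zero.1 h]
        · exact absurd h hh'a)
      (Set.Ioo_infinite hδpos)
    obtain ⟨hε0, hεδ⟩ := hεI
    have hεa : hypVal ℓ0 a + ε * hypVal h' a ≠ 0 := fun e =>
      hεB 0 (Finset.mem_singleton_self 0) e
    set ℓ : Pt d × ℝ := ℓ0 + ε • h' with hℓdef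
    have hℓeval : ∀ z, hypVal ℓ z = hypVal ℓ0 z + ε * hypVal h' z := by
      intro z; rw [hℓdef, hypVal_add, hypVal_smul]
    have hℓm : hypVal ℓ m = 0 := by rw [hℓeval, hℓ0m, hh'm]; ring
    have hℓa : hypVal ℓ a ≠ 0 := by rw [hℓeval]; exact hεa
    have hpres : ∀ x ∈ Q, |ε * hypVal h' x| < |hypVal ℓ0 x| := by
      intro x hx
      have h1 : δ ≤ |hypVal ℓ0 x| / (|hypVal h' x| + 1) :=
        Finset.inf'_le _ hx
      have h2 : (0:ℝ) < |hypVal h' x| + 1 := by positivity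
      have h3 : δ * (|hypVal h' x| + 1) ≤ |hypVal ℓ0 x| := by
        rw [← le_div_iff₀ h2]; exact h1
      rw [abs_mul, abs_of_pos hε0]
      nlinarith [abs_nonneg (hypVal h' x)]
    have hℓv1 : 0 < hypVal ℓ v1 := by
      have := hpres v1 hv1Q
      rw [abs_of_pos hv1pos] at this
      have h4 := (abs_lt.1 this).1
      rw [hℓeval]; linarith
    have hℓv2 : 0 < hypVal ℓ v2 := by
      have := hpres v2 hv2Q
      rw [abs_of_pos hv2pos] at this
      have h4 := (abs_lt.1 this).1
      rw [hℓeval]; linarith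
    have hℓQ2 : ∀ x ∈ Q2, hypVal ℓ x < 0 := by
      intro x hx
      have hxQ : x ∈ Q := Finset.mem_of_mem_erase (Finset.mem_of_mem_erase hx)
      have := hpres x hxQ
      rw [abs_of_neg (hQ2neg x hx)] at this
      have h4 := (abs_lt.1 this).2
      rw [hℓeval]; linarith [hQ2neg x hx]
    have hℓab : hypVal ℓ a * hypVal ℓ b < 0 := by
      apply opp_signs_of_comb ht0 ht1 _ hℓa
      rw [← hm]; exact hℓm
    -- recursion
    obtain ⟨H2, hH2card, hH2norm, hH2ab, hH2pairs⟩ :=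
      ih (n - 2) (by omega) Q2 hQ2card (by omega)
        (((Finset.erase_subset _ _).trans (Finset.erase_subset _ _)).trans hQP)
        v1 v2 (hQP hv1Q) (hQP hv2Q) (Ne.symm hv21)
        ℓ hℓv1 hℓv2 hℓQ2
    refine ⟨insert ℓ H2, ?_, ?_, ?_, ?_⟩
    · calc (insert ℓ H2).card ≤ H2.card + 1 := Finset.card_insert_le _ _
        _ ≤ (n + 1) / 2 := by omega
    · intro h hh
      rcases Finset.mem_insert.1 hh with rfl | hh
      · exact normal_ne_zero hℓab
      · exact hH2norm h hh
    · exact ⟨ℓ, Finset.mem_insert_self _ _, hℓab⟩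
    · intro x hx y hy hxy
      have hmemQ2 : ∀ z ∈ Q, z ≠ v1 → z ≠ v2 → z ∈ Q2 := by
        intro z hz h1 h2
        exact Finset.mem_erase.2 ⟨h2, Finset.mem_erase.2 ⟨h1, hz⟩⟩
      by_cases hx1 : x = v1
      · by_cases hy2 : y = v2
        · obtain ⟨h, hh, hs⟩ := hH2ab
          exact ⟨h, Finset.mem_insert_of_mem hh, by rw [hx1, hy2]; exact hs⟩
        · have hyQ2 : y ∈ Q2 := hmemQ2 y hy (by rw [← hx1]; exact Ne.symm hxy) hy2
          exact ⟨ℓ, Finset.mem_insert_self _ _, by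
            rw [hx1]; exact mul_neg_of_pos_of_neg hℓv1 (hℓQ2 y hyQ2)⟩
      by_cases hx2 : x = v2
      · by_cases hy1 : y = v1
        · obtain ⟨h, hh, hs⟩ := hH2ab
          exact ⟨h, Finset.mem_insert_of_mem hh, by
            rw [hx2, hy1, mul_comm]; exact hs⟩
        · have hyQ2 : y ∈ Q2 := hmemQ2 y hy hy1 (by rw [← hx2]; exact Ne.symm hxy)
          exact ⟨ℓ, Finset.mem_insert_self _ _, by
            rw [hx2]; exact mul_neg_of_pos_of_neg hℓv2 (hℓQ2 y hyQ2)⟩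
      · have hxQ2 : x ∈ Q2 := hmemQ2 x hx hx1 hx2
        by_cases hy1 : y = v1
        · exact ⟨ℓ, Finset.mem_insert_self _ _, by
            rw [hy1, mul_comm]; exact mul_neg_of_pos_of_neg hℓv1 (hℓQ2 x hxQ2)⟩
        by_cases hy2 : y = v2
        · exact ⟨ℓ, Finset.mem_insert_self _ _, by
            rw [hy2, mul_comm]; exact mul_neg_of_pos_of_neg hℓv2 (hℓQ2 x hxQ2)⟩
        · have hyQ2 : y ∈ Q2 := hmemQ2 y hy hy1 hy2
          obtain ⟨h, hh, hs⟩ := hH2pairs x hxQ2 y hyQ2 hxy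
          exact ⟨h, Finset.mem_insert_of_mem hh, hs⟩
  ------------------------------------------------------------------
  -- base cases : n = 1 or n = 2
  ------------------------------------------------------------------
  · by_cases h2 : n = 2
    -- n = 2
    · obtain ⟨x, y, hxy, hQxy⟩ := Finset.card_eq_two.1 (by rw [hQcard, h2])
      have hx : x ∈ Q := by rw [hQxy]; exact Finset.mem_insert_self _ _
      have hy : y ∈ Q := by rw [hQxy]; simp
      have hnc_abx : ∀ ν : ℝ, x ≠ a + ν • (b - a) := by
        intro ν h
        have hxa : x ≠ a := fun e => haQ (e ▸ hx)
        have hxb : x ≠ b := fun e => hbQ (e ▸ hx)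
        exact hgen a haP b hbP x (hQP hx) hab (Ne.symm hxa) (Ne.symm hxb)
          (collinear_of_comb h)
      -- choose t and s
      obtain ⟨t, htI, htB⟩ := exists_avoid {0}
        (fun _ : ℕ => {t : ℝ | ∃ μ : ℝ, a + t • (b - a) = x + μ • (y - x)})
        (fun i _ => param_line_avoid (hnc_xya x hx y hy hxy))
        (Set.Ioo_infinite (show (0:ℝ) < 1 by norm_num))
      obtain ⟨ht0, ht1⟩ := htI
      obtain ⟨s, hsI, hsB⟩ := exists_avoid {0}
        (fun _ : ℕ => {s : ℝ | ∃ μ : ℝ, x + s • (y - x) = a + μ • (b - a)})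
        (fun i _ => param_line_avoid hnc_abx)
        (Set.Ioo_infinite (show (0:ℝ) < 1 by norm_num))
      obtain ⟨hs0, hs1⟩ := hsI
      set m : Pt d := a + t • (b - a) with hm
      set m' : Pt d := x + s • (y - x) with hm'
      have hm_not : ∀ μ : ℝ, m ≠ x + μ • (y - x) := by
        intro μ he
        exact htB 0 (Finset.mem_singleton_self 0) ⟨μ, he⟩
      have hm'_not : ∀ μ : ℝ, m' ≠ a + μ • (b - a) := by
        intro μ he
        exact hsB 0 (Finset.mem_singleton_self 0) ⟨μ, he⟩
      have hmm' : m ≠ m' := fun e => hm_not s e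
      have hyx0 : y - x ≠ 0 := sub_ne_zero.2 (Ne.symm hxy)
      have hba0 : b - a ≠ 0 := sub_ne_zero.2 (Ne.symm hab)
      -- x is not on line(m, m')
      have hzx : ∀ κ : ℝ, x ≠ m + κ • (m' - m) := by
        intro κ he
        by_cases hκ0 : κ = 0
        · rw [hκ0] at he; simp at he
          apply hm_not 0
          rw [← he]; simp
        by_cases hκ1 : κ = 1
        · rw [hκ1, one_smul] at he
          have hxm' : x = m' := by rw [he]; abel
          rw [hm'] at hxm'
          have : s • (y - x) = 0 := by linear_combination (norm := module) -hxm'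
          rcases smul_eq_zero.1 this with h | h
          · linarith
          · exact hyx0 h
        · have h1κ : (1 - κ) ≠ 0 := sub_ne_zero.2 (Ne.symm hκ1)
          apply hm_not ((1 - κ)⁻¹ * (-(κ * s)))
          apply eq_comb_of_smul h1κ
          rw [hm'] at he
          linear_combination (norm := module) -he
      -- a is not on line(m, m')
      have hza : ∀ κ : ℝ, a ≠ m + κ • (m' - m) := by
        intro κ he
        by_cases hκ0 : κ = 0
        · rw [hκ0] at he; simp at he
          rw [hm] at he
          have : t • (b - a) = 0 := by linear_combination (norm := module) -he
          rcases smul_eq_zero.1 this with h | h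
          · linarith
          · exact hba0 h
        · apply hm'_not (κ⁻¹ * ((κ - 1) * t))
          apply eq_comb_of_smul hκ0
          linear_combination (norm := module) -he + (κ - 1 : ℝ) • hm
      -- build the separating hyperplane
      obtain ⟨ℓ, hψ, hφ⟩ := multiavoid ((evL m).prod (evL m'))
        (Finset.univ : Finset Bool)
        (fun i => if i then evL a else evL x)
        (by
          intro i _
          cases i
          · obtain ⟨wv, hw1, hw2, hw3⟩ := exists_vanish_two hmm' hzx
            exact ⟨wv, by simp [LinearMap.prod_apply, evL_apply, hw1, hw2, Prod.ext_iff],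
              by simpa [evL_apply] using hw3⟩
          · obtain ⟨wv, hw1, hw2, hw3⟩ := exists_vanish_two hmm' hza
            exact ⟨wv, by simp [LinearMap.prod_apply, evL_apply, hw1, hw2, Prod.ext_iff],
              by simpa [evL_apply] using hw3⟩)
      have hℓm : hypVal ℓ m = 0 := by
        have := congrArg Prod.fst hψ
        simpa [LinearMap.prod_apply, evL_apply] using this
      have hℓm' : hypVal ℓ m' = 0 := by
        have := congrArg Prod.snd hψ
        simpa [LinearMap.prod_apply, evL_apply] using this
      have hℓa : hypVal ℓ a ≠ 0 := by
        have := hφ true (Finset.mem_univ _)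
        simpa [evL_apply] using this
      have hℓx : hypVal ℓ x ≠ 0 := by
        have := hφ false (Finset.mem_univ _)
        simpa [evL_apply] using this
      have hab2 : hypVal ℓ a * hypVal ℓ b < 0 := by
        apply opp_signs_of_comb ht0 ht1 _ hℓa
        rw [← hm]; exact hℓm
      have hxy2 : hypVal ℓ x * hypVal ℓ y < 0 := by
        apply opp_signs_of_comb hs0 hs1 _ hℓx
        rw [← hm']; exact hℓm'
      refine ⟨{ℓ}, by rw [Finset.card_singleton]; omega, ?_, ⟨ℓ, Finset.mem_singleton_self _, hab2⟩, ?_⟩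
      · intro h hh
        rw [Finset.mem_singleton.1 hh]
        exact normal_ne_zero hab2
      · intro x' hx' y' hy' hne
        rw [hQxy] at hx' hy'
        simp only [Finset.mem_insert, Finset.mem_singleton] at hx' hy'
        refine ⟨ℓ, Finset.mem_singleton_self _, ?_⟩
        rcases hx' with rfl | rfl <;> rcases hy' with rfl | rfl
        · exact absurd rfl hne
        · exact hxy2
        · rw [mul_comm]; exact hxy2
        · exact absurd rfl hne
    -- n = 1
    · have hn1 : n = 1 := by omega
      have hma : a + (2⁻¹:ℝ) • (b - a) ≠ a := by
        intro e
        have h0 : (2⁻¹:ℝ) • (b - a) = 0 := by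
          linear_combination (norm := module) e
        rcases smul_eq_zero.1 h0 with h | h
        · norm_num at h
        · exact hab (sub_eq_zero.1 h).symm
      obtain ⟨ℓ, hℓm, hℓa⟩ := exists_vanish_one hma
      have hab2 : hypVal ℓ a * hypVal ℓ b < 0 :=
        opp_signs_of_comb (by norm_num) (by norm_num) hℓm hℓa
      refine ⟨{ℓ}, by rw [Finset.card_singleton]; omega, ?_,
        ⟨ℓ, Finset.mem_singleton_self _, hab2⟩, ?_⟩
      · intro h hh
        rw [Finset.mem_singleton.1 hh]
        exact normal_ne_zero hab2
      · intro x hx y hy hxy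
        exfalso
        obtain ⟨z, hz⟩ := Finset.card_eq_one.1 (by rw [hQcard, hn1])
        rw [hz] at hx hy
        rw [Finset.mem_singleton.1 hx, Finset.mem_singleton.1 hy] at hxy
        exact hxy rfl

lemma hypVal_shift (u : Pt d) (β θ : ℝ) (z : Pt d) :
    hypVal (u, β + θ) z = hypVal (u, β) z - θ := by
  simp [hypVal]; ring

end Sep

/-- Any set `P` of `n` points in `ℝ^d` with no three points collinear can be strictly
separated by at most `⌈n/2⌉` hyperplanes. -/
theorem stmt_4 (d : ℕ) (P : Finset (Fin d → ℝ))
    (hgen : ∀ p ∈ P, ∀ q ∈ P, ∀ s ∈ P, p ≠ q → p ≠ s → q ≠ s →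
      ¬ Collinear ℝ ({p, q, s} : Set (Fin d → ℝ))) :
    ∃ H : Finset ((Fin d → ℝ) × ℝ), H.card ≤ (P.card + 1) / 2 ∧
      (∀ h ∈ H, h.1 ≠ 0) ∧
      ∀ p ∈ P, ∀ q ∈ P, p ≠ q → ∃ h ∈ H, hypVal h p * hypVal h q < 0 := by
  classical
  by_cases hP1 : P.card ≤ 1
  · refine ⟨∅, by simp, by simp, ?_⟩
    intro p hp q hq hpq
    exfalso
    have : 1 < P.card := Finset.one_lt_card.2 ⟨p, hp, q, hq, hpq⟩
    omega
  push_neg at hP1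
  -- a functional injective on P
  obtain ⟨c0, -, hc0⟩ := Sep.multiavoid (0 : ((Fin d → ℝ) × ℝ) →ₗ[ℝ] ℝ) P.offDiag
    (fun p => Sep.evL p.1 - Sep.evL p.2)
    (by
      intro p hp
      obtain ⟨hp1, hp2, hp12⟩ := Finset.mem_offDiag.1 hp
      refine ⟨(p.1 - p.2, 0), rfl, ?_⟩
      have h1 : (Sep.evL p.1 - Sep.evL p.2) ((p.1 - p.2, 0))
          = Sep.dot (p.1 - p.2) (p.1 - p.2) := by
        simp only [LinearMap.sub_apply, Sep.evL_apply, Sep.hypVal_eval, sub_zero]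
        rw [Sep.dot_sub_right]
      rw [h1]
      exact ne_of_gt (Sep.dot_self_pos (sub_ne_zero.2 hp12)))
  have hf : ∀ x ∈ P, ∀ y ∈ P, x ≠ y → hypVal c0 x ≠ hypVal c0 y := by
    intro x hx y hy hxy he
    have := hc0 (x, y) (Finset.mem_offDiag.2 ⟨hx, hy, hxy⟩)
    simp only [LinearMap.sub_apply, Sep.evL_apply] at this
    exact this (by linarith)
  set f : (Fin d → ℝ) → ℝ := fun z => hypVal c0 z with hfdef
  have hPne : P.Nonempty := Finset.card_pos.1 (by omega)
  obtain ⟨a, haP, hamax⟩ := Finset.exists_max_image P f hPne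
  set P1 := P.erase a with hP1def
  have hP1card : P1.card = P.card - 1 := Finset.card_erase_of_mem haP
  have hP1ne : P1.Nonempty := Finset.card_pos.1 (by omega)
  obtain ⟨b, hbP1, hbmax⟩ := Finset.exists_max_image P1 f hP1ne
  have hbP : b ∈ P := Finset.mem_of_mem_erase hbP1
  have hba : b ≠ a := Finset.ne_of_mem_erase hbP1
  by_cases hP2 : P.card = 2
  · -- exactly two points
    set θ : ℝ := (f a + f b) / 2 with hθ
    set ℓ : (Fin d → ℝ) × ℝ := (c0.1, c0.2 + θ) with hℓ
    have hℓeval : ∀ z, hypVal ℓ z = f z - θ := fun z => Sep.hypVal_shift c0.1 c0.2 θ z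
    have hfab : f a ≠ f b := hf a haP b hbP (Ne.symm hba)
    have hprod : hypVal ℓ a * hypVal ℓ b < 0 := by
      rw [hℓeval, hℓeval, hθ]
      nlinarith [mul_self_pos.2 (sub_ne_zero.2 hfab)]
    have hPab : ({a, b} : Finset (Fin d → ℝ)) = P := by
      apply Finset.eq_of_subset_of_card_le
      · intro z hz
        rcases Finset.mem_insert.1 hz with rfl | hz
        · exact haP
        · rw [Finset.mem_singleton.1 hz]; exact hbP
      · rw [hP2, Finset.card_pair (Ne.symm hba)]
    refine ⟨{ℓ}, by rw [Finset.card_singleton]; omega, ?_, ?_⟩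
    · intro h hh
      rw [Finset.mem_singleton.1 hh]
      exact Sep.normal_ne_zero hprod
    · intro p hp q hq hpq
      rw [← hPab] at hp hq
      simp only [Finset.mem_insert, Finset.mem_singleton] at hp hq
      refine ⟨ℓ, Finset.mem_singleton_self _, ?_⟩
      rcases hp with rfl | rfl <;> rcases hq with rfl | rfl
      · exact absurd rfl hpq
      · exact hprod
      · rw [mul_comm]; exact hprod
      · exact absurd rfl hpq
  · -- at least three points
    have hP3 : 3 ≤ P.card := by omega
    set P2 := P1.erase b with hP2def
    have hP2card : P2.card = P.card - 2 := by
      rw [hP2def, Finset.card_erase_of_mem hbP1, hP1card]; omega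
    have hP2ne : P2.Nonempty := Finset.card_pos.1 (by omega)
    obtain ⟨v3, hv3P2, hv3max⟩ := Finset.exists_max_image P2 f hP2ne
    have hv3P1 : v3 ∈ P1 := Finset.mem_of_mem_erase hv3P2
    have hv3P : v3 ∈ P := Finset.mem_of_mem_erase hv3P1
    have hfv3b : f v3 < f b :=
      lt_of_le_of_ne (hbmax v3 hv3P1) (hf v3 hv3P b hbP (Finset.ne_of_mem_erase hv3P2))
    have hfba : f b ≤ f a := hamax b hbP
    set θ : ℝ := (f b + f v3) / 2 with hθ
    set w0 : (Fin d → ℝ) × ℝ := (c0.1, c0.2 + θ) with hw0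
    have hw0eval : ∀ z, hypVal w0 z = f z - θ := fun z => Sep.hypVal_shift c0.1 c0.2 θ z
    have hw0a : 0 < hypVal w0 a := by rw [hw0eval, hθ]; linarith
    have hw0b : 0 < hypVal w0 b := by rw [hw0eval, hθ]; linarith
    have hw0P2 : ∀ x ∈ P2, hypVal w0 x < 0 := by
      intro x hx
      rw [hw0eval, hθ]
      have := hv3max x hx
      linarith
    obtain ⟨H2, hH2card, hH2norm, hH2ab, hH2pairs⟩ :=
      Sep.rec_main P hgen (P.card - 2) P2 hP2card (by omega)
        (((Finset.erase_subset _ _).trans (Finset.erase_subset _ _)))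
        a b haP hbP (Ne.symm hba) w0 hw0a hw0b hw0P2
    have hv3prod : hypVal w0 a * hypVal w0 v3 < 0 :=
      mul_neg_of_pos_of_neg hw0a (hw0P2 v3 hv3P2)
    refine ⟨insert w0 H2, ?_, ?_, ?_⟩
    · calc (insert w0 H2).card ≤ H2.card + 1 := Finset.card_insert_le _ _
        _ ≤ (P.card + 1) / 2 := by omega
    · intro h hh
      rcases Finset.mem_insert.1 hh with rfl | hh
      · exact Sep.normal_ne_zero hv3prod
      · exact hH2norm h hh
    · intro p hp q hq hpq
      have hmemP2 : ∀ z ∈ P, z ≠ a → z ≠ b → z ∈ P2 := by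
        intro z hz h1 h2
        exact Finset.mem_erase.2 ⟨h2, Finset.mem_erase.2 ⟨h1, hz⟩⟩
      by_cases hpa : p = a
      · by_cases hqb : q = b
        · obtain ⟨h, hh, hs⟩ := hH2ab
          exact ⟨h, Finset.mem_insert_of_mem hh, by rw [hpa, hqb]; exact hs⟩
        · have hqP2 : q ∈ P2 := hmemP2 q hq (by rw [← hpa]; exact Ne.symm hpq) hqb
          exact ⟨w0, Finset.mem_insert_self _ _, by
            rw [hpa]; exact mul_neg_of_pos_of_neg hw0a (hw0P2 q hqP2)⟩
      by_cases hpb : p = b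
      · by_cases hqa : q = a
        · obtain ⟨h, hh, hs⟩ := hH2ab
          exact ⟨h, Finset.mem_insert_of_mem hh, by rw [hpb, hqa, mul_comm]; exact hs⟩
        · have hqP2 : q ∈ P2 := hmemP2 q hq hqa (by rw [← hpb]; exact Ne.symm hpq)
          exact ⟨w0, Finset.mem_insert_self _ _, by
            rw [hpb]; exact mul_neg_of_pos_of_neg hw0b (hw0P2 q hqP2)⟩
      · have hpP2 : p ∈ P2 := hmemP2 p hp hpa hpb
        by_cases hqa : q = a
        · exact ⟨w0, Finset.mem_insert_self _ _, by
            rw [hqa, mul_comm]; exact mul_neg_of_pos_of_neg hw0a (hw0P2 p hpP2)⟩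
        by_cases hqb : q = b
        · exact ⟨w0, Finset.mem_insert_self _ _, by
            rw [hqb, mul_comm]; exact mul_neg_of_pos_of_neg hw0b (hw0P2 p hpP2)⟩
        · have hqP2 : q ∈ P2 := hmemP2 q hq hqa hqb
          obtain ⟨h, hh, hs⟩ := hH2pairs p hpP2 q hqP2 hpq
          exact ⟨h, Finset.mem_insert_of_mem hh, hs⟩
end

section
/- (Ham-sandwich splitting for two separated sets) Let A, B be finite point sets in the plane separated by a line, with no three points of A ∪ B collinear. For any integers x, y with 1 ≤ x < |A| and 1 ≤ y < |B|, there exists a line ℓ containing no point of A ∪ B such that one open side of ℓ contains exactly x points of A and exactly y points of B. -/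
open Finset
lemma exists_kth {α : Type*} [DecidableEq α] (s : Finset α) (g : α → ℝ)
    (hinj : ∀ p ∈ s, ∀ q ∈ s, p ≠ q → g p ≠ g q) :
    ∀ x : ℕ, 1 ≤ x → x ≤ s.card → ∃ a ∈ s, (s.filter (fun b => g a ≤ g b)).card = x := by
  intro x
  induction x with
  | zero => omega
  | succ n ih =>
    intro _ hcard
    rcases Nat.eq_zero_or_pos n with hn | hn
    · subst hn
      have hne : s.Nonempty := Finset.card_pos.mp (by omega)
      obtain ⟨a, ha, hmax⟩ := s.exists_max_image g hne
      refine ⟨a, ha, ?_⟩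
      have : s.filter (fun b => g a ≤ g b) = {a} := by
        apply Finset.ext
        intro b
        simp only [Finset.mem_filter, Finset.mem_singleton]
        constructor
        · rintro ⟨hb, hab⟩
          by_contra hne'
          exact hinj b hb a ha hne' (le_antisymm (hmax b hb) hab)
        · rintro rfl; exact ⟨ha, le_refl _⟩
      rw [this]; simp
    · obtain ⟨a, ha, hfa⟩ := ih hn (by omega)
      have hsplit := Finset.card_filter_add_card_filter_not (s := s)
        (p := fun b => g a ≤ g b)
      have hcard' : (s.filter (fun b => ¬ g a ≤ g b)).card = s.card - n := by omega
      have hne : (s.filter (fun b => ¬ g a ≤ g b)).Nonempty := by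
        apply Finset.card_pos.mp; omega
      obtain ⟨a', ha', hmax⟩ := Finset.exists_max_image _ g hne
      obtain ⟨ha's, ha'lt⟩ := Finset.mem_filter.mp ha'
      push_neg at ha'lt
      refine ⟨a', ha's, ?_⟩
      have hset : s.filter (fun b => g a' ≤ g b)
          = insert a' (s.filter (fun b => g a ≤ g b)) := by
        apply Finset.ext
        intro b
        simp only [Finset.mem_filter, Finset.mem_insert]
        constructor
        · rintro ⟨hb, hab⟩
          by_cases hba : g a ≤ g b
          · exact Or.inr ⟨hb, hba⟩
          · left
            by_contra hne'
            have hbmem : b ∈ s.filter (fun b => ¬ g a ≤ g b) :=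
              Finset.mem_filter.mpr ⟨hb, hba⟩
            exact hinj b hb a' ha's hne' (le_antisymm (hmax b hbmem) hab)
        · rintro (rfl | ⟨hb, hba⟩)
          · exact ⟨ha's, le_refl _⟩
          · exact ⟨hb, le_trans ha'lt.le hba⟩
      rw [hset, Finset.card_insert_of_notMem, hfa]
      simp only [Finset.mem_filter, not_and, not_le]
      intro _; exact ha'lt


open Classical in
noncomputable def fcount {α : Type*} (A B : Finset α) (κ : α → ℝ) (x : ℕ) : ℕ :=
  (B.filter (fun b => (A.filter (fun a => κ b ≤ κ a)).card < x)).card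

open Classical in
lemma bridge {α : Type*} [DecidableEq α] (A B : Finset α) (κ : α → ℝ) (x : ℕ) (a₀ : α)
    (hAB : Disjoint A B)
    (hgood : ∀ p ∈ A ∪ B, ∀ q ∈ A ∪ B, p ≠ q → κ p ≠ κ q)
    (ha₀ : a₀ ∈ A) (hx : (A.filter (fun a => κ a₀ ≤ κ a)).card = x) :
    fcount A B κ x = (B.filter (fun b => κ a₀ ≤ κ b)).card := by
  classical
  unfold fcount
  congr 1
  apply Finset.filter_congr
  intro b hb
  have hbA : b ∉ A := fun h => (Finset.disjoint_left.mp hAB h hb).elim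
  have hba : b ≠ a₀ := fun h => hbA (h ▸ ha₀)
  have hmemb : b ∈ A ∪ B := Finset.mem_union_right _ hb
  have hmema : a₀ ∈ A ∪ B := Finset.mem_union_left _ ha₀
  have hne : κ b ≠ κ a₀ := hgood b hmemb a₀ hmema hba
  constructor
  · intro hlt
    by_contra hge
    push_neg at hge
    have hsub : A.filter (fun a => κ a₀ ≤ κ a) ⊆ A.filter (fun a => κ b ≤ κ a) := by
      intro a ha
      obtain ⟨haA, h1⟩ := Finset.mem_filter.mp ha
      exact Finset.mem_filter.mpr ⟨haA, le_trans hge.le h1⟩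
    have := Finset.card_le_card hsub
    omega
  · intro hab
    have hab' : κ a₀ < κ b := lt_of_le_of_ne hab (Ne.symm hne)
    have hsub : A.filter (fun a => κ b ≤ κ a) ⊆ (A.filter (fun a => κ a₀ ≤ κ a)).erase a₀ := by
      intro a ha
      obtain ⟨haA, hba'⟩ := Finset.mem_filter.mp ha
      have h1 : κ a₀ < κ a := lt_of_lt_of_le hab' hba'
      refine Finset.mem_erase.mpr ⟨?_, Finset.mem_filter.mpr ⟨haA, h1.le⟩⟩
      intro h; rw [h] at h1; exact lt_irrefl _ h1
    have h2 := Finset.card_le_card hsub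
    have h3 : a₀ ∈ A.filter (fun a => κ a₀ ≤ κ a) := Finset.mem_filter.mpr ⟨ha₀, le_refl _⟩
    have h4 := Finset.card_erase_of_mem h3
    have h5 : 0 < (A.filter (fun a => κ a₀ ≤ κ a)).card := Finset.card_pos.mpr ⟨a₀, h3⟩
    omega

open Classical in
lemma jump {α : Type*} [DecidableEq α] (A B : Finset α) (κ₁ κ₂ κs : α → ℝ) (x : ℕ)
    (hAB : Disjoint A B) (hx1 : 1 ≤ x) (hxA : x ≤ A.card)
    (hgood1 : ∀ p ∈ A ∪ B, ∀ q ∈ A ∪ B, p ≠ q → κ₁ p ≠ κ₁ q)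
    (hgood2 : ∀ p ∈ A ∪ B, ∀ q ∈ A ∪ B, p ≠ q → κ₂ p ≠ κ₂ q)
    (hflip : ∀ p ∈ A ∪ B, ∀ q ∈ A ∪ B, κ₁ p < κ₁ q → κ₂ q < κ₂ p → κs p = κs q)
    (htie : ∀ p ∈ A ∪ B, ∀ q ∈ A ∪ B, ∀ r ∈ A ∪ B, p ≠ q → p ≠ r → q ≠ r →
      ¬(κs p = κs q ∧ κs p = κs r)) :
    fcount A B κ₁ x ≤ fcount A B κ₂ x + 1 := by
  classical
  have hsubA : ∀ a, a ∈ A → a ∈ A ∪ B := fun a ha => Finset.mem_union_left _ ha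
  have hinj1 : ∀ p ∈ A, ∀ q ∈ A, p ≠ q → κ₁ p ≠ κ₁ q :=
    fun p hp q hq => hgood1 p (hsubA p hp) q (hsubA q hq)
  have hinj2 : ∀ p ∈ A, ∀ q ∈ A, p ≠ q → κ₂ p ≠ κ₂ q :=
    fun p hp q hq => hgood2 p (hsubA p hp) q (hsubA q hq)
  obtain ⟨a₁, ha₁A, ha₁⟩ := exists_kth A κ₁ hinj1 x hx1 hxA
  obtain ⟨a₂, ha₂A, ha₂⟩ := exists_kth A κ₂ hinj2 x hx1 hxA
  set R₁ : α → ℕ := fun a => ((A ∪ B).filter (fun p => κ₁ a ≤ κ₁ p)).card with hR₁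
  set R₂ : α → ℕ := fun a => ((A ∪ B).filter (fun p => κ₂ a ≤ κ₂ p)).card with hR₂
  -- N = x + fcount
  have key : ∀ (κ : α → ℝ) (a₀ : α), a₀ ∈ A →
      (∀ p ∈ A ∪ B, ∀ q ∈ A ∪ B, p ≠ q → κ p ≠ κ q) →
      (A.filter (fun a => κ a₀ ≤ κ a)).card = x →
      ((A ∪ B).filter (fun p => κ a₀ ≤ κ p)).card = x + fcount A B κ x := by
    intro κ a₀ ha₀ hgood hcard
    rw [Finset.filter_union, Finset.card_union_of_disjoint
      (Finset.disjoint_filter_filter hAB), hcard,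
      bridge A B κ x a₀ hAB hgood ha₀ hcard]
  have keyN₁ := key κ₁ a₁ ha₁A hgood1 ha₁
  have keyN₂ := key κ₂ a₂ ha₂A hgood2 ha₂
  -- (a) R₁ a ≤ R₂ a + 1
  have hstep : ∀ a ∈ A ∪ B, R₁ a ≤ R₂ a + 1 := by
    intro a haE
    have hT : ((A ∪ B).filter (fun g => g ≠ a ∧ κs g = κs a)).card ≤ 1 := by
      apply Finset.card_le_one.mpr
      intro g hg g' hg'
      obtain ⟨hgE, hga, hgs⟩ := Finset.mem_filter.mp hg
      obtain ⟨hg'E, hg'a, hg's⟩ := Finset.mem_filter.mp hg'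
      by_contra hne
      exact htie a haE g hgE g' hg'E (Ne.symm hga) (Ne.symm hg'a) hne
        ⟨hgs.symm, hg's.symm⟩
    have hsub : (A ∪ B).filter (fun p => κ₁ a ≤ κ₁ p) ⊆
        (A ∪ B).filter (fun p => κ₂ a ≤ κ₂ p) ∪ (A ∪ B).filter (fun g => g ≠ a ∧ κs g = κs a) := by
      intro f hf
      obtain ⟨hfE, hf1⟩ := Finset.mem_filter.mp hf
      by_cases h2 : κ₂ a ≤ κ₂ f
      · exact Finset.mem_union_left _ (Finset.mem_filter.mpr ⟨hfE, h2⟩)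
      · push_neg at h2
        have hfa : f ≠ a := by rintro rfl; exact lt_irrefl _ h2
        have hf1' : κ₁ a < κ₁ f := lt_of_le_of_ne hf1 (Ne.symm (hgood1 f hfE a haE hfa))
        have := hflip a haE f hfE hf1' h2
        exact Finset.mem_union_right _ (Finset.mem_filter.mpr ⟨hfE, hfa, this.symm⟩)
    calc R₁ a ≤ ((A ∪ B).filter (fun p => κ₂ a ≤ κ₂ p) ∪
          (A ∪ B).filter (fun g => g ≠ a ∧ κs g = κs a)).card := Finset.card_le_card hsub
      _ ≤ R₂ a + ((A ∪ B).filter (fun g => g ≠ a ∧ κs g = κs a)).card := Finset.card_union_le _ _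
      _ ≤ R₂ a + 1 := by omega
  -- (b) x ≤ #(A.filter fun a => R₂ a ≤ R₂ a₂)
  have hb : x ≤ (A.filter (fun a => R₂ a ≤ R₂ a₂)).card := by
    rw [← ha₂]
    apply Finset.card_le_card
    intro a ha
    obtain ⟨haA, h2⟩ := Finset.mem_filter.mp ha
    refine Finset.mem_filter.mpr ⟨haA, Finset.card_le_card ?_⟩
    intro p hp
    obtain ⟨hpE, hp2⟩ := Finset.mem_filter.mp hp
    exact Finset.mem_filter.mpr ⟨hpE, le_trans h2 hp2⟩
  -- (c)
  have hc : A.filter (fun a => R₂ a ≤ R₂ a₂) ⊆ A.filter (fun a => R₁ a ≤ R₂ a₂ + 1) := by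
    intro a ha
    obtain ⟨haA, h2⟩ := Finset.mem_filter.mp ha
    exact Finset.mem_filter.mpr ⟨haA, le_trans (hstep a (hsubA a haA)) (by omega)⟩
  -- (d) conclude R₁ a₁ ≤ R₂ a₂ + 1
  have hN : R₁ a₁ ≤ R₂ a₂ + 1 := by
    by_contra hNlt
    push_neg at hNlt
    have hd : A.filter (fun a => R₁ a ≤ R₂ a₂ + 1) ⊆
        (A.filter (fun a => κ₁ a₁ ≤ κ₁ a)).erase a₁ := by
      intro a ha
      obtain ⟨haA, h1⟩ := Finset.mem_filter.mp ha
      have hlt : R₁ a < R₁ a₁ := by omega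
      have hgt : κ₁ a₁ < κ₁ a := by
        by_contra hle
        push_neg at hle
        have : R₁ a₁ ≤ R₁ a := by
          apply Finset.card_le_card
          intro p hp
          obtain ⟨hpE, hp1⟩ := Finset.mem_filter.mp hp
          exact Finset.mem_filter.mpr ⟨hpE, le_trans hle hp1⟩
        omega
      refine Finset.mem_erase.mpr ⟨?_, Finset.mem_filter.mpr ⟨haA, hgt.le⟩⟩
      rintro rfl; exact lt_irrefl _ hgt
    have h1 := Finset.card_le_card (hc.trans hd)
    have h2 : a₁ ∈ A.filter (fun a => κ₁ a₁ ≤ κ₁ a) :=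
      Finset.mem_filter.mpr ⟨ha₁A, le_refl _⟩
    have h3 := Finset.card_erase_of_mem h2
    have h4 : 0 < (A.filter (fun a => κ₁ a₁ ≤ κ₁ a)).card := Finset.card_pos.mpr ⟨a₁, h2⟩
    omega
  have e1 : R₁ a₁ = x + fcount A B κ₁ x := keyN₁
  have e2 : R₂ a₂ = x + fcount A B κ₂ x := keyN₂
  omega


noncomputable def kap {α : Type*} (lam mu : α → ℝ) (u : ℝ) (p : α) : ℝ := u * lam p - mu p

noncomputable def badSet {α : Type*} [DecidableEq α] (E : Finset α) (lam mu : α → ℝ) : Finset ℝ :=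
  ((E ×ˢ E).filter (fun pq => lam pq.1 ≠ lam pq.2)).image
    (fun pq => (mu pq.1 - mu pq.2) / (lam pq.1 - lam pq.2))

lemma good_of_not_bad {α : Type*} [DecidableEq α] (E : Finset α) (lam mu : α → ℝ) (u : ℝ)
    (hu : u ∉ badSet E lam mu)
    (hinj : ∀ p ∈ E, ∀ q ∈ E, p ≠ q → ¬(lam p = lam q ∧ mu p = mu q)) :
    ∀ p ∈ E, ∀ q ∈ E, p ≠ q → kap lam mu u p ≠ kap lam mu u q := by
  intro p hp q hq hpq heq
  unfold kap at heq
  by_cases hlam : lam p = lam q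
  · exact hinj p hp q hq hpq ⟨hlam, by rw [hlam] at heq; linarith⟩
  · apply hu
    refine Finset.mem_image.mpr ⟨(p, q), ?_, ?_⟩
    · exact Finset.mem_filter.mpr ⟨Finset.mem_product.mpr ⟨hp, hq⟩, hlam⟩
    · have h : lam p - lam q ≠ 0 := sub_ne_zero.mpr hlam
      field_simp
      linarith [heq]
    
lemma flip_tied {α : Type*} [DecidableEq α] (E : Finset α) (lam mu : α → ℝ)
    (u₁ u₂ s : ℝ) (h12 : u₁ < u₂)
    (hsub : ∀ z ∈ badSet E lam mu, z ∈ Set.Ioo u₁ u₂ → z = s) :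
    ∀ p ∈ E, ∀ q ∈ E, kap lam mu u₁ p < kap lam mu u₁ q →
      kap lam mu u₂ q < kap lam mu u₂ p → kap lam mu s p = kap lam mu s q := by
  intro p hp q hq h1 h2
  unfold kap at *
  set dl := lam q - lam p with hdl
  set dm := mu q - mu p with hdm
  have h1' : 0 < u₁ * dl - dm := by simp only [hdl, hdm]; linarith
  have h2' : u₂ * dl - dm < 0 := by simp only [hdl, hdm]; linarith
  have hdl0 : dl ≠ 0 := by
    intro h; rw [h] at h1' h2'; simp at h1' h2'; linarith
  set u₀ := dm / dl with hu₀
  have hu₀eq : u₀ * dl = dm := div_mul_cancel₀ _ hdl0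
  have hdlneg : dl < 0 := by
    rcases lt_trichotomy dl 0 with h | h | h
    · exact h
    · exact absurd h hdl0
    · nlinarith
  have hio : u₀ ∈ Set.Ioo u₁ u₂ := by
    constructor
    · nlinarith
    · nlinarith
  have hbad : u₀ ∈ badSet E lam mu := by
    refine Finset.mem_image.mpr ⟨(q, p), ?_, rfl⟩
    refine Finset.mem_filter.mpr ⟨Finset.mem_product.mpr ⟨hq, hp⟩, ?_⟩
    intro h; exact hdl0 (by rw [hdl]; linarith [h])
  have heqs := hsub u₀ hbad hio
  rw [← heqs]
  simp only [hdl, hdm] at hu₀eq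
  linear_combination -hu₀eq

open Classical in
lemma ivt (Bad : Finset ℝ) (f : ℝ → ℕ) (y : ℕ)
    (H : ∀ u₁ u₂ : ℝ, u₁ ∉ Bad → u₂ ∉ Bad → u₁ < u₂ →
      (Bad.filter (fun z => z ∈ Set.Ioo u₁ u₂)).card ≤ 1 → f u₁ ≤ f u₂ + 1) :
    ∀ n : ℕ, ∀ v₁ v₂ : ℝ, v₁ ∉ Bad → v₂ ∉ Bad → v₁ < v₂ →
      (Bad.filter (fun z => z ∈ Set.Ioo v₁ v₂)).card = n →
      y ≤ f v₁ → f v₂ ≤ y → ∃ u, u ∉ Bad ∧ f u = y := by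
  have base : ∀ v₁ v₂ : ℝ, v₁ ∉ Bad → v₂ ∉ Bad → v₁ < v₂ →
      (Bad.filter (fun z => z ∈ Set.Ioo v₁ v₂)).card ≤ 1 →
      y ≤ f v₁ → f v₂ ≤ y → ∃ u, u ∉ Bad ∧ f u = y := by
    intro v₁ v₂ h1 h2 h12 hc hy1 hy2
    have := H v₁ v₂ h1 h2 h12 hc
    by_cases hcase : f v₁ = y
    · exact ⟨v₁, h1, hcase⟩
    · have : f v₂ = y := by omega
      exact ⟨v₂, h2, this⟩
  intro n
  induction n with
  | zero =>
    intro v₁ v₂ h1 h2 h12 hc hy1 hy2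
    exact base v₁ v₂ h1 h2 h12 (by omega) hy1 hy2
  | succ n ih =>
    intro v₁ v₂ h1 h2 h12 hc hy1 hy2
    rcases Nat.eq_zero_or_pos n with hn | hn
    · exact base v₁ v₂ h1 h2 h12 (by omega) hy1 hy2
    · set D := Bad.filter (fun z => z ∈ Set.Ioo v₁ v₂) with hD
      have hDne : D.Nonempty := Finset.card_pos.mp (by omega)
      set s1 := D.min' hDne with hs1
      have hs1D : s1 ∈ D := D.min'_mem hDne
      set D' := D.erase s1 with hD'
      have hD'card : D'.card = n := by
        rw [hD', Finset.card_erase_of_mem hs1D]; omega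
      have hD'ne : D'.Nonempty := Finset.card_pos.mp (by omega)
      set s2 := D'.min' hD'ne with hs2
      have hs2D' : s2 ∈ D' := D'.min'_mem hD'ne
      obtain ⟨hs2ne, hs2D⟩ := Finset.mem_erase.mp hs2D'
      have hs12 : s1 < s2 :=
        lt_of_le_of_ne (D.min'_le _ hs2D) (Ne.symm hs2ne)
      set w := (s1 + s2)/2 with hw
      have hws : s1 < w ∧ w < s2 := by constructor <;> (rw [hw]; linarith)
      have hs1I : s1 ∈ Set.Ioo v₁ v₂ := (Finset.mem_filter.mp hs1D).2
      have hs2I : s2 ∈ Set.Ioo v₁ v₂ := (Finset.mem_filter.mp hs2D).2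
      have hwv1 : v₁ < w := lt_trans hs1I.1 hws.1
      have hwv2 : w < v₂ := lt_trans hws.2 hs2I.2
      have hwBad : w ∉ Bad := by
        intro hwB
        have hwD : w ∈ D := Finset.mem_filter.mpr ⟨hwB, hwv1, hwv2⟩
        have hwD' : w ∈ D' := Finset.mem_erase.mpr ⟨ne_of_gt hws.1, hwD⟩
        have := D'.min'_le _ hwD'
        linarith [hws.2]
      have hcard1 : (Bad.filter (fun z => z ∈ Set.Ioo v₁ w)).card ≤ 1 := by
        have hsub : Bad.filter (fun z => z ∈ Set.Ioo v₁ w) ⊆ {s1} := by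
          intro z hz
          obtain ⟨hzB, hz1, hz2⟩ := Finset.mem_filter.mp hz
          have hzD : z ∈ D := Finset.mem_filter.mpr ⟨hzB, hz1, lt_trans hz2 hwv2⟩
          rw [Finset.mem_singleton]
          by_contra hne
          have hzD' : z ∈ D' := Finset.mem_erase.mpr ⟨hne, hzD⟩
          have := D'.min'_le _ hzD'
          linarith [hws.2]
        calc (Bad.filter (fun z => z ∈ Set.Ioo v₁ w)).card ≤ ({s1} : Finset ℝ).card :=
              Finset.card_le_card hsub
          _ = 1 := Finset.card_singleton _
      have h11 := H v₁ w h1 hwBad hwv1 hcard1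
      by_cases hyw : y ≤ f w
      · have hcardn : (Bad.filter (fun z => z ∈ Set.Ioo w v₂)).card = n := by
          have : Bad.filter (fun z => z ∈ Set.Ioo w v₂) = D' := by
            apply Finset.ext
            intro z
            constructor
            · intro hz
              obtain ⟨hzB, hz1, hz2⟩ := Finset.mem_filter.mp hz
              have hzD : z ∈ D := Finset.mem_filter.mpr ⟨hzB, lt_trans hwv1 hz1, hz2⟩
              exact Finset.mem_erase.mpr ⟨by intro h; rw [h] at hz1; linarith [hws.1], hzD⟩
            · intro hz
              obtain ⟨hzne, hzD⟩ := Finset.mem_erase.mp hz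
              obtain ⟨hzB, hz1, hz2⟩ := Finset.mem_filter.mp hzD
              refine Finset.mem_filter.mpr ⟨hzB, ?_, hz2⟩
              have hle : s2 ≤ z := D'.min'_le _ (Finset.mem_erase.mpr ⟨hzne, hzD⟩)
              linarith [hws.2]
          rw [this, hD'card]
        exact ih w v₂ hwBad h2 hwv2 hcardn hyw hy2
      · push_neg at hyw
        have : f v₁ = y := by omega
        exact ⟨v₁, h1, this⟩


open Classical in
lemma fcount_top {α : Type*} (A B : Finset α) (κ : α → ℝ) (x : ℕ) (hxA : x ≤ A.card)
    (h : ∀ a ∈ A, ∀ b ∈ B, κ b < κ a) : fcount A B κ x = 0 := by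
  unfold fcount
  rw [Finset.card_eq_zero, Finset.filter_eq_empty_iff]
  intro b hb
  have hA : A.filter (fun a => κ b ≤ κ a) = A :=
    Finset.filter_true_of_mem (fun a ha => (h a ha b hb).le)
  rw [hA]
  omega

open Classical in
lemma fcount_bot {α : Type*} (A B : Finset α) (κ : α → ℝ) (x : ℕ) (hx1 : 1 ≤ x)
    (h : ∀ a ∈ A, ∀ b ∈ B, κ a < κ b) : fcount A B κ x = B.card := by
  unfold fcount
  rw [Finset.filter_true_of_mem]
  intro b hb
  have hA : A.filter (fun a => κ b ≤ κ a) = ∅ :=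
    Finset.filter_false_of_mem (fun a ha => not_le.mpr (h a ha b hb))
  rw [hA]
  simp; omega

open Classical in
lemma main_abstract {α : Type*} [DecidableEq α] (A B : Finset α) (lam mu : α → ℝ)
    (hA : ∀ a ∈ A, 0 < lam a) (hB : ∀ b ∈ B, lam b < 0)
    (hinj : ∀ p ∈ A ∪ B, ∀ q ∈ A ∪ B, p ≠ q → ¬(lam p = lam q ∧ mu p = mu q))
    (htie : ∀ u : ℝ, ∀ p ∈ A ∪ B, ∀ q ∈ A ∪ B, ∀ r ∈ A ∪ B, p ≠ q → p ≠ r → q ≠ r →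
      ¬(kap lam mu u p = kap lam mu u q ∧ kap lam mu u p = kap lam mu u r))
    (x y : ℕ) (hx1 : 1 ≤ x) (hxA : x ≤ A.card) (hyB : y ≤ B.card) :
    ∃ u c : ℝ, (∀ p ∈ A ∪ B, kap lam mu u p ≠ c) ∧
      (A.filter (fun p => c < kap lam mu u p)).card = x ∧
      (B.filter (fun p => c < kap lam mu u p)).card = y := by
  classical
  have hAB : Disjoint A B := by
    rw [Finset.disjoint_left]
    intro a haA haB
    exact absurd (hA a haA) (not_lt.mpr (hB a haB).le)
  set Bad := badSet (A ∪ B) lam mu with hBad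
  set Q := ((A ×ˢ B).image (fun ab => (mu ab.1 - mu ab.2) / (lam ab.1 - lam ab.2))) with hQ
  obtain ⟨M, hM⟩ := (Bad ∪ Q).exists_le
  obtain ⟨m, hm⟩ : ∃ m : ℝ, ∀ z ∈ Bad ∪ Q, m ≤ z := by
    obtain ⟨M', hM'⟩ := ((Bad ∪ Q).image (fun z : ℝ => -z)).exists_le
    exact ⟨-M', fun z hz => by
      have := hM' (-z) (Finset.mem_image.mpr ⟨z, hz, rfl⟩); linarith⟩
  set v₁ : ℝ := min m M - 1 with hv₁
  set v₂ : ℝ := max m M + 1 with hv₂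
  have hv₁lt : ∀ z ∈ Bad ∪ Q, v₁ < z := by
    intro z hz
    have := hm z hz
    have h2 : min m M ≤ m := min_le_left _ _
    rw [hv₁]; linarith
  have hv₂gt : ∀ z ∈ Bad ∪ Q, z < v₂ := by
    intro z hz
    have := hM z hz
    have h2 : M ≤ max m M := le_max_right _ _
    rw [hv₂]; linarith
  have hv₁Bad : v₁ ∉ Bad := fun h => lt_irrefl _ (hv₁lt v₁ (Finset.mem_union_left _ h))
  have hv₂Bad : v₂ ∉ Bad := fun h => lt_irrefl _ (hv₂gt v₂ (Finset.mem_union_left _ h))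
  have hv₁₂ : v₁ < v₂ := by
    rw [hv₁, hv₂]
    have := min_le_max (a := m) (b := M)
    linarith
  set f : ℝ → ℕ := fun u => fcount A B (kap lam mu u) x with hf
  -- endpoint values
  have hfv₁ : f v₁ = B.card := by
    apply fcount_bot A B _ x hx1
    intro a ha b hb
    have hq : (mu a - mu b) / (lam a - lam b) ∈ Bad ∪ Q := by
      apply Finset.mem_union_right
      exact Finset.mem_image.mpr ⟨(a, b), Finset.mem_product.mpr ⟨ha, hb⟩, rfl⟩
    have hlt := hv₁lt _ hq
    have hpos : 0 < lam a - lam b := by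
      have := hA a ha; have := hB b hb; linarith
    have := (lt_div_iff₀ hpos).mp hlt
    unfold kap
    linarith
  have hfv₂ : f v₂ = 0 := by
    apply fcount_top A B _ x hxA
    intro a ha b hb
    have hq : (mu a - mu b) / (lam a - lam b) ∈ Bad ∪ Q := by
      apply Finset.mem_union_right
      exact Finset.mem_image.mpr ⟨(a, b), Finset.mem_product.mpr ⟨ha, hb⟩, rfl⟩
    have hlt := hv₂gt _ hq
    have hpos : 0 < lam a - lam b := by
      have := hA a ha; have := hB b hb; linarith
    have := (div_lt_iff₀ hpos).mp hlt
    unfold kap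
    linarith
  -- the step hypothesis
  have H : ∀ u₁ u₂ : ℝ, u₁ ∉ Bad → u₂ ∉ Bad → u₁ < u₂ →
      (Bad.filter (fun z => z ∈ Set.Ioo u₁ u₂)).card ≤ 1 → f u₁ ≤ f u₂ + 1 := by
    intro u₁ u₂ hu₁ hu₂ h12 hcard
    obtain ⟨s, hs⟩ := Finset.card_le_one_iff_subset_singleton.mp hcard
    have hsub : ∀ z ∈ Bad, z ∈ Set.Ioo u₁ u₂ → z = s := by
      intro z hz hzI
      have := hs (Finset.mem_filter.mpr ⟨hz, hzI⟩)
      exact Finset.mem_singleton.mp this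
    have hgood1 := good_of_not_bad (A ∪ B) lam mu u₁ hu₁ hinj
    have hgood2 := good_of_not_bad (A ∪ B) lam mu u₂ hu₂ hinj
    have hflip := flip_tied (A ∪ B) lam mu u₁ u₂ s h12 hsub
    exact jump A B (kap lam mu u₁) (kap lam mu u₂) (kap lam mu s) x hAB hx1 hxA
      hgood1 hgood2 hflip (htie s)
  obtain ⟨u, huBad, hfu⟩ := ivt Bad f y H
    (Bad.filter (fun z => z ∈ Set.Ioo v₁ v₂)).card v₁ v₂ hv₁Bad hv₂Bad hv₁₂ rfl
    (by omega) (by omega)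
  -- construct the cut value c
  have hgood := good_of_not_bad (A ∪ B) lam mu u huBad hinj
  have hinjA : ∀ p ∈ A, ∀ q ∈ A, p ≠ q → kap lam mu u p ≠ kap lam mu u q :=
    fun p hp q hq => hgood p (Finset.mem_union_left _ hp) q (Finset.mem_union_left _ hq)
  obtain ⟨a₀, ha₀A, ha₀⟩ := exists_kth A (kap lam mu u) hinjA x hx1 hxA
  set τ := kap lam mu u a₀ with hτ
  set S := ((A ∪ B).image (kap lam mu u)).filter (fun z => z < τ) with hS
  set c : ℝ := if hSne : S.Nonempty then (S.max' hSne + τ) / 2 else τ - 1 with hc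
  have hcτ : c < τ := by
    rw [hc]
    split_ifs with hSne
    · have := S.max'_mem hSne
      have hlt : S.max' hSne < τ := (Finset.mem_filter.mp this).2
      linarith
    · linarith
  have hbelow : ∀ p ∈ A ∪ B, kap lam mu u p < τ → kap lam mu u p < c := by
    intro p hp hlt
    have hmem : kap lam mu u p ∈ S :=
      Finset.mem_filter.mpr ⟨Finset.mem_image.mpr ⟨p, hp, rfl⟩, hlt⟩
    have hSne : S.Nonempty := ⟨_, hmem⟩
    rw [hc]
    simp only [dif_pos hSne]
    have hle := S.le_max' _ hmem
    have hmax : S.max' hSne < τ := (Finset.mem_filter.mp (S.max'_mem hSne)).2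
    linarith
  have hiff : ∀ p ∈ A ∪ B, (c < kap lam mu u p ↔ τ ≤ kap lam mu u p) := by
    intro p hp
    constructor
    · intro h
      by_contra hle
      push_neg at hle
      exact absurd h (not_lt.mpr (hbelow p hp hle).le)
    · intro h; linarith
  have hne : ∀ p ∈ A ∪ B, kap lam mu u p ≠ c := by
    intro p hp
    rcases le_or_gt τ (kap lam mu u p) with h | h
    · intro heq; rw [heq] at h; linarith
    · exact ne_of_gt (hbelow p hp h) |>.symm
  refine ⟨u, c, hne, ?_, ?_⟩
  · have : A.filter (fun p => c < kap lam mu u p) = A.filter (fun p => τ ≤ kap lam mu u p) := by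
      apply Finset.filter_congr
      intro p hp
      exact hiff p (Finset.mem_union_left _ hp)
    rw [this]
    exact ha₀
  · have h1 : B.filter (fun p => c < kap lam mu u p) = B.filter (fun p => τ ≤ kap lam mu u p) := by
      apply Finset.filter_congr
      intro p hp
      exact hiff p (Finset.mem_union_right _ hp)
    rw [h1]
    have h2 := bridge A B (kap lam mu u) x a₀ hAB hgood ha₀A ha₀
    simp only [hf] at hfu
    rw [← h2, hfu]

open Classical in
/-- Ham-sandwich splitting for two line-separated sets: if `A`, `B` are separated by a
line and no three points of `A ∪ B` are collinear, then for any `1 ≤ x < |A|`,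
`1 ≤ y < |B|` there is a line avoiding `A ∪ B` having exactly `x` points of `A` and
exactly `y` points of `B` on one open side. -/
theorem stmt_5 (A B : Finset (ℝ × ℝ))
    (hsep : ∃ ℓ : ℝ × ℝ × ℝ, IsLine ℓ ∧ (∀ p ∈ A, 0 < lineVal ℓ p) ∧ ∀ q ∈ B, lineVal ℓ q < 0)
    (hgen : ∀ p ∈ A ∪ B, ∀ q ∈ A ∪ B, ∀ s ∈ A ∪ B, p ≠ q → p ≠ s → q ≠ s →
      ¬ Collinear ℝ ({p, q, s} : Set (ℝ × ℝ)))
    (x y : ℕ) (hx1 : 1 ≤ x) (hxA : x < A.card) (hy1 : 1 ≤ y) (hyB : y < B.card) :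
    ∃ ℓ : ℝ × ℝ × ℝ, IsLine ℓ ∧ (∀ p ∈ A ∪ B, lineVal ℓ p ≠ 0) ∧
      (A.filter fun p => 0 < lineVal ℓ p).card = x ∧
      (B.filter fun p => 0 < lineVal ℓ p).card = y := by
  classical
  obtain ⟨ℓ₀, hline, hA', hB'⟩ := hsep
  set a : ℝ := ℓ₀.1 with ha
  set b : ℝ := ℓ₀.2.1 with hb
  set e : ℝ := ℓ₀.2.2 with he
  have hab : 0 < a * a + b * b := by
    rcases hline with h | h
    · have h1 : 0 < a * a := mul_self_pos.mpr h
      nlinarith [mul_self_nonneg b]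
    · have h1 : 0 < b * b := mul_self_pos.mpr h
      nlinarith [mul_self_nonneg a]
  set lam : ℝ × ℝ → ℝ := fun p => a * p.1 + b * p.2 + e with hlam
  set mu : ℝ × ℝ → ℝ := fun p => -b * p.1 + a * p.2 with hmu
  have hlamval : ∀ p, lam p = lineVal ℓ₀ p := by intro p; rw [hlam]; rfl
  have hApos : ∀ p ∈ A, 0 < lam p := by intro p hp; rw [hlamval]; exact hA' p hp
  have hBneg : ∀ p ∈ B, lam p < 0 := by intro p hp; rw [hlamval]; exact hB' p hp
  have hinj : ∀ p ∈ A ∪ B, ∀ q ∈ A ∪ B, p ≠ q → ¬(lam p = lam q ∧ mu p = mu q) := by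
    rintro p _ q _ hpq ⟨h1, h2⟩
    rw [hlam] at h1
    rw [hmu] at h2
    simp only at h1 h2
    apply hpq
    have e1 : a * (p.1 - q.1) + b * (p.2 - q.2) = 0 := by linarith
    have e2 : -b * (p.1 - q.1) + a * (p.2 - q.2) = 0 := by linarith
    have d1 : p.1 - q.1 = 0 := by
      have key : (a * a + b * b) * (p.1 - q.1) = a * (a * (p.1 - q.1) + b * (p.2 - q.2))
          - b * (-b * (p.1 - q.1) + a * (p.2 - q.2)) := by ring
      rw [e1, e2] at key
      simp at key
      rcases key with h | h
      · linarith
      · exact h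
    have d2 : p.2 - q.2 = 0 := by
      have key : (a * a + b * b) * (p.2 - q.2) = b * (a * (p.1 - q.1) + b * (p.2 - q.2))
          + a * (-b * (p.1 - q.1) + a * (p.2 - q.2)) := by ring
      rw [e1, e2] at key
      simp at key
      rcases key with h | h
      · linarith
      · exact h
    exact Prod.ext (by linarith) (by linarith)
  have htie : ∀ u : ℝ, ∀ p ∈ A ∪ B, ∀ q ∈ A ∪ B, ∀ r ∈ A ∪ B, p ≠ q → p ≠ r → q ≠ r →
      ¬(kap lam mu u p = kap lam mu u q ∧ kap lam mu u p = kap lam mu u r) := by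
    rintro u p hp q hq r hr hpq hpr hqr ⟨h1, h2⟩
    apply hgen p hp q hq r hr hpq hpr hqr
    set α' : ℝ := u * a + b with hα'
    set β' : ℝ := u * b - a with hβ'
    have hD : 0 < α' * α' + β' * β' := by
      rcases eq_or_ne α' 0 with hα0 | hα0
      · have hβ0 : β' ≠ 0 := by
          intro hβ0
          have : a * a + b * b = b * α' - a * β' := by rw [hα', hβ']; ring
          rw [hα0, hβ0] at this
          simp at this
          linarith
        have h1 : 0 < β' * β' := mul_self_pos.mpr hβ0
        nlinarith [mul_self_nonneg α']
      · have h1 : 0 < α' * α' := mul_self_pos.mpr hα0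
        nlinarith [mul_self_nonneg β']
    have hDne : α' * α' + β' * β' ≠ 0 := ne_of_gt hD
    have hkq : α' * (q.1 - p.1) + β' * (q.2 - p.2) = 0 := by
      have : kap lam mu u p - kap lam mu u q = 0 := by rw [h1]; ring
      unfold kap at this
      rw [hlam, hmu] at this
      simp only at this
      rw [hα', hβ']
      linear_combination -this
    have hkr : α' * (r.1 - p.1) + β' * (r.2 - p.2) = 0 := by
      have : kap lam mu u p - kap lam mu u r = 0 := by rw [h2]; ring
      unfold kap at this
      rw [hlam, hmu] at this
      simp only at this
      rw [hα', hβ']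
      linear_combination -this
    rw [collinear_iff_of_mem (Set.mem_insert p {q, r})]
    refine ⟨(β', -α'), ?_⟩
    intro w hw
    have hgen' : ∀ z : ℝ × ℝ, α' * (z.1 - p.1) + β' * (z.2 - p.2) = 0 →
        ∃ t : ℝ, z = t • ((β', -α') : ℝ × ℝ) +ᵥ p := by
      intro z hz
      refine ⟨(β' * (z.1 - p.1) - α' * (z.2 - p.2)) / (α' * α' + β' * β'), ?_⟩
      have hsmul : ((β' * (z.1 - p.1) - α' * (z.2 - p.2)) / (α' * α' + β' * β')) •
          ((β', -α') : ℝ × ℝ) +ᵥ p =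
          (((β' * (z.1 - p.1) - α' * (z.2 - p.2)) / (α' * α' + β' * β')) * β' + p.1,
           ((β' * (z.1 - p.1) - α' * (z.2 - p.2)) / (α' * α' + β' * β')) * (-α') + p.2) := by
        rfl
      rw [hsmul]
      have hc1 : z.1 = (β' * (z.1 - p.1) - α' * (z.2 - p.2)) / (α' * α' + β' * β') * β' + p.1 := by
        have key : (β' * (z.1 - p.1) - α' * (z.2 - p.2)) * β' = (z.1 - p.1) * (α' * α' + β' * β') := by
          linear_combination (-α') * hz
        rw [div_mul_eq_mul_div, key, mul_div_cancel_right₀ _ hDne]; ring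
      have hc2 : z.2 = (β' * (z.1 - p.1) - α' * (z.2 - p.2)) / (α' * α' + β' * β') * (-α') + p.2 := by
        have key : (β' * (z.1 - p.1) - α' * (z.2 - p.2)) * (-α') = (z.2 - p.2) * (α' * α' + β' * β') := by
          linear_combination (-β') * hz
        rw [div_mul_eq_mul_div, key, mul_div_cancel_right₀ _ hDne]; ring
      exact Prod.ext hc1 hc2
    rcases hw with rfl | rfl | rfl
    · exact ⟨0, by simp⟩
    · exact hgen' _ hkq
    · exact hgen' _ hkr
  obtain ⟨u, c, hne, hxcard, hycard⟩ := main_abstract A B lam mu hApos hBneg hinj htie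
    x y hx1 hxA.le hyB.le
  refine ⟨(u * a + b, u * b - a, u * e - c), ?_, ?_, ?_, ?_⟩
  · by_contra hcon
    unfold IsLine at hcon
    push_neg at hcon
    obtain ⟨h1, h2⟩ := hcon
    simp only at h1 h2
    have : a * a + b * b = b * (u * a + b) - a * (u * b - a) := by ring
    rw [h1, h2] at this
    simp at this
    linarith
  · intro p hp
    have hval : lineVal (u * a + b, u * b - a, u * e - c) p = kap lam mu u p - c := by
      unfold lineVal kap
      rw [hlam, hmu]
      simp only
      ring
    rw [hval]
    intro hzero
    exact hne p hp (by linarith)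
  · rw [show (A.filter fun p => 0 < lineVal (u * a + b, u * b - a, u * e - c) p)
        = A.filter (fun p => c < kap lam mu u p) from Finset.filter_congr ?_, hxcard]
    intro p hp
    have hval : lineVal (u * a + b, u * b - a, u * e - c) p = kap lam mu u p - c := by
      unfold lineVal kap; rw [hlam, hmu]; simp only; ring
    rw [hval]
    constructor
    · intro h; linarith
    · intro h; linarith
  · rw [show (B.filter fun p => 0 < lineVal (u * a + b, u * b - a, u * e - c) p)
        = B.filter (fun p => c < kap lam mu u p) from Finset.filter_congr ?_, hycard]
    intro p hp
    have hval : lineVal (u * a + b, u * b - a, u * e - c) p = kap lam mu u p - c := by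
      unfold lineVal kap; rw [hlam, hmu]; simp only; ring
    rw [hval]
    constructor
    · intro h; linarith
    · intro h; linarith
end

section
/- Throw n balls independently and uniformly into N ≥ 3n bins. The expected number of unordered pairs of balls that lie in a common bin of size at least i is O(n·i·(en/(iN))^{i−1}). -/
open Finset in
lemma aux_exp_pow (k : ℕ) : ((k : ℝ) + 1) ^ k ≤ (k : ℝ) ^ k * Real.exp 1 := by
  rcases Nat.eq_zero_or_pos k with h | h
  · subst h; simp [Real.one_le_exp_iff]
  · have hk : (0:ℝ) < k := by positivity
    have h1 : ((k : ℝ) + 1) = (k:ℝ) * (((k:ℝ)+1)/k) := by field_simp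
    rw [h1, mul_pow]
    have h2 : (((k:ℝ)+1)/k) ^ k ≤ Real.exp 1 := by
      have : ((k:ℝ)+1)/k ≤ Real.exp (1/k) := by
        rw [add_div, div_self hk.ne']
        have := Real.add_one_le_exp (1/(k:ℝ))
        linarith
      calc (((k:ℝ)+1)/k) ^ k ≤ (Real.exp (1/k)) ^ k := by
            apply pow_le_pow_left₀ (by positivity) this
        _ = Real.exp 1 := by
            rw [← Real.exp_nat_mul]
            congr 1
            field_simp
    exact mul_le_mul_of_nonneg_left h2 (by positivity)

lemma aux_fact (m : ℕ) : (m : ℝ) ^ m ≤ (m.factorial : ℝ) * Real.exp 1 ^ m := by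
  induction m with
  | zero => simp
  | succ m ih =>
    have h1 : ((m:ℝ)+1) ^ (m+1) = ((m:ℝ)+1) ^ m * ((m:ℝ)+1) := by ring
    push_cast [Nat.factorial_succ, h1]
    calc ((m:ℝ)+1) ^ m * ((m:ℝ)+1) ≤ ((m:ℝ)^m * Real.exp 1) * ((m:ℝ)+1) := by
          apply mul_le_mul_of_nonneg_right (aux_exp_pow m) (by positivity)
      _ ≤ ((m.factorial : ℝ) * Real.exp 1 ^ m * Real.exp 1) * ((m:ℝ)+1) := by
          apply mul_le_mul_of_nonneg_right _ (by positivity)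
          exact mul_le_mul_of_nonneg_right ih (by positivity)
      _ = ((m:ℝ)+1) * (m.factorial : ℝ) * (Real.exp 1 ^ m * Real.exp 1) := by ring
      _ = ((m:ℝ)+1) * (m.factorial : ℝ) * Real.exp 1 ^ (m+1) := by rw [pow_succ]

lemma aux_choose (n m : ℕ) (hm : 1 ≤ m) :
    (n.choose m : ℝ) ≤ (Real.exp 1 * n / m) ^ m := by
  have h1 : (n.choose m : ℝ) ≤ (n:ℝ) ^ m / m.factorial := Nat.choose_le_pow_div m n
  have hm' : (0:ℝ) < m := by exact_mod_cast hm
  have hf : (0:ℝ) < m.factorial := by exact_mod_cast m.factorial_pos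
  refine h1.trans ?_
  rw [div_pow, div_le_div_iff₀ hf (by positivity)]
  calc (n:ℝ)^m * (m:ℝ)^m ≤ (n:ℝ)^m * ((m.factorial:ℝ) * Real.exp 1 ^ m) := by
        apply mul_le_mul_of_nonneg_left (aux_fact m) (by positivity)
    _ = (Real.exp 1 * n) ^ m * m.factorial := by rw [mul_pow]; ring

/-- Number of ordered pairs of distinct balls lying in a common bin containing at
least `i` balls, in the outcome `ω`. -/
def heavyCollOrd (n N i : ℕ) (ω : Fin n → Fin N) : ℕ :=
  (Finset.univ.filter fun bb : Fin n × Fin n => bb.1 ≠ bb.2 ∧ ω bb.1 = ω bb.2 ∧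
    i ≤ (Finset.univ.filter fun b' : Fin n => ω b' = ω bb.1).card).card

open Finset

lemma aux_pointwise (n N i m : ℕ) (hm : 1 ≤ m) (hmi : m ≤ max (i-1) 1)
    (ω : Fin n → Fin N) :
    heavyCollOrd n N i ω ≤ m * ((Finset.univ.filter fun aS : Fin n × Finset (Fin n) =>
      aS.2.card = m ∧ aS.1 ∉ aS.2 ∧ ∀ b ∈ aS.2, ω b = ω aS.1)).card := by
  classical
  set s := (Finset.univ.filter fun bb : Fin n × Fin n => bb.1 ≠ bb.2 ∧ ω bb.1 = ω bb.2 ∧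
    i ≤ (Finset.univ.filter fun b' : Fin n => ω b' = ω bb.1).card) with hs
  set t := (Finset.univ.filter fun aS : Fin n × Finset (Fin n) =>
      aS.2.card = m ∧ aS.1 ∉ aS.2 ∧ ∀ b ∈ aS.2, ω b = ω aS.1) with ht
  have key : ∀ p ∈ s, ∃ S : Finset (Fin n), {p.2} ⊆ S ∧
      S ⊆ (Finset.univ.filter fun b' : Fin n => ω b' = ω p.1).erase p.1 ∧ S.card = m := by
    rintro ⟨a, b⟩ hp
    simp only [hs, mem_filter, mem_univ, true_and] at hp
    obtain ⟨hne, heq, hcard⟩ := hp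
    have hcard' : i ≤ (Finset.univ.filter fun b' : Fin n => ω b' = ω a).card := hcard
    clear hcard
    apply Finset.exists_subsuperset_card_eq
    · intro x hx
      simp only [mem_singleton] at hx
      subst hx
      simp [mem_erase, Ne.symm hne, heq]
    · simpa using hm
    · show m ≤ ((Finset.univ.filter fun b' : Fin n => ω b' = ω a).erase a).card
      rw [Finset.card_erase_of_mem (by simp)]
      have h1 : 1 ≤ (Finset.univ.filter fun b' : Fin n => ω b' = ω a).card - 1 := by
        have hb : b ∈ (Finset.univ.filter fun b' : Fin n => ω b' = ω a).erase a := by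
          simp [mem_erase, Ne.symm hne, heq]
        have := Finset.card_pos.mpr ⟨b, hb⟩
        rw [Finset.card_erase_of_mem (by simp)] at this
        omega
      have h2 : i - 1 ≤ (Finset.univ.filter fun b' : Fin n => ω b' = ω a).card - 1 := by omega
      omega
  choose! f hf1 hf2 hf3 using key
  have := Finset.card_le_mul_card_image_of_maps_to
    (f := fun p : Fin n × Fin n => (p.1, f p)) (s := s) (t := t) ?_ m ?_
  · exact this
  · rintro ⟨a, b⟩ hp
    simp only [ht, mem_filter, mem_univ, true_and]
    refine ⟨hf3 _ hp, ?_, ?_⟩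
    · intro hmem
      exact (Finset.mem_erase.mp (hf2 _ hp hmem)).1 rfl
    · intro c hc
      have := hf2 _ hp hc
      simp only [mem_erase, mem_filter, mem_univ, true_and] at this
      exact this.2
  · rintro ⟨a, S⟩ hAS
    simp only [ht, mem_filter, mem_univ, true_and] at hAS
    calc #{p ∈ s | (p.1, f p) = (a, S)} ≤ S.card := by
          apply Finset.card_le_card_of_injOn (fun p => p.2)
          · rintro ⟨a', b⟩ hp
            simp only [mem_coe, mem_filter, Prod.mk.injEq] at hp
            obtain ⟨hps, ha', hfS⟩ := hp
            have := hf1 _ hps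
            rw [hfS] at this
            simpa using this
          · rintro ⟨a1, b1⟩ hp1 ⟨a2, b2⟩ hp2 hb
            simp only [coe_filter, Set.mem_setOf_eq, Prod.mk.injEq] at hp1 hp2
            simp only at hb
            simp [hb, hp1.2.1, hp2.2.1]
      _ = m := hAS.1
open Finset

lemma aux_count (n N : ℕ) (a : Fin n) (S : Finset (Fin n)) (ha : a ∉ S) :
    ((Finset.univ.filter fun ω : Fin n → Fin N => ∀ b ∈ S, ω b = ω a)).card
      ≤ N ^ (n - S.card) := by
  classical
  have hcompl : a ∈ (Sᶜ : Finset (Fin n)) := Finset.mem_compl.mpr ha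
  have h := Finset.card_le_card_of_injOn
    (f := fun ω : Fin n → Fin N => (fun x : {x // x ∈ (Sᶜ : Finset (Fin n))} => ω x.1))
    (s := (Finset.univ.filter fun ω : Fin n → Fin N => ∀ b ∈ S, ω b = ω a))
    (t := (Finset.univ : Finset ({x // x ∈ (Sᶜ : Finset (Fin n))} → Fin N)))
    (fun _ _ => Finset.mem_univ _) ?_
  · calc _ ≤ _ := h
      _ = N ^ (n - S.card) := by
        rw [Finset.card_univ, Fintype.card_fun, Fintype.card_coe, Finset.card_compl,
          Fintype.card_fin, Fintype.card_fin]
  · intro ω1 h1 ω2 h2 heq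
    simp only [coe_filter, Set.mem_setOf_eq] at h1 h2
    funext x
    by_cases hx : x ∈ S
    · have e1 := congrFun heq ⟨a, hcompl⟩
      simp only at e1
      rw [h1.2 x hx, h2.2 x hx, e1]
    · exact congrFun heq ⟨x, Finset.mem_compl.mpr hx⟩

lemma aux_sum (n N m : ℕ) :
    ∑ ω : Fin n → Fin N, ((Finset.univ.filter fun aS : Fin n × Finset (Fin n) =>
      aS.2.card = m ∧ aS.1 ∉ aS.2 ∧ ∀ b ∈ aS.2, ω b = ω aS.1)).card
      ≤ n * Nat.choose n m * N ^ (n - m) := by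
  classical
  have step1 : ∀ ω : Fin n → Fin N, ((Finset.univ.filter fun aS : Fin n × Finset (Fin n) =>
      aS.2.card = m ∧ aS.1 ∉ aS.2 ∧ ∀ b ∈ aS.2, ω b = ω aS.1)).card
      = ∑ aS : Fin n × Finset (Fin n),
          if aS.2.card = m ∧ aS.1 ∉ aS.2 ∧ ∀ b ∈ aS.2, ω b = ω aS.1 then 1 else 0 := by
    intro ω; rw [Finset.card_filter]
  calc ∑ ω : Fin n → Fin N, ((Finset.univ.filter fun aS : Fin n × Finset (Fin n) =>
          aS.2.card = m ∧ aS.1 ∉ aS.2 ∧ ∀ b ∈ aS.2, ω b = ω aS.1)).card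
      = ∑ aS : Fin n × Finset (Fin n), ∑ ω : Fin n → Fin N,
          if aS.2.card = m ∧ aS.1 ∉ aS.2 ∧ ∀ b ∈ aS.2, ω b = ω aS.1 then 1 else 0 := by
        simp_rw [step1]; rw [Finset.sum_comm]
    _ ≤ ∑ aS : Fin n × Finset (Fin n),
          (if aS.2.card = m ∧ aS.1 ∉ aS.2 then N ^ (n - m) else 0) := by
        apply Finset.sum_le_sum
        rintro ⟨a, S⟩ _
        by_cases hc : S.card = m ∧ a ∉ S
        · rw [if_pos hc]
          calc (∑ ω : Fin n → Fin N, if (S.card = m ∧ a ∉ S ∧ ∀ b ∈ S, ω b = ω a) then 1 else 0)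
              ≤ ∑ ω : Fin n → Fin N, if (∀ b ∈ S, ω b = ω a) then 1 else 0 := by
                apply Finset.sum_le_sum
                intro ω _
                split <;> split <;> simp_all
            _ = ((Finset.univ.filter fun ω : Fin n → Fin N => ∀ b ∈ S, ω b = ω a)).card := by
                rw [Finset.card_filter]
            _ ≤ N ^ (n - S.card) := aux_count n N a S hc.2
            _ = N ^ (n - m) := by rw [hc.1]
        · rw [if_neg hc]
          have : ∀ ω : Fin n → Fin N,
              (if (S.card = m ∧ a ∉ S ∧ ∀ b ∈ S, ω b = ω a) then (1:ℕ) else 0) = 0 := by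
            intro ω; rw [if_neg]; tauto
          simp only [this, Finset.sum_const_zero]
          exact le_refl 0
    _ ≤ ∑ aS : Fin n × Finset (Fin n),
          (if aS.2.card = m then N ^ (n - m) else 0) := by
        apply Finset.sum_le_sum
        rintro ⟨a, S⟩ _
        split <;> split <;> simp_all
    _ = ((Finset.univ.filter fun aS : Fin n × Finset (Fin n) => aS.2.card = m)).card
          * N ^ (n - m) := by
        rw [← Finset.sum_filter, Finset.sum_const, smul_eq_mul]
    _ ≤ n * Nat.choose n m * N ^ (n - m) := by
        apply Nat.mul_le_mul_right
        have hsub : (Finset.univ.filter fun aS : Fin n × Finset (Fin n) => aS.2.card = m)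
            ⊆ (Finset.univ : Finset (Fin n)) ×ˢ Finset.powersetCard m Finset.univ := by
          rintro ⟨a, S⟩ h
          simp only [mem_filter, mem_univ, true_and] at h
          rw [Finset.mem_product, Finset.mem_powersetCard]
          exact ⟨Finset.mem_univ _, Finset.subset_univ _, h⟩
        calc _ ≤ _ := Finset.card_le_card hsub
          _ = n * Nat.choose n m := by
            rw [Finset.card_product, Finset.card_univ, Fintype.card_fin,
              Finset.card_powersetCard, Finset.card_univ, Fintype.card_fin]

lemma aux_zero (n N i : ℕ) (hni : n < i) (ω : Fin n → Fin N) : heavyCollOrd n N i ω = 0 := by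
  rw [heavyCollOrd, Finset.card_eq_zero, Finset.filter_eq_empty_iff]
  rintro ⟨a, b⟩ _
  rintro ⟨-, -, hcard⟩
  have hcard' : i ≤ (Finset.univ.filter fun b' : Fin n => ω b' = ω a).card := hcard
  have := Finset.card_filter_le (Finset.univ : Finset (Fin n)) (fun b' => ω b' = ω a)
  simp only [Finset.card_univ, Fintype.card_fin] at this
  omega

/-- Throwing `n` balls uniformly into `N ≥ 3n` bins, the expected number of unordered
pairs of balls lying in a common bin of size at least `i` is
`O(n · i · (en/(iN))^{i−1})`. -/
theorem stmt_8 : ∃ C : ℝ, 0 < C ∧ ∀ n N i : ℕ, 1 ≤ n → 1 ≤ i → 3 * n ≤ N →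
    ((∑ ω : Fin n → Fin N, (heavyCollOrd n N i ω : ℝ)) / (N : ℝ) ^ n) / 2 ≤
      C * (n : ℝ) * (i : ℝ) * (Real.exp 1 * (n : ℝ) / ((i : ℝ) * N)) ^ (i - 1) := by
  refine ⟨Real.exp 1, Real.exp_pos 1, ?_⟩
  intro n N i hn hi hN
  have hN1 : 1 ≤ N := by omega
  have hNpos : (0:ℝ) < N := by exact_mod_cast (by omega : 0 < N)
  have hnpos : (0:ℝ) < n := by exact_mod_cast hn
  have hipos : (0:ℝ) < i := by exact_mod_cast hi
  have hRHSnn : 0 ≤ Real.exp 1 * (n:ℝ) * (i:ℝ) * (Real.exp 1 * (n : ℝ) / ((i : ℝ) * N)) ^ (i-1) := by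
    positivity
  rcases lt_or_ge n i with hni | hni
  · -- degenerate case: no bin can have i balls
    have : ∀ ω : Fin n → Fin N, (heavyCollOrd n N i ω : ℝ) = 0 := by
      intro ω; rw [aux_zero n N i hni ω]; norm_num
    simp only [this, Finset.sum_const_zero, zero_div]
    exact hRHSnn
  · set m := max (i - 1) 1 with hm_def
    have hm1 : 1 ≤ m := le_max_right _ _
    have hmn : m ≤ n := by omega
    -- natural number bound on the sum
    have hnat : (∑ ω : Fin n → Fin N, heavyCollOrd n N i ω)
        ≤ m * (n * Nat.choose n m * N ^ (n - m)) := by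
      calc (∑ ω : Fin n → Fin N, heavyCollOrd n N i ω)
          ≤ ∑ ω : Fin n → Fin N, m * ((Finset.univ.filter fun aS : Fin n × Finset (Fin n) =>
              aS.2.card = m ∧ aS.1 ∉ aS.2 ∧ ∀ b ∈ aS.2, ω b = ω aS.1)).card := by
            apply Finset.sum_le_sum
            intro ω _
            exact aux_pointwise n N i m hm1 (le_refl _) ω
        _ = m * ∑ ω : Fin n → Fin N, ((Finset.univ.filter fun aS : Fin n × Finset (Fin n) =>
              aS.2.card = m ∧ aS.1 ∉ aS.2 ∧ ∀ b ∈ aS.2, ω b = ω aS.1)).card := by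
            rw [Finset.mul_sum]
        _ ≤ m * (n * Nat.choose n m * N ^ (n - m)) :=
            Nat.mul_le_mul_left m (aux_sum n N m)
    have hreal : (∑ ω : Fin n → Fin N, (heavyCollOrd n N i ω : ℝ))
        ≤ (m : ℝ) * n * Nat.choose n m * (N:ℝ) ^ (n - m) := by
      push_cast
      calc (∑ ω : Fin n → Fin N, (heavyCollOrd n N i ω : ℝ))
          = ((∑ ω : Fin n → Fin N, heavyCollOrd n N i ω : ℕ) : ℝ) := by push_cast; rfl
        _ ≤ ((m * (n * Nat.choose n m * N ^ (n - m)) : ℕ) : ℝ) := by exact_mod_cast hnat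
        _ = (m : ℝ) * n * Nat.choose n m * (N:ℝ) ^ (n - m) := by push_cast; ring
    have hpowsub : ((N:ℝ) ^ (n - m)) = (N:ℝ)^n / (N:ℝ)^m := by
      rw [eq_div_iff (by positivity), ← pow_add, Nat.sub_add_cancel hmn]
    have hmpos : (0:ℝ) < m := by exact_mod_cast hm1
    -- main chain
    have step : ((∑ ω : Fin n → Fin N, (heavyCollOrd n N i ω : ℝ)) / (N : ℝ) ^ n) / 2
        ≤ ((m:ℝ)/2) * n * (Real.exp 1 * n / ((m:ℝ) * N)) ^ m := by
      have hch : (Nat.choose n m : ℝ) ≤ (Real.exp 1 * n / m) ^ m := aux_choose n m hm1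
      have h1 : ((∑ ω : Fin n → Fin N, (heavyCollOrd n N i ω : ℝ)) / (N : ℝ) ^ n) / 2
          ≤ ((m : ℝ) * n * Nat.choose n m / (N:ℝ)^m) / 2 := by
        apply div_le_div_of_nonneg_right _ (by norm_num)
        rw [div_le_div_iff₀ (by positivity) (by positivity)]
        calc (∑ ω : Fin n → Fin N, (heavyCollOrd n N i ω : ℝ)) * (N:ℝ)^m
            ≤ ((m : ℝ) * n * Nat.choose n m * (N:ℝ) ^ (n - m)) * (N:ℝ)^m := by
              apply mul_le_mul_of_nonneg_right hreal (by positivity)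
          _ = (m : ℝ) * n * Nat.choose n m * (N:ℝ)^n := by
              rw [mul_assoc, ← pow_add, Nat.sub_add_cancel hmn]
      refine h1.trans ?_
      have h2 : (m : ℝ) * n * Nat.choose n m / (N:ℝ)^m
          ≤ (m : ℝ) * n * ((Real.exp 1 * n / m) ^ m / (N:ℝ)^m) := by
        rw [mul_div_assoc]
        apply mul_le_mul_of_nonneg_left _ (by positivity)
        apply div_le_div_of_nonneg_right hch (by positivity)
        
      calc ((m : ℝ) * n * Nat.choose n m / (N:ℝ)^m) / 2
          ≤ ((m : ℝ) * n * ((Real.exp 1 * n / m) ^ m / (N:ℝ)^m)) / 2 := by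
            apply div_le_div_of_nonneg_right h2 (by norm_num)
        _ = ((m:ℝ)/2) * n * (Real.exp 1 * n / ((m:ℝ) * N)) ^ m := by
            have hb : Real.exp 1 * (n:ℝ) / ((m:ℝ) * N) = (Real.exp 1 * n / m) / N := by
              field_simp
            rw [hb, div_pow]
            ring
    refine step.trans ?_
    rcases eq_or_lt_of_le hi with h1i | h2i
    · -- i = 1
      subst h1i
      have hm' : m = 1 := by omega
      have hn2N : (n:ℝ) ≤ 2 * N := by
        have : n ≤ 2 * N := by omega
        exact_mod_cast this
      rw [hm']
      push_cast
      rw [pow_one, pow_zero, mul_one]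
      rw [show (1/2:ℝ)*n*(Real.exp 1*n/(1*N)) = (Real.exp 1 * n) * ((n:ℝ)/(2*N)) by
        field_simp]
      rw [show Real.exp 1 * (n:ℝ) * 1 = (Real.exp 1 * n) * 1 by ring]
      apply mul_le_mul_of_nonneg_left _ (by positivity)
      rw [div_le_one (by positivity)]
      exact hn2N
    · -- i ≥ 2
      have hm' : m = i - 1 := by omega
      have hicast : (i:ℝ) = (m:ℝ) + 1 := by
        have : i = m + 1 := by omega
        exact_mod_cast this
      have hsplit : (Real.exp 1 * n / ((m:ℝ)*N))^m
          = (Real.exp 1 * n / ((i:ℝ)*N))^m * (((m:ℝ)+1)/m)^m := by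
        rw [← mul_pow]
        congr 1
        rw [hicast]
        field_simp
      have hee : (((m:ℝ)+1)/m)^m ≤ Real.exp 1 := by
        rw [div_pow, div_le_iff₀ (by positivity)]
        calc ((m:ℝ)+1)^m ≤ (m:ℝ)^m * Real.exp 1 := aux_exp_pow m
          _ = Real.exp 1 * (m:ℝ)^m := by ring
      rw [show i - 1 = m from hm'.symm]
      calc ((m:ℝ)/2) * n * (Real.exp 1 * n / ((m:ℝ) * N)) ^ m
          = ((m:ℝ)/2) * n * ((Real.exp 1 * n / ((i:ℝ)*N))^m * (((m:ℝ)+1)/m)^m) := by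
            rw [hsplit]
        _ ≤ ((m:ℝ)/2) * n * ((Real.exp 1 * n / ((i:ℝ)*N))^m * Real.exp 1) := by
            apply mul_le_mul_of_nonneg_left _ (by positivity)
            exact mul_le_mul_of_nonneg_left hee (by positivity)
        _ = (((m:ℝ)/2) * Real.exp 1) * ((n:ℝ) * (Real.exp 1 * n / ((i:ℝ)*N))^m) := by ring
        _ ≤ (Real.exp 1 * (i:ℝ)) * ((n:ℝ) * (Real.exp 1 * n / ((i:ℝ)*N))^m) := by
            apply mul_le_mul_of_nonneg_right _ (by positivity)
            have hmi' : (m:ℝ) ≤ 2 * i := by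
              have : m ≤ 2 * i := by omega
              exact_mod_cast this
            nlinarith [Real.exp_pos 1]
        _ = Real.exp 1 * (n:ℝ) * (i:ℝ) * (Real.exp 1 * n / ((i:ℝ)*N))^m := by ring
end

section
/- Let P be n independent uniform random points in [0,1]^d, and let S be the minimum number of hyperplanes needed to strictly separate all pairs of P. Then E[S] = O(d·n^{2/(d+1)}). -/
open MeasureTheory

/-- The uniform probability measure on the unit cube `[0,1]^d`. -/
noncomputable def unifCube (d : ℕ) : Measure (Fin d → ℝ) :=
  volume.restrict (Set.Icc 0 1)

/-- The minimum number of hyperplanes needed to strictly separate all pairs of the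
points `ω 0, …, ω (n-1)` in `ℝ^d`. -/
noncomputable def sepNum (d n : ℕ) (ω : Fin n → Fin d → ℝ) : ℕ :=
  sInf {m : ℕ | ∃ H : Finset ((Fin d → ℝ) × ℝ), H.card = m ∧ (∀ h ∈ H, h.1 ≠ 0) ∧
    ∀ i j : Fin n, i ≠ j → ∃ h ∈ H, hypVal h (ω i) * hypVal h (ω j) < 0}

/-- explicit hyperplane strictly separating two distinct points -/
noncomputable def sepHyp {d : ℕ} (x y : Fin d → ℝ) : (Fin d → ℝ) × ℝ :=
  (fun k => y k - x k, ∑ k, (y k - x k) * ((x k + y k) / 2))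

lemma sepHyp_spec {d : ℕ} {x y : Fin d → ℝ} (hxy : x ≠ y) :
    (sepHyp x y).1 ≠ 0 ∧ hypVal (sepHyp x y) x * hypVal (sepHyp x y) y < 0 := by
  have hne : ∃ k, y k - x k ≠ 0 := by
    by_contra h
    push_neg at h
    exact hxy (funext fun k => by have := h k; linarith)
  constructor
  · obtain ⟨k, hk⟩ := hne
    intro h0
    exact hk (by simpa [sepHyp] using congrFun h0 k)
  · set S : ℝ := ∑ k, (y k - x k) ^ 2 / 2 with hS
    have hx : hypVal (sepHyp x y) x = -S := by
      simp only [hypVal, sepHyp, ← Finset.sum_sub_distrib, hS, ← Finset.sum_neg_distrib]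
      apply Finset.sum_congr rfl; intro k _; ring
    have hy : hypVal (sepHyp x y) y = S := by
      simp only [hypVal, sepHyp, ← Finset.sum_sub_distrib, hS]
      apply Finset.sum_congr rfl; intro k _; ring
    have hpos : 0 < S := by
      obtain ⟨k, hk⟩ := hne
      apply Finset.sum_pos' (fun k _ => by positivity) ⟨k, Finset.mem_univ k, by positivity⟩
    rw [hx, hy]
    nlinarith

noncomputable def cellIdx (N : ℕ) (x : ℝ) : ℕ := min ⌊(N : ℝ) * x⌋₊ (N - 1)

noncomputable def cellVec (d N : ℕ) (x : Fin d → ℝ) : Fin d → ℕ := fun k => cellIdx N (x k)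

def Good (d N : ℕ) (x : Fin d → ℝ) : Prop :=
  (∀ k, 0 ≤ x k ∧ x k ≤ 1) ∧ ∀ k (t : ℕ), (N : ℝ) * x k ≠ t

noncomputable def gridH (d N : ℕ) : Finset ((Fin d → ℝ) × ℝ) :=
  (Finset.univ ×ˢ Finset.Icc 1 (N - 1)).image fun kt => (Pi.single kt.1 (1:ℝ), (kt.2 : ℝ) / N)

lemma hypVal_single {d : ℕ} (k : Fin d) (c : ℝ) (z : Fin d → ℝ) :
    hypVal (Pi.single k (1:ℝ), c) z = z k - c := by
  simp [hypVal, Pi.single_apply, ite_mul]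

lemma single_ne_zero' {d : ℕ} (k : Fin d) : (Pi.single k (1:ℝ)) ≠ (0 : Fin d → ℝ) := by
  intro h
  have := congrFun h k
  simp at this

lemma grid_sep_one {N : ℕ} {u v : ℝ} (hv0 : 0 ≤ v) (hvne : ∀ t : ℕ, (N : ℝ) * v ≠ t)
    (hlt : cellIdx N u < cellIdx N v) :
    ∃ t : ℕ, 1 ≤ t ∧ t ≤ N - 1 ∧ u < (t : ℝ) / N ∧ (t : ℝ) / N < v := by
  have hbN : cellIdx N v ≤ N - 1 := min_le_right _ _
  have hN : 1 ≤ N := by omega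
  have hNpos : (0 : ℝ) < N := by exact_mod_cast hN
  set a := cellIdx N u with ha
  set b := cellIdx N v with hb
  refine ⟨a + 1, by omega, by omega, ?_, ?_⟩
  · have hfa : ⌊(N : ℝ) * u⌋₊ = a := by
      rcases le_or_gt ⌊(N : ℝ) * u⌋₊ (N - 1) with h | h
      · simp [ha, cellIdx, min_eq_left h]
      · exfalso
        have haN : a = N - 1 := by simp [ha, cellIdx, min_eq_right h.le]
        omega
    have := Nat.lt_floor_add_one ((N : ℝ) * u)
    rw [hfa] at this
    rw [lt_div_iff₀ hNpos]
    push_cast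
    linarith [this]
  · have hfb : (b : ℝ) ≤ (N : ℝ) * v := by
      have h1 : b ≤ ⌊(N : ℝ) * v⌋₊ := min_le_left _ _
      calc (b : ℝ) ≤ (⌊(N : ℝ) * v⌋₊ : ℝ) := by exact_mod_cast h1
        _ ≤ (N : ℝ) * v := Nat.floor_le (by positivity)
    have hab : ((a : ℝ) + 1) ≤ b := by exact_mod_cast hlt
    have hne' := hvne (a + 1)
    rw [div_lt_iff₀ hNpos]
    push_cast at hne' ⊢
    rcases lt_or_eq_of_le (le_trans hab hfb) with h | h
    · linarith
    · exact absurd h.symm hne'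

lemma grid_sep {d N : ℕ} {x y : Fin d → ℝ} (hx : Good d N x) (hy : Good d N y)
    (hne : cellVec d N x ≠ cellVec d N y) :
    ∃ h ∈ gridH d N, hypVal h x * hypVal h y < 0 := by
  have : ∃ k, cellIdx N (x k) ≠ cellIdx N (y k) := by
    by_contra h
    push_neg at h
    exact hne (funext h)
  obtain ⟨k, hk⟩ := this
  rcases hk.lt_or_gt with hlt | hlt
  · obtain ⟨t, ht1, ht2, hu, hv⟩ := grid_sep_one (hy.1 k).1 (hy.2 k) hlt
    refine ⟨(Pi.single k 1, (t : ℝ) / N), ?_, ?_⟩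
    · exact Finset.mem_image.2 ⟨(k, t), by simp [Finset.mem_Icc, ht1, ht2], rfl⟩
    · rw [hypVal_single, hypVal_single]
      exact mul_neg_of_neg_of_pos (by linarith) (by linarith)
  · obtain ⟨t, ht1, ht2, hu, hv⟩ := grid_sep_one (hx.1 k).1 (hx.2 k) hlt
    refine ⟨(Pi.single k 1, (t : ℝ) / N), ?_, ?_⟩
    · exact Finset.mem_image.2 ⟨(k, t), by simp [Finset.mem_Icc, ht1, ht2], rfl⟩
    · rw [hypVal_single, hypVal_single]
      exact mul_neg_of_pos_of_neg (by linarith) (by linarith)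

def pairs (n : ℕ) : Finset (Fin n × Fin n) := Finset.univ.filter fun p => p.1 < p.2

noncomputable def collPairs (d N n : ℕ) (ω : Fin n → Fin d → ℝ) : Finset (Fin n × Fin n) :=
  (pairs n).filter fun p => cellVec d N (ω p.1) = cellVec d N (ω p.2)

lemma sepNum_le_det {d N n : ℕ} (ω : Fin n → Fin d → ℝ) (hg : ∀ i, Good d N (ω i)) :
    sepNum d n ω ≤ d * (N - 1) + (collPairs d N n ω).card := by
  by_cases hdist : ∀ i j : Fin n, i ≠ j → ω i ≠ ω j
  · set H : Finset ((Fin d → ℝ) × ℝ) :=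
      gridH d N ∪ (collPairs d N n ω).image (fun p => sepHyp (ω p.1) (ω p.2)) with hH
    have hmem : sepNum d n ω ≤ H.card := by
      apply Nat.sInf_le
      refine ⟨H, rfl, ?_, ?_⟩
      · intro h hh
        rcases Finset.mem_union.1 hh with h1 | h2
        · obtain ⟨k, t, -, rfl⟩ := by simpa [gridH] using h1
          exact single_ne_zero' k
        · obtain ⟨p, hp, rfl⟩ := Finset.mem_image.1 h2
          have hplt : p.1 < p.2 := (Finset.mem_filter.1 (Finset.mem_filter.1 hp).1).2
          exact (sepHyp_spec (hdist p.1 p.2 hplt.ne)).1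
      · intro i j hij
        by_cases hcell : cellVec d N (ω i) = cellVec d N (ω j)
        · rcases hij.lt_or_gt with hlt | hlt
          · refine ⟨sepHyp (ω i) (ω j), ?_, (sepHyp_spec (hdist i j hij)).2⟩
            apply Finset.mem_union_right
            apply Finset.mem_image_of_mem (fun p : Fin n × Fin n => sepHyp (ω p.1) (ω p.2))
              (a := (i, j))
            simp [collPairs, pairs, hlt, hcell]
          · refine ⟨sepHyp (ω j) (ω i), ?_, ?_⟩
            · apply Finset.mem_union_right
              apply Finset.mem_image_of_mem (fun p : Fin n × Fin n => sepHyp (ω p.1) (ω p.2))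
                (a := (j, i))
              simp [collPairs, pairs, hlt, hcell.symm]
            · rw [mul_comm]
              exact (sepHyp_spec (hdist j i hij.symm)).2
        · obtain ⟨h, hh, hprod⟩ := grid_sep (hg i) (hg j) hcell
          exact ⟨h, Finset.mem_union_left _ hh, hprod⟩
    calc sepNum d n ω ≤ H.card := hmem
      _ ≤ (gridH d N).card + ((collPairs d N n ω).image
            (fun p => sepHyp (ω p.1) (ω p.2))).card := Finset.card_union_le _ _
      _ ≤ d * (N - 1) + (collPairs d N n ω).card := by
          gcongr
          · calc (gridH d N).card ≤ (Finset.univ (α := Fin d) ×ˢ Finset.Icc 1 (N - 1)).card :=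
                Finset.card_image_le
              _ = d * (N - 1) := by
                rw [Finset.card_product, Finset.card_univ, Fintype.card_fin, Nat.card_Icc]
                simp
          · exact Finset.card_image_le
  · push_neg at hdist
    obtain ⟨i, j, hij, heq⟩ := hdist
    have hempty : {m : ℕ | ∃ H : Finset ((Fin d → ℝ) × ℝ), H.card = m ∧ (∀ h ∈ H, h.1 ≠ 0) ∧
        ∀ i j : Fin n, i ≠ j → ∃ h ∈ H, hypVal h (ω i) * hypVal h (ω j) < 0} = ∅ := by
      ext m
      simp only [Set.mem_empty_iff_false, iff_false, Set.mem_setOf_eq]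
      rintro ⟨H, -, -, hsep⟩
      obtain ⟨h, -, hlt⟩ := hsep i j hij
      rw [heq] at hlt
      exact absurd hlt (not_lt.mpr (mul_self_nonneg _))
    rw [sepNum, hempty, Nat.sInf_empty]
    exact Nat.zero_le _

instance unifCube_prob (d : ℕ) : IsProbabilityMeasure (unifCube d) := by
  constructor
  rw [unifCube, Measure.restrict_apply_univ, Real.volume_Icc_pi]
  simp

lemma measurable_cellIdx (N : ℕ) : Measurable (cellIdx N) := by
  unfold cellIdx
  exact (Nat.measurable_floor.comp (measurable_const_mul _)).min measurable_const

lemma measurable_cellVec (d N : ℕ) : Measurable (cellVec d N) :=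
  measurable_pi_lambda _ fun k => (measurable_cellIdx N).comp (measurable_pi_apply k)

lemma ae_good {d N n : ℕ} (hN : 1 ≤ N) :
    ∀ᵐ ω ∂(Measure.pi fun _ : Fin n => unifCube d), ∀ i, Good d N (ω i) := by
  have hNpos : (0 : ℝ) < N := by exact_mod_cast hN
  have hnull : unifCube d {x | ¬ Good d N x} = 0 := by
    rw [unifCube, Measure.restrict_apply' measurableSet_Icc]
    have hzero : volume (⋃ (k : Fin d) (t : ℕ), {x : Fin d → ℝ | x k = (t : ℝ) / N}) = 0 := by
      apply measure_iUnion_null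
      intro k
      apply measure_iUnion_null
      intro t
      rw [volume_pi]
      exact Measure.pi_hyperplane _ k _
    apply measure_mono_null _ hzero
    rintro x ⟨hbad, hx⟩
    rw [Set.mem_Icc] at hx
    simp only [Good, not_and_or, not_forall] at hbad
    rcases hbad with h1 | h2
    · exfalso
      obtain ⟨k, hk⟩ := h1
      have e0 : (0 : Fin d → ℝ) k ≤ x k := hx.1 k
      have e1 : x k ≤ (1 : Fin d → ℝ) k := hx.2 k
      simp only [Pi.zero_apply, Pi.one_apply] at e0 e1
      rcases hk with h | h
      · exact h e0
      · exact h e1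
    · obtain ⟨k, t, ht⟩ := h2
      push_neg at ht
      simp only [Set.mem_iUnion, Set.mem_setOf_eq]
      refine ⟨k, t, ?_⟩
      field_simp
      linarith [ht]
  rw [ae_all_iff]
  intro i
  rw [ae_iff]
  show (Measure.pi fun _ : Fin n => unifCube d) (Function.eval i ⁻¹' {x | ¬ Good d N x}) = 0
  exact Measure.pi_eval_preimage_null _ hnull

lemma cellSet_vol {d N : ℕ} (hN : 1 ≤ N) (v : Fin d → ℕ) :
    unifCube d {x | cellVec d N x = v} ≤ (ENNReal.ofReal (1 / N)) ^ d := by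
  have hNpos : (0 : ℝ) < N := by exact_mod_cast hN
  rw [unifCube, Measure.restrict_apply' measurableSet_Icc]
  have hsub : {x : Fin d → ℝ | cellVec d N x = v} ∩ Set.Icc 0 1 ⊆
      Set.Icc (fun k => (v k : ℝ) / N) (fun k => ((v k : ℝ) + 1) / N) := by
    rintro x ⟨hcell, hx⟩
    rw [Set.mem_Icc] at hx
    obtain ⟨hx0, hx1⟩ := hx
    rw [Pi.le_def] at hx0 hx1
    simp only [Pi.zero_apply, Pi.one_apply] at hx0 hx1
    have hc : ∀ k, cellIdx N (x k) = v k := fun k => congrFun hcell k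
    rw [Set.mem_Icc, Pi.le_def, Pi.le_def]
    constructor <;> intro k
    · show (v k : ℝ) / N ≤ x k
      have h1 : v k ≤ ⌊(N : ℝ) * x k⌋₊ := by rw [← hc k]; exact min_le_left _ _
      have h2 : ((v k : ℕ) : ℝ) ≤ (N : ℝ) * x k :=
        le_trans (by exact_mod_cast h1) (Nat.floor_le (mul_nonneg hNpos.le (hx0 k)))
      rw [div_le_iff₀ hNpos]; linarith
    · show x k ≤ ((v k : ℝ) + 1) / N
      rcases le_or_gt ⌊(N : ℝ) * x k⌋₊ (N - 1) with h | h
      · have h1 : cellIdx N (x k) = ⌊(N : ℝ) * x k⌋₊ := min_eq_left h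
        have h2 := Nat.lt_floor_add_one ((N : ℝ) * x k)
        rw [le_div_iff₀ hNpos, ← hc k, h1]
        push_cast at h2 ⊢
        linarith
      · have h1 : cellIdx N (x k) = N - 1 := min_eq_right (le_of_lt h)
        rw [le_div_iff₀ hNpos, ← hc k, h1]
        have hcast : ((N - 1 : ℕ) : ℝ) = (N : ℝ) - 1 := by
          rw [Nat.cast_sub hN]; simp
        rw [hcast]
        have := hx1 k
        nlinarith
  calc volume ({x : Fin d → ℝ | cellVec d N x = v} ∩ Set.Icc 0 1)
      ≤ volume (Set.Icc (fun k => (v k : ℝ) / N) (fun k => ((v k : ℝ) + 1) / N)) :=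
        measure_mono hsub
    _ = (ENNReal.ofReal (1 / N)) ^ d := by
        rw [Real.volume_Icc_pi]
        have heq : ∀ k : Fin d, ((v k : ℝ) + 1) / N - (v k : ℝ) / N = 1 / N := fun k => by
          field_simp
          ring
        simp only [heq]
        rw [Finset.prod_const, Finset.card_univ, Fintype.card_fin]

lemma pi_pair_eval {d n : ℕ} {i j : Fin n} (hij : i ≠ j) {A : Set (Fin d → ℝ)}
    (hA : MeasurableSet A) :
    (Measure.pi fun _ : Fin n => unifCube d)
      (Function.eval i ⁻¹' A ∩ Function.eval j ⁻¹' A) = unifCube d A * unifCube d A := by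
  have hset : Function.eval i ⁻¹' A ∩ Function.eval j ⁻¹' A =
      Set.pi Set.univ (fun l => if l = i then A else if l = j then A else Set.univ) := by
    ext ω
    simp only [Set.mem_inter_iff, Set.mem_preimage, Set.mem_pi, Set.mem_univ, true_implies]
    constructor
    · rintro ⟨h1, h2⟩ l
      split_ifs with e1 e2
      · subst e1; exact h1
      · subst e2; exact h2
      · trivial
    · intro h
      constructor
      · have := h i; simpa using this
      · have := h j; simpa [hij.symm] using this
  rw [hset, Measure.pi_pi]
  have hout : ∀ l ∈ Finset.univ, l ∉ ({i, j} : Finset (Fin n)) →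
      unifCube d (if l = i then A else if l = j then A else Set.univ) = 1 := by
    intro l _ hl
    simp only [Finset.mem_insert, Finset.mem_singleton] at hl
    push_neg at hl
    simp [hl.1, hl.2]
  rw [← Finset.prod_subset (Finset.subset_univ ({i, j} : Finset (Fin n))) hout,
    Finset.prod_pair hij]
  simp [hij.symm]

lemma pair_event_le {d N n : ℕ} (hN : 1 ≤ N) {i j : Fin n} (hij : i ≠ j) :
    (Measure.pi fun _ : Fin n => unifCube d)
      {ω | cellVec d N (ω i) = cellVec d N (ω j)} ≤ (ENNReal.ofReal (1 / N)) ^ d := by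
  set A : (Fin d → Fin N) → Set (Fin d → ℝ) :=
    fun v => {x | cellVec d N x = fun k => (v k : ℕ)} with hA
  have hAmeas : ∀ v, MeasurableSet (A v) := fun v =>
    (measurable_cellVec d N) (measurableSet_singleton _)
  have hcover : {ω : Fin n → Fin d → ℝ | cellVec d N (ω i) = cellVec d N (ω j)} ⊆
      ⋃ v : Fin d → Fin N, (Function.eval i ⁻¹' A v ∩ Function.eval j ⁻¹' A v) := by
    intro ω hω
    simp only [Set.mem_setOf_eq] at hω
    have hlt : ∀ k, cellIdx N (ω i k) < N := fun k =>
      lt_of_le_of_lt (min_le_right _ _) (by omega)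
    refine Set.mem_iUnion.2 ⟨fun k => ⟨cellIdx N (ω i k), hlt k⟩, ?_, ?_⟩
    · exact funext fun k => rfl
    · rw [Set.mem_preimage]
      show cellVec d N (ω j) = _
      rw [← hω]
      exact funext fun k => rfl
  have hsum : ∀ v : Fin d → Fin N, unifCube d (A v) ≤ (ENNReal.ofReal (1 / N)) ^ d :=
    fun v => cellSet_vol hN _
  have hdisj : Set.PairwiseDisjoint (Finset.univ : Finset (Fin d → Fin N)) A := by
    intro v _ w _ hvw
    apply Set.disjoint_left.2
    intro x hxv hxw
    apply hvw
    funext k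
    have h1 : cellIdx N (x k) = (v k : ℕ) := congrFun hxv k
    have h2 : cellIdx N (x k) = (w k : ℕ) := congrFun hxw k
    exact Fin.ext (h1 ▸ h2)
  have htotal : ∑ v : Fin d → Fin N, unifCube d (A v) ≤ 1 := by
    rw [← measure_biUnion_finset hdisj fun v _ => hAmeas v]
    exact le_trans (measure_mono (Set.subset_univ _)) (by simp)
  calc (Measure.pi fun _ : Fin n => unifCube d)
        {ω | cellVec d N (ω i) = cellVec d N (ω j)}
      ≤ ∑ v : Fin d → Fin N, (Measure.pi fun _ : Fin n => unifCube d)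
          (Function.eval i ⁻¹' A v ∩ Function.eval j ⁻¹' A v) :=
        le_trans (measure_mono hcover) (measure_iUnion_fintype_le _ _)
    _ = ∑ v : Fin d → Fin N, unifCube d (A v) * unifCube d (A v) :=
        Finset.sum_congr rfl fun v _ => pi_pair_eval hij (hAmeas v)
    _ ≤ ∑ v : Fin d → Fin N, (ENNReal.ofReal (1 / N)) ^ d * unifCube d (A v) :=
        Finset.sum_le_sum fun v _ => mul_le_mul_left (hsum v) _
    _ = (ENNReal.ofReal (1 / N)) ^ d * ∑ v : Fin d → Fin N, unifCube d (A v) := by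
        rw [Finset.mul_sum]
    _ ≤ (ENNReal.ofReal (1 / N)) ^ d * 1 := mul_le_mul_right htotal _
    _ = (ENNReal.ofReal (1 / N)) ^ d := mul_one _

/-- For `n` independent uniform random points in `[0,1]^d`, the expected minimum number
of separating hyperplanes is `O(d · n^{2/(d+1)})`. -/
theorem stmt_10 :
    ∃ C : ℝ, 0 < C ∧ ∀ d n : ℕ, 1 ≤ d → 1 ≤ n →
      (∫ ω, (sepNum d n ω : ℝ) ∂(Measure.pi fun _ : Fin n => unifCube d)) ≤
        C * (d : ℝ) * (n : ℝ) ^ ((2 : ℝ) / ((d : ℝ) + 1)) := by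
  classical
  refine ⟨2, by norm_num, ?_⟩
  intro d n hd hn
  set μ := Measure.pi fun _ : Fin n => unifCube d with hμ
  set e : ℝ := (2 : ℝ) / ((d : ℝ) + 1) with he
  set α : ℝ := (n : ℝ) ^ e with hαdef
  have hd1 : (1 : ℝ) ≤ (d : ℝ) := by exact_mod_cast hd
  have hn1 : (1 : ℝ) ≤ (n : ℝ) := by exact_mod_cast hn
  have npos : (0 : ℝ) < n := by linarith
  have hepos : 0 < e := by positivity
  have hα1 : 1 ≤ α := Real.one_le_rpow hn1 hepos.le
  have hαpos : 0 < α := by linarith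
  set N : ℕ := ⌈α⌉₊ with hNdef
  have hN : 1 ≤ N := Nat.one_le_ceil_iff.2 hαpos
  have hNα : α ≤ (N : ℝ) := Nat.le_ceil α
  have hNα' : ((N : ℝ) - 1) ≤ α := by
    have := Nat.ceil_lt_add_one hαpos.le
    rw [hNdef]; linarith
  have hNpos : (0 : ℝ) < N := by linarith
  set E : Fin n × Fin n → Set (Fin n → Fin d → ℝ) :=
    fun p => {ω | cellVec d N (ω p.1) = cellVec d N (ω p.2)} with hE
  have hEmeas : ∀ p : Fin n × Fin n, MeasurableSet (E p) := by
    intro p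
    apply measurableSet_eq_fun
    · exact (measurable_cellVec d N).comp (measurable_pi_apply p.1)
    · exact (measurable_cellVec d N).comp (measurable_pi_apply p.2)
  set g : (Fin n → Fin d → ℝ) → ℝ :=
    fun ω => ((d * (N - 1) : ℕ) : ℝ) +
      ∑ p ∈ pairs n, (E p).indicator (fun _ => (1 : ℝ)) ω with hg
  have hgint : Integrable g μ := by
    apply Integrable.add (integrable_const _)
    apply integrable_finset_sum
    intro p _
    exact (integrable_const (1 : ℝ)).indicator (hEmeas p)
  have hle : ∀ᵐ ω ∂μ, (sepNum d n ω : ℝ) ≤ g ω := by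
    filter_upwards [ae_good (n := n) hN] with ω hω
    have hdet := sepNum_le_det ω hω
    have hcard : ((collPairs d N n ω).card : ℝ) =
        ∑ p ∈ pairs n, (E p).indicator (fun _ => (1 : ℝ)) ω := by
      rw [collPairs, Finset.card_filter]
      push_cast
      apply Finset.sum_congr rfl
      intro p _
      rw [Set.indicator_apply]
      by_cases hc : cellVec d N (ω p.1) = cellVec d N (ω p.2)
      · simp [hE, Set.mem_setOf_eq, hc]
      · simp [hE, Set.mem_setOf_eq, hc]
    calc (sepNum d n ω : ℝ) ≤ ((d * (N - 1) + (collPairs d N n ω).card : ℕ) : ℝ) := by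
          exact_mod_cast hdet
      _ = g ω := by push_cast [hg, ← hcard]; ring
  have h1 : ∫ ω, (sepNum d n ω : ℝ) ∂μ ≤ ∫ ω, g ω ∂μ :=
    integral_mono_of_nonneg (Filter.Eventually.of_forall fun ω => by positivity) hgint hle
  have h2 : ∫ ω, g ω ∂μ = ((d * (N - 1) : ℕ) : ℝ) +
      ∑ p ∈ pairs n, (μ (E p)).toReal := by
    rw [hg, integral_add (integrable_const _)
      (integrable_finset_sum _ fun p _ => (integrable_const (1 : ℝ)).indicator (hEmeas p)),
      integral_const, integral_finset_sum _ fun p _ => (integrable_const (1 : ℝ)).indicator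
      (hEmeas p)]
    simp only [Measure.real, measure_univ, ENNReal.toReal_one, smul_eq_mul, one_mul]
    congr 1
    apply Finset.sum_congr rfl
    intro p _
    rw [integral_indicator_const _ (hEmeas p), smul_eq_mul, mul_one]
    rfl
  have h3 : ∀ p ∈ pairs n, (μ (E p)).toReal ≤ (1 / (N : ℝ)) ^ d := by
    intro p hp
    have hij : p.1 ≠ p.2 := ((Finset.mem_filter.1 hp).2).ne
    have := pair_event_le (d := d) (n := n) hN hij
    calc (μ (E p)).toReal ≤ ((ENNReal.ofReal (1 / (N : ℝ))) ^ d).toReal :=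
          ENNReal.toReal_mono (by simp [ENNReal.pow_ne_top]) this
      _ = (1 / (N : ℝ)) ^ d := by
          rw [ENNReal.toReal_pow, ENNReal.toReal_ofReal (by positivity)]
  have hcardpairs : ((pairs n).card : ℝ) ≤ (n : ℝ) ^ 2 := by
    have : (pairs n).card ≤ n * n := by
      calc (pairs n).card ≤ (Finset.univ : Finset (Fin n × Fin n)).card :=
            Finset.card_filter_le _ _
        _ = n * n := by simp
    calc ((pairs n).card : ℝ) ≤ ((n * n : ℕ) : ℝ) := by exact_mod_cast this
      _ = (n : ℝ) ^ 2 := by push_cast; ring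
  have h4 : ∑ p ∈ pairs n, (μ (E p)).toReal ≤ (n : ℝ) ^ 2 * (1 / (N : ℝ)) ^ d := by
    calc ∑ p ∈ pairs n, (μ (E p)).toReal ≤ ∑ _p ∈ pairs n, (1 / (N : ℝ)) ^ d :=
          Finset.sum_le_sum h3
      _ = ((pairs n).card : ℝ) * (1 / (N : ℝ)) ^ d := by
          rw [Finset.sum_const, nsmul_eq_mul]
      _ ≤ (n : ℝ) ^ 2 * (1 / (N : ℝ)) ^ d := by
          apply mul_le_mul_of_nonneg_right hcardpairs (by positivity)
  -- rpow arithmetic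
  have hkey : (n : ℝ) ^ 2 * (1 / α) ^ d ≤ α := by
    have hαd : α ^ d = (n : ℝ) ^ (e * d) := by
      rw [← Real.rpow_natCast α d, hαdef, ← Real.rpow_mul npos.le]
    have h2r : (n : ℝ) ^ 2 = (n : ℝ) ^ (2 : ℝ) := by
      rw [← Real.rpow_natCast (n : ℝ) 2]; norm_num
    rw [one_div, inv_pow, hαd, h2r, ← Real.rpow_neg npos.le, ← Real.rpow_add npos]
    have hexp : 2 + -(e * d) = e := by
      rw [he]; field_simp; ring
    rw [hexp]
  have h5 : (1 / (N : ℝ)) ^ d ≤ (1 / α) ^ d := by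
    apply pow_le_pow_left₀ (by positivity)
    apply one_div_le_one_div_of_le hαpos hNα
  have h6 : ((d * (N - 1) : ℕ) : ℝ) ≤ (d : ℝ) * α := by
    rw [Nat.cast_mul, Nat.cast_sub hN]
    push_cast
    apply mul_le_mul_of_nonneg_left _ (by positivity)
    linarith
  calc ∫ ω, (sepNum d n ω : ℝ) ∂μ ≤ ∫ ω, g ω ∂μ := h1
    _ = ((d * (N - 1) : ℕ) : ℝ) + ∑ p ∈ pairs n, (μ (E p)).toReal := h2
    _ ≤ (d : ℝ) * α + (n : ℝ) ^ 2 * (1 / (N : ℝ)) ^ d := by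
        apply add_le_add h6 h4
    _ ≤ (d : ℝ) * α + (n : ℝ) ^ 2 * (1 / α) ^ d := by
        apply add_le_add_right
        apply mul_le_mul_of_nonneg_left h5 (by positivity)
    _ ≤ (d : ℝ) * α + α := by linarith [hkey]
    _ ≤ 2 * (d : ℝ) * α := by nlinarith
end

section
/- (Lower-bound tightness for birthday collisions) Throw n balls independently and uniformly into cn² bins. For any constant τ > 0, if the number of colliding pairs is at most T with probability ≥ 1 − 1/n^τ, then T = Ω(log n / log log n). More precisely, the probability of having at least i collisions is at least (8ci)^{−i}, which exceeds n^{−τ} for i = Θ(log n / log log n). -/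
open Finset Filter

/-- Number of ordered pairs of distinct balls lying in a common bin. -/
def collOrd (n m : ℕ) (ω : Fin n → Fin m) : ℕ :=
  (Finset.univ.offDiag.filter fun ij : Fin n × Fin n => ω ij.1 = ω ij.2).card

noncomputable def pProj (i n : ℕ) (e : Fin i × Bool ↪ Fin n) : Fin n → Fin n :=
  fun x => if h : ∃ k : Fin i, e (k, true) = x then e (h.choose, false) else x

lemma pProj_second {i n : ℕ} (e : Fin i × Bool ↪ Fin n) (k : Fin i) :
    pProj i n e (e (k, true)) = e (k, false) := by
  unfold pProj
  have h : ∃ k' : Fin i, e (k', true) = e (k, true) := ⟨k, rfl⟩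
  rw [dif_pos h]
  have := h.choose_spec
  have hk : h.choose = k := by
    have := e.injective this
    exact (Prod.mk.injEq _ _ _ _ ▸ this).1
  rw [hk]

lemma pProj_first {i n : ℕ} (e : Fin i × Bool ↪ Fin n) (k : Fin i) :
    pProj i n e (e (k, false)) = e (k, false) := by
  unfold pProj
  rw [dif_neg]
  rintro ⟨k', hk'⟩
  have := e.injective hk'
  simp at this

lemma pProj_of_not {i n : ℕ} (e : Fin i × Bool ↪ Fin n) (x : Fin n)
    (h : ¬ ∃ k : Fin i, e (k, true) = x) : pProj i n e x = x := dif_neg h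

lemma mem_range_of_collide {i n m : ℕ} (e : Fin i × Bool ↪ Fin n) (g : Fin n ↪ Fin m)
    (x y : Fin n) (hxy : y ≠ x) (hcol : g (pProj i n e x) = g (pProj i n e y)) :
    ∃ j, e j = x := by
  have hp : pProj i n e x = pProj i n e y := g.injective hcol
  by_cases hx : ∃ k : Fin i, e (k, true) = x
  · obtain ⟨k, hk⟩ := hx; exact ⟨(k, true), hk⟩
  · rw [pProj_of_not e x hx] at hp
    by_cases hy : ∃ k : Fin i, e (k, true) = y
    · obtain ⟨k, hk⟩ := hy
      rw [← hk, pProj_second] at hp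
      exact ⟨(k, false), hp.symm⟩
    · rw [pProj_of_not e y hy] at hp
      exact absurd hp.symm hxy

lemma collide_partner {i n m : ℕ} (e : Fin i × Bool ↪ Fin n) (g : Fin n ↪ Fin m)
    (k : Fin i) (b : Bool) :
    g (pProj i n e (e (k, b))) = g (pProj i n e (e (k, !b))) := by
  cases b <;> simp [pProj_second, pProj_first]

lemma key_count (n m i : ℕ) (hi : 1 ≤ i) :
    n.descFactorial (2*i) * m.descFactorial n ≤
      (2*i)^(2*i) * m^i *
        ((Finset.univ.filter fun ω : Fin n → Fin m => 2*i ≤ collOrd n m ω).card) := by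
  classical
  set Φ : ((Fin i × Bool ↪ Fin n) × (Fin n ↪ Fin m)) → (Fin n → Fin m) :=
    fun eg => eg.2 ∘ pProj i n eg.1 with hΦ
  have himg : ∀ eg : ((Fin i × Bool ↪ Fin n) × (Fin n ↪ Fin m)), 2*i ≤ collOrd n m (Φ eg) := by
    rintro ⟨e, g⟩
    set q : Fin i × Bool → Fin n × Fin n := fun kb => (e (kb.1, kb.2), e (kb.1, !kb.2)) with hq
    have hqinj : Function.Injective q := by
      rintro ⟨k, b⟩ ⟨k', b'⟩ h
      have h1 : e (k, b) = e (k', b') := congrArg Prod.fst h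
      exact e.injective h1
    have hsub : Finset.image q Finset.univ ⊆
        (Finset.univ.offDiag.filter fun ij : Fin n × Fin n => Φ (e, g) ij.1 = Φ (e, g) ij.2) := by
      intro ij hij
      obtain ⟨⟨k, b⟩, -, rfl⟩ := Finset.mem_image.mp hij
      refine Finset.mem_filter.mpr ⟨Finset.mem_offDiag.mpr ⟨Finset.mem_univ _, Finset.mem_univ _, ?_⟩, ?_⟩
      · intro h
        have := e.injective h
        simp at this
      · exact collide_partner e g k b
    calc 2*i = Fintype.card (Fin i × Bool) := by simp [mul_comm]
      _ = (Finset.image q Finset.univ).card := by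
          rw [Finset.card_image_of_injective _ hqinj, Finset.card_univ]
      _ ≤ _ := Finset.card_le_card hsub
  have hfiber : ∀ ω ∈ Finset.image Φ Finset.univ,
      (Finset.univ.filter fun eg => Φ eg = ω).card ≤ (2*i)^(2*i) * m^i := by
    intro ω hω
    obtain ⟨eg₀, -, h₀⟩ := Finset.mem_image.mp hω
    obtain ⟨e₀, g₀⟩ := eg₀
    haveI : Nonempty (Fin i × Bool) := ⟨(⟨0, hi⟩, true)⟩
    set ψ : ((Fin i × Bool ↪ Fin n) × (Fin n ↪ Fin m)) →
        ((Fin i × Bool → Fin i × Bool) × (Fin i → Fin m)) :=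
      fun eg => (fun j => Function.invFun e₀ (eg.1 j), fun k => eg.2 (eg.1 (k, true))) with hψ
    have hrange : ∀ (E : Fin i × Bool ↪ Fin n) (G : Fin n ↪ Fin m), Φ (E, G) = ω →
        ∀ j, e₀ (Function.invFun e₀ (E j)) = E j := by
      intro E G hEG j
      obtain ⟨k, b⟩ := j
      have hcol : ω (E (k, b)) = ω (E (k, !b)) := by
        rw [← hEG]; exact collide_partner E G k b
      have hne : E (k, !b) ≠ E (k, b) := by
        intro h; have := E.injective h; simp at this
      have hcol₀ : g₀ (pProj i n e₀ (E (k, b))) = g₀ (pProj i n e₀ (E (k, !b))) := by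
        have : Φ (e₀, g₀) (E (k, b)) = Φ (e₀, g₀) (E (k, !b)) := by rw [h₀]; exact hcol
        exact this
      obtain ⟨j₀, hj₀⟩ := mem_range_of_collide e₀ g₀ (E (k, b)) (E (k, !b)) hne hcol₀
      exact Function.invFun_eq ⟨j₀, hj₀⟩
    have hinj : Set.InjOn ψ ↑(Finset.univ.filter fun eg => Φ eg = ω) := by
      rintro ⟨e, g⟩ hmem ⟨e', g'⟩ hmem' hψeq
      have hΦ1 : Φ (e, g) = ω := (Finset.mem_filter.mp hmem).2
      have hΦ2 : Φ (e', g') = ω := (Finset.mem_filter.mp hmem').2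
      have h1 : ∀ j, e j = e' j := by
        intro j
        have hc : Function.invFun e₀ (e j) = Function.invFun e₀ (e' j) :=
          congrFun (congrArg Prod.fst hψeq) j
        calc e j = e₀ (Function.invFun e₀ (e j)) := (hrange e g hΦ1 j).symm
          _ = e₀ (Function.invFun e₀ (e' j)) := by rw [hc]
          _ = e' j := hrange e' g' hΦ2 j
      have he : e = e' := by ext j; exact congrArg Fin.val (h1 j)
      have hg : g = g' := by
        ext x
        by_cases hx : ∃ k : Fin i, e (k, true) = x
        · obtain ⟨k, hk⟩ := hx
          have h2 : g (e (k, true)) = g' (e' (k, true)) :=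
            congrFun (congrArg Prod.snd hψeq) k
          rw [← hk, h2, ← h1]
        · have hx' : ¬ ∃ k : Fin i, e' (k, true) = x := by
            rw [← he]; exact hx
          have := congrFun (hΦ1.trans hΦ2.symm) x
          simp only [hΦ, Function.comp_apply] at this
          rw [pProj_of_not e x hx, pProj_of_not e' x hx'] at this
          exact congrArg Fin.val this
      rw [Prod.mk.injEq]; exact ⟨he, hg⟩
    calc (Finset.univ.filter fun eg => Φ eg = ω).card
        ≤ (Finset.univ : Finset ((Fin i × Bool → Fin i × Bool) × (Fin i → Fin m))).card :=
          Finset.card_le_card_of_injOn ψ (fun a _ => Finset.mem_univ _) hinj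
      _ = (2*i)^(2*i) * m^i := by
          rw [Finset.card_univ, Fintype.card_prod, Fintype.card_fun, Fintype.card_fun]
          simp [mul_comm]
  calc n.descFactorial (2*i) * m.descFactorial n
      = (Finset.univ : Finset ((Fin i × Bool ↪ Fin n) × (Fin n ↪ Fin m))).card := by
        rw [Finset.card_univ, Fintype.card_prod, Fintype.card_embedding_eq,
          Fintype.card_embedding_eq]
        simp [mul_comm]
    _ ≤ (2*i)^(2*i) * m^i * (Finset.image Φ Finset.univ).card :=
        Finset.card_le_mul_card_image _ _ hfiber
    _ ≤ _ := by
        refine Nat.mul_le_mul_left _ (Finset.card_le_card ?_)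
        intro ω hω
        obtain ⟨eg, -, rfl⟩ := Finset.mem_image.mp hω
        exact Finset.mem_filter.mpr ⟨Finset.mem_univ _, himg eg⟩

lemma desc_ge (n k : ℕ) : (n - k)^k ≤ n.descFactorial k := by
  induction k with
  | zero => simp
  | succ k ih =>
      rw [Nat.descFactorial_succ, pow_succ]
      calc (n - (k+1))^k * (n - (k+1)) ≤ n.descFactorial k * (n - k) :=
            Nat.mul_le_mul (le_trans (Nat.pow_le_pow_left (by omega) k) ih) (by omega)
        _ = (n - k) * n.descFactorial k := by ring

lemma exp_le_one_sub {t : ℝ} (h0 : 0 ≤ t) (h2 : t ≤ 1/2) : Real.exp (-(2*t)) ≤ 1 - t := by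
  have hE := Real.add_one_le_exp (2*t)
  have hEpos := Real.exp_pos (2*t)
  rw [Real.exp_neg, inv_eq_one_div, div_le_iff₀ hEpos]
  nlinarith

lemma main_ev (c τ : ℝ) (hc : 0 < c) (hτ : 0 < τ) :
    ∃ x₀ : ℝ, ∀ x ≥ x₀,
      (3 ≤ x) ∧
      (1 ≤ Real.log (Real.log x)) ∧ (2*(τ/12) ≤ Real.log (Real.log x)) ∧
      (Real.log (32*c) ≤ Real.log (Real.log x)) ∧
      (Real.log (Real.log x) ≤ (τ/12) * Real.log x) ∧
      (4 * Real.log x ≤ x) ∧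
      (2 ≤ c * x) ∧
      (2/c < τ/2 * Real.log x) := by
  have hβ : (0:ℝ) < τ/12 := by linarith
  have hLL : Tendsto (fun x : ℝ => Real.log (Real.log x)) atTop atTop :=
    Real.tendsto_log_atTop.comp Real.tendsto_log_atTop
  have ev1 : ∀ᶠ x : ℝ in atTop, 3 ≤ x := eventually_ge_atTop 3
  have ev2 : ∀ᶠ x : ℝ in atTop,
      max 1 (max (2*(τ/12)) (Real.log (32*c))) ≤ Real.log (Real.log x) :=
    hLL.eventually_ge_atTop _
  have hlito : ∀ r : ℝ, 0 < r → ∀ᶠ y : ℝ in atTop, Real.log y ≤ r * y := by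
    intro r hr
    filter_upwards [Real.isLittleO_log_id_atTop.bound hr, eventually_ge_atTop (0:ℝ)] with y h hy
    calc Real.log y ≤ ‖Real.log y‖ := le_abs_self _
      _ ≤ r * ‖y‖ := h
      _ = r * y := by rw [Real.norm_eq_abs, abs_of_nonneg hy]
  have ev3 : ∀ᶠ x : ℝ in atTop, Real.log (Real.log x) ≤ (τ/12) * Real.log x :=
    Real.tendsto_log_atTop.eventually (hlito _ hβ)
  have ev4 : ∀ᶠ x : ℝ in atTop, 4 * Real.log x ≤ x := by
    filter_upwards [hlito (1/4) (by norm_num)] with x h; linarith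
  have ev5 : ∀ᶠ x : ℝ in atTop, 2 ≤ c * x :=
    (Tendsto.const_mul_atTop hc tendsto_id).eventually_ge_atTop 2
  have ev6 : ∀ᶠ x : ℝ in atTop, 2/c < τ/2 * Real.log x := by
    have : Tendsto (fun x : ℝ => τ/2 * Real.log x) atTop atTop :=
      Tendsto.const_mul_atTop (by linarith) Real.tendsto_log_atTop
    exact this.eventually_gt_atTop _
  obtain ⟨x₀, hx₀⟩ := eventually_atTop.mp
    (ev1.and (ev2.and (ev3.and (ev4.and (ev5.and ev6)))))
  refine ⟨x₀, fun x hx => ?_⟩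
  obtain ⟨h1, h2, h3, h4, h5, h6⟩ := hx₀ x hx
  simp only [max_le_iff] at h2
  exact ⟨h1, h2.1, h2.2.1, h2.2.2, h3, h4, h5, h6⟩

set_option maxHeartbeats 1000000 in
/-- Lower-bound tightness for birthday collisions: throwing `n` balls uniformly into
`⌈cn²⌉` bins, if the number of (unordered) colliding pairs is at most `T` with
probability at least `1 − 1/n^τ`, then `T = Ω(log n / log log n)`. -/
theorem stmt_13 (c τ : ℝ) (hc : 0 < c) (hτ : 0 < τ) :
    ∃ β : ℝ, 0 < β ∧ ∃ n₀ : ℕ, ∀ n ≥ n₀, ∀ m : ℕ, m = ⌈c * (n : ℝ) ^ 2⌉₊ → ∀ T : ℕ,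
      1 - (n : ℝ) ^ (-τ) ≤
          ((Finset.univ.filter fun ω : Fin n → Fin m =>
            (collOrd n m ω : ℝ) / 2 ≤ T).card : ℝ) / (m : ℝ) ^ n →
        β * Real.log n / Real.log (Real.log n) ≤ T := by
  classical
  obtain ⟨x₀, hx₀⟩ := main_ev c τ hc hτ
  refine ⟨τ/12, by positivity, max 3 ⌈x₀⌉₊, fun n hn m hm T hyp => ?_⟩
  by_contra hT
  push_neg at hT
  set x : ℝ := (n : ℝ) with hxdef
  have hnx : ((n:ℕ):ℝ) = x := hxdef.symm
  have hxx₀ : x ≥ x₀ := by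
    have h1 : ⌈x₀⌉₊ ≤ n := le_trans (le_max_right _ _) hn
    calc x₀ ≤ (⌈x₀⌉₊ : ℝ) := Nat.le_ceil _
      _ ≤ x := by rw [hxdef]; exact_mod_cast h1
  obtain ⟨hx3, hLL1, hLL2β, hLLlog, hLLβL, h4L, hcx, h2c⟩ := hx₀ x hxx₀
  set L : ℝ := Real.log x with hLdef
  set LL : ℝ := Real.log L with hLLdef
  have hxpos : (0:ℝ) < x := by linarith only [hx3]
  have hLLpos : (0:ℝ) < LL := by linarith only [hLL1]
  have hL1 : 1 ≤ L := by
    rw [hLdef, ← Real.log_exp 1]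
    exact Real.log_le_log (Real.exp_pos 1) (by linarith only [Real.exp_one_lt_d9, hx3])
  have hLpos : (0:ℝ) < L := by linarith only [hL1]
  set D : ℝ := τ/12 * L / LL with hDdef
  have hTD : (T:ℝ) < D := hT
  have hD1 : 1 ≤ D := by
    rw [hDdef, le_div_iff₀ hLLpos]; linarith only [hLLβL]
  set i : ℕ := T + 1 with hidef
  have hiT : ((i:ℕ):ℝ) = (T:ℝ) + 1 := by rw [hidef]; push_cast; ring
  have hIpos : (1:ℝ) ≤ (i:ℝ) := by
    rw [hiT]; linarith only [Nat.cast_nonneg (α := ℝ) T]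
  have hIpos' : (0:ℝ) < (i:ℝ) := by linarith only [hIpos]
  have hI2 : (i:ℝ) ≤ 2*D := by rw [hiT]; linarith only [hTD, hD1]
  have hIL : (i:ℝ) ≤ L := by
    have h2d : 2*D ≤ L := by
      have h := mul_le_mul_of_nonneg_right hLL2β hLpos.le
      rw [hDdef, show 2*(τ/12*L/LL) = 2*(τ/12)*L/LL by ring, div_le_iff₀ hLLpos]
      linarith only [h]
    linarith only [hI2, h2d]
  have h2i : 2*(i:ℝ) ≤ x/2 := by linarith only [hIL, h4L]
  have h2in : 2*i ≤ n := by
    have h : ((2*i:ℕ):ℝ) ≤ ((n:ℕ):ℝ) := by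
      rw [hnx]; push_cast
      linarith only [hiT, h2i, hxpos]
    exact_mod_cast h
  set M : ℝ := (m : ℝ) with hMdef
  have hMlb : c*x^2 ≤ M := by
    rw [hMdef, hm]; exact_mod_cast Nat.le_ceil _
  have h2x : 2*x ≤ c*x^2 := by
    have h := mul_le_mul_of_nonneg_right hcx hxpos.le
    linarith only [h]
  have hcx2 : 1 ≤ c*x^2 := by linarith only [h2x, hx3]
  have hMub : M ≤ 2*(c*x^2) := by
    have h1 : (⌈c*x^2⌉₊ : ℝ) < c*x^2 + 1 := Nat.ceil_lt_add_one (by positivity)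
    rw [hMdef, hm]
    push_cast at h1 ⊢
    linarith only [h1, hcx2]
  have hM2x : 2*x ≤ M := by linarith only [h2x, hMlb]
  have hMpos : (0:ℝ) < M := by linarith only [hM2x, hx3]
  have hnm : n ≤ m := by
    have h : ((n:ℕ):ℝ) ≤ ((m:ℕ):ℝ) := by
      rw [hnx, ← hMdef]; linarith only [hM2x, hxpos]
    exact_mod_cast h
  have hMn : (0:ℝ) < M^n := pow_pos hMpos n
  -- counting
  have hkey := key_count n m i (Nat.le_add_left 1 T)
  set B' : ℕ := (Finset.univ.filter fun ω : Fin n → Fin m => 2*i ≤ collOrd n m ω).card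
    with hB'def
  set Bn : ℕ := (Finset.univ.filter fun ω : Fin n → Fin m =>
      ¬((collOrd n m ω : ℝ) / 2 ≤ (T:ℝ))).card with hBndef
  have hB'B : B' ≤ Bn := by
    apply Finset.card_le_card
    intro ω hω
    rw [Finset.mem_filter] at hω ⊢
    refine ⟨Finset.mem_univ _, ?_⟩
    intro hle
    have h1 : ((2*i:ℕ):ℝ) ≤ (collOrd n m ω : ℝ) := by exact_mod_cast hω.2
    push_cast at h1
    linarith only [hiT, h1, hle]
  have hsplit : (Finset.univ.filter fun ω : Fin n → Fin m =>
        (collOrd n m ω : ℝ) / 2 ≤ (T:ℝ)).card + Bn = m^n := by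
    rw [hBndef, Finset.card_filter_add_card_filter_not, Finset.card_univ,
      Fintype.card_fun, Fintype.card_fin, Fintype.card_fin]
  have hBub : (Bn:ℝ) ≤ x^(-τ) * M^n := by
    have h1 : (1 - x^(-τ)) * M^n ≤
        ((Finset.univ.filter fun ω : Fin n → Fin m =>
          (collOrd n m ω : ℝ) / 2 ≤ (T:ℝ)).card : ℝ) := by
      rw [← le_div_iff₀ hMn]; exact hyp
    have h2 : ((Finset.univ.filter fun ω : Fin n → Fin m =>
        (collOrd n m ω : ℝ) / 2 ≤ (T:ℝ)).card : ℝ) + (Bn:ℝ) = M^n := by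
      rw [hMdef]; exact_mod_cast hsplit
    rw [sub_mul, one_mul] at h1
    linarith only [h1, h2]
  -- lower bounds on descending factorials
  have hd1 : (x/2)^(2*i) ≤ ((n.descFactorial (2*i) : ℕ):ℝ) := by
    calc (x/2)^(2*i) ≤ ((n - 2*i : ℕ):ℝ)^(2*i) := by
          apply pow_le_pow_left₀ (by linarith only [hxpos])
          rw [Nat.cast_sub h2in, hnx]
          push_cast
          linarith only [hiT, h2i]
      _ ≤ _ := by exact_mod_cast desc_ge n (2*i)
  have hd2 : Real.exp (-(2/c)) * M^n ≤ ((m.descFactorial n : ℕ):ℝ) := by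
    set t : ℝ := x/M with htdef
    have ht0 : 0 ≤ t := by positivity
    have ht2 : t ≤ 1/2 := by
      rw [htdef, div_le_iff₀ hMpos]; linarith only [hM2x]
    have h1t := exp_le_one_sub ht0 ht2
    have hMx : M * (1 - t) = M - x := by rw [htdef]; field_simp
    have hx2M : ((n:ℕ):ℝ) * (2*t) ≤ 2/c := by
      rw [htdef, hnx, show x*(2*(x/M)) = 2*x^2/M by field_simp,
        div_le_div_iff₀ hMpos hc]
      linarith only [hMlb]
    have hstep : Real.exp (-(2/c)) ≤ Real.exp (-(2*t))^n := by
      rw [← Real.exp_nat_mul]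
      apply Real.exp_le_exp.mpr
      rw [show ((n:ℕ):ℝ) * -(2*t) = -(((n:ℕ):ℝ)*(2*t)) by ring]
      linarith only [hx2M]
    calc Real.exp (-(2/c)) * M^n ≤ Real.exp (-(2*t))^n * M^n :=
          mul_le_mul_of_nonneg_right hstep hMn.le
      _ ≤ (1-t)^n * M^n :=
          mul_le_mul_of_nonneg_right (pow_le_pow_left₀ (Real.exp_pos _).le h1t n) hMn.le
      _ = (M - x)^n := by rw [← hMx, mul_pow]; ring
      _ = ((m - n : ℕ):ℝ)^n := by rw [Nat.cast_sub hnm, hnx, hMdef]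
      _ ≤ _ := by exact_mod_cast desc_ge m n
  -- cast the key counting bound
  have hkeyR : ((n.descFactorial (2*i) : ℕ):ℝ) * ((m.descFactorial n : ℕ):ℝ) ≤
      (2*(i:ℝ))^(2*i) * M^i * (B':ℝ) := by
    rw [hMdef]; exact_mod_cast hkey
  have hB'R : (B':ℝ) ≤ (Bn:ℝ) := by exact_mod_cast hB'B
  set F : ℝ := (2*(i:ℝ))^(2*i) * M^i with hFdef
  have hFpos : 0 < F :=
    mul_pos (pow_pos (by linarith only [hIpos']) _) (pow_pos hMpos _)
  have hlowB : (x/2)^(2*i) * (Real.exp (-(2/c)) * M^n) ≤ F * (Bn:ℝ) := by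
    calc (x/2)^(2*i) * (Real.exp (-(2/c)) * M^n)
        ≤ ((n.descFactorial (2*i) : ℕ):ℝ) * ((m.descFactorial n : ℕ):ℝ) :=
          mul_le_mul hd1 hd2 (by positivity) (by positivity)
      _ ≤ F * (B':ℝ) := hkeyR
      _ ≤ F * (Bn:ℝ) := mul_le_mul_of_nonneg_left hB'R hFpos.le
  -- the (32 c i²)^i ≤ x^(τ/2) estimate
  have hzpos : (0:ℝ) < 32*c*(i:ℝ)^2 :=
    mul_pos (by positivity) (pow_pos hIpos' 2)
  have hlogz : Real.log (32*c*(i:ℝ)^2) ≤ 3*LL := by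
    rw [Real.log_mul (by positivity) (ne_of_gt (pow_pos hIpos' 2)), Real.log_pow]
    have h1 : Real.log (i:ℝ) ≤ LL := by
      rw [hLLdef]; exact Real.log_le_log hIpos' hIL
    have h2 : ((2:ℕ):ℝ) = 2 := by norm_num
    rw [h2]
    linarith only [hLLlog, h1]
  have hIlogz : (i:ℝ) * Real.log (32*c*(i:ℝ)^2) ≤ τ/2 * L := by
    calc (i:ℝ) * Real.log (32*c*(i:ℝ)^2) ≤ (i:ℝ) * (3*LL) :=
          mul_le_mul_of_nonneg_left hlogz (by linarith only [hIpos])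
      _ ≤ (2*D) * (3*LL) := mul_le_mul_of_nonneg_right hI2 (by linarith only [hLLpos])
      _ = τ/2 * L := by rw [hDdef]; field_simp; ring
  have hs5 : (32*c*(i:ℝ)^2)^i ≤ x^(τ/2) := by
    have h1 : (32*c*(i:ℝ)^2)^i = Real.exp ((i:ℝ) * Real.log (32*c*(i:ℝ)^2)) := by
      rw [Real.exp_nat_mul, Real.exp_log hzpos]
    rw [h1, Real.rpow_def_of_pos hxpos, ← hLdef, mul_comm L (τ/2)]
    exact Real.exp_le_exp.mpr hIlogz
  have hs6 : x^(-(τ/2)) < Real.exp (-(2/c)) := by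
    have h1 : Real.exp (2/c) < x^(τ/2) := by
      rw [Real.rpow_def_of_pos hxpos, ← hLdef, mul_comm L (τ/2)]
      exact Real.exp_lt_exp.mpr h2c
    rw [Real.rpow_neg hxpos.le, Real.exp_neg]
    exact inv_strictAnti₀ (Real.exp_pos _) h1
  have hrpowsplit : x^(-τ) = x^(-(τ/2)) * x^(-(τ/2)) := by
    rw [← Real.rpow_add hxpos]; congr 1; ring
  have hf1 : x^(-(τ/2)) * F ≤ (x/2)^(2*i) := by
    have hFle : F ≤ (x/2)^(2*i) * x^(τ/2) := by
      have hh := mul_le_mul_of_nonneg_left hMub (by positivity : (0:ℝ) ≤ 4*(i:ℝ)^2)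
      have h2 : ((2*(i:ℝ))^2 * M) ≤ (x/2)^2 * (32*c*(i:ℝ)^2) := by
        linarith only [hh]
      calc F = ((2*(i:ℝ))^2 * M)^i := by rw [hFdef, pow_mul, ← mul_pow]
        _ ≤ ((x/2)^2 * (32*c*(i:ℝ)^2))^i := pow_le_pow_left₀ (by positivity) h2 i
        _ = ((x/2)^2)^i * (32*c*(i:ℝ)^2)^i := mul_pow _ _ i
        _ = (x/2)^(2*i) * (32*c*(i:ℝ)^2)^i := by rw [← pow_mul]
        _ ≤ (x/2)^(2*i) * x^(τ/2) := mul_le_mul_of_nonneg_left hs5 (by positivity)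
    calc x^(-(τ/2)) * F ≤ x^(-(τ/2)) * ((x/2)^(2*i) * x^(τ/2)) :=
          mul_le_mul_of_nonneg_left hFle (by positivity)
      _ = (x^(-(τ/2)) * x^(τ/2)) * (x/2)^(2*i) := by ring
      _ = (x/2)^(2*i) := by
          rw [← Real.rpow_add hxpos, neg_add_cancel, Real.rpow_zero, one_mul]
  have hx2pos : (0:ℝ) < (x/2)^(2*i) := pow_pos (by linarith only [hxpos]) _
  have hstrict : x^(-τ) * M^n * F < (x/2)^(2*i) * (Real.exp (-(2/c)) * M^n) := by
    rw [hrpowsplit]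
    calc x^(-(τ/2)) * x^(-(τ/2)) * M^n * F
        = (x^(-(τ/2)) * F) * (x^(-(τ/2)) * M^n) := by ring
      _ ≤ (x/2)^(2*i) * (x^(-(τ/2)) * M^n) :=
          mul_le_mul_of_nonneg_right hf1 (by positivity)
      _ < (x/2)^(2*i) * (Real.exp (-(2/c)) * M^n) :=
          mul_lt_mul_of_pos_left (mul_lt_mul_of_pos_right hs6 hMn) hx2pos
  have hfinal : x^(-τ) * M^n < (Bn:ℝ) := by
    have h1 : x^(-τ) * M^n * F < F * (Bn:ℝ) := lt_of_lt_of_le hstrict hlowB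
    rw [mul_comm F ((Bn:ℕ):ℝ)] at h1
    exact lt_of_mul_lt_mul_right h1 hFpos.le
  linarith only [hBub, hfinal]
end

section
/- For the N×N grid in the unit square, the number of distinct 'signatures' of lines — where the signature of a line is the set of grid cells it intersects — is O(N⁴). -/
open Set

lemma sgn_mem (r : ℝ) : Real.sign r ∈ ({-1, 0, 1} : Set ℝ) := by
  rcases Real.sign_apply_eq r with h | h | h <;> simp [h]

lemma sgn_pos_mul {r : ℝ} (hr : 0 < r) (t : ℝ) : Real.sign (r * t) = Real.sign t := by
  rcases lt_trichotomy t 0 with h | h | h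
  · rw [Real.sign_of_neg h, Real.sign_of_neg (by nlinarith)]
  · simp [h, Real.sign_zero]
  · rw [Real.sign_of_pos h, Real.sign_of_pos (by nlinarith)]

lemma sgn_combo {a b l : ℝ} (h : Real.sign a = Real.sign b) (h0 : 0 ≤ l) (h1 : l ≤ 1) :
    Real.sign ((1 - l) * a + l * b) = Real.sign a := by
  rcases lt_trichotomy a 0 with ha | ha | ha
  · have hb : b < 0 := by
      by_contra hb
      push_neg at hb
      rcases eq_or_lt_of_le hb with hb' | hb'
      · rw [Real.sign_of_neg ha, ← hb', Real.sign_zero] at h; norm_num at h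
      · rw [Real.sign_of_neg ha, Real.sign_of_pos hb'] at h; norm_num at h
    have : (1 - l) * a + l * b < 0 := by
      rcases eq_or_lt_of_le h1 with h1' | h1'
      · subst h1'; simpa using hb
      · nlinarith
    rw [Real.sign_of_neg this, Real.sign_of_neg ha]
  · have hb : b = 0 := by
      subst ha; rw [Real.sign_zero] at h
      exact Real.sign_eq_zero_iff.mp h.symm
    subst hb; rw [← ha]; ring_nf
  · have hb : 0 < b := by
      by_contra hb
      push_neg at hb
      rcases eq_or_lt_of_le hb with hb' | hb'
      · rw [Real.sign_of_pos ha, hb', Real.sign_zero] at h; norm_num at h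
      · rw [Real.sign_of_pos ha, Real.sign_of_neg hb'] at h; norm_num at h
    have : 0 < (1 - l) * a + l * b := by
      rcases eq_or_lt_of_le h1 with h1' | h1'
      · subst h1'; simpa using hb
      · nlinarith
    rw [Real.sign_of_pos this, Real.sign_of_pos ha]

lemma sign_image_finite {α : Type*} (M : ℕ) (g : Fin M → α → ℝ) (S : Set α) :
    ((fun x => fun i => Real.sign (g i x)) '' S).Finite := by
  apply Set.Finite.subset (Set.Finite.pi (fun _ : Fin M => (finite_singleton (1:ℝ)).insert (-1) |>.insert 0))
  rintro _ ⟨x, -, rfl⟩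
  intro i _
  have := sgn_mem (g i x)
  simp at this ⊢
  tauto

lemma count_step {α β : Type*} (S : Set α) (G : α → β) (h : α → ℝ)
    (hGfin : (G '' S).Finite) (hRfin : (G '' (S ∩ {x | h x = 0})).Finite)
    (hiv : ∀ x ∈ S, ∀ y ∈ S, G x = G y → Real.sign (h x) ≠ Real.sign (h y) →
       ∃ z ∈ S, G z = G x ∧ h z = 0) :
    ((fun x => (G x, Real.sign (h x))) '' S).ncard ≤
      (G '' S).ncard + 3 * (G '' (S ∩ {x | h x = 0})).ncard := by
  set F : α → β × ℝ := fun x => (G x, Real.sign (h x)) with hF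
  set R : Set β := G '' (S ∩ {x | h x = 0}) with hR
  have hTfin : (F '' S).Finite := by
    apply Set.Finite.subset (hGfin.prod ((finite_singleton (1:ℝ)).insert (-1) |>.insert 0))
    rintro _ ⟨x, hx, rfl⟩
    refine ⟨mem_image_of_mem G hx, ?_⟩
    have := sgn_mem (h x); simp [hF] at this ⊢; tauto
  set T1 : Set (β × ℝ) := {w ∈ F '' S | w.1 ∈ R} with hT1
  set T2 : Set (β × ℝ) := {w ∈ F '' S | w.1 ∉ R} with hT2
  have hsplit : F '' S = T1 ∪ T2 := by
    ext w; by_cases hw : w.1 ∈ R <;> simp [hT1, hT2, hw]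
  have h1 : T1.ncard ≤ 3 * R.ncard := by
    have hsub : T1 ⊆ (fun b => (b, (-1:ℝ))) '' R ∪ (fun b => (b, (0:ℝ))) '' R ∪
        (fun b => (b, (1:ℝ))) '' R := by
      rintro ⟨b, s⟩ ⟨⟨x, hx, hFx⟩, hbR⟩
      have hs : s = Real.sign (h x) := (congrArg Prod.snd hFx).symm
      have hb : b = G x := (congrArg Prod.fst hFx).symm
      rcases Real.sign_apply_eq (h x) with hsx | hsx | hsx
      · exact Or.inl (Or.inl ⟨b, hbR, by simp [hs, hsx]⟩)
      · exact Or.inl (Or.inr ⟨b, hbR, by simp [hs, hsx]⟩)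
      · exact Or.inr ⟨b, hbR, by simp [hs, hsx]⟩
    have hfin3 : ((fun b => (b, (-1:ℝ))) '' R ∪ (fun b => (b, (0:ℝ))) '' R ∪
        (fun b => (b, (1:ℝ))) '' R).Finite :=
      ((hRfin.image _).union (hRfin.image _)).union (hRfin.image _)
    calc T1.ncard
        ≤ ((fun b => (b, (-1:ℝ))) '' R ∪ (fun b => (b, (0:ℝ))) '' R ∪
          (fun b => (b, (1:ℝ))) '' R).ncard := Set.ncard_le_ncard hsub hfin3
      _ ≤ ((fun b => (b, (-1:ℝ))) '' R ∪ (fun b => (b, (0:ℝ))) '' R).ncard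
          + ((fun b => (b, (1:ℝ))) '' R).ncard := Set.ncard_union_le _ _
      _ ≤ (((fun b => (b, (-1:ℝ))) '' R).ncard + ((fun b => (b, (0:ℝ))) '' R).ncard)
          + ((fun b => (b, (1:ℝ))) '' R).ncard := by
            gcongr; exact Set.ncard_union_le _ _
      _ ≤ R.ncard + R.ncard + R.ncard := by
            gcongr <;> exact Set.ncard_image_le hRfin
      _ = 3 * R.ncard := by ring
  have h2 : T2.ncard ≤ (G '' S).ncard := by
    have hinj : Set.InjOn Prod.fst T2 := by
      rintro ⟨b, s⟩ ⟨⟨x, hx, hFx⟩, hbR⟩ ⟨b', s'⟩ ⟨⟨y, hy, hFy⟩, hbR'⟩ hfst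
      simp only at hfst
      subst hfst
      have hb : b = G x := (congrArg Prod.fst hFx).symm
      have hb' : b = G y := (congrArg Prod.fst hFy).symm
      have hs : s = Real.sign (h x) := (congrArg Prod.snd hFx).symm
      have hs' : s' = Real.sign (h y) := (congrArg Prod.snd hFy).symm
      by_contra hne
      have hsne : Real.sign (h x) ≠ Real.sign (h y) := by
        intro hc; apply hne; simp [hs, hs', hc]
      obtain ⟨z, hzS, hzG, hz0⟩ := hiv x hx y hy (by rw [← hb, ← hb']) hsne
      exact hbR (by rw [hb, ← hzG]; exact mem_image_of_mem G ⟨hzS, hz0⟩)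
    calc T2.ncard = (Prod.fst '' T2).ncard :=
          (Set.ncard_image_of_injOn hinj).symm
      _ ≤ (G '' S).ncard := by
          apply Set.ncard_le_ncard _ hGfin
          rintro _ ⟨⟨b, s⟩, ⟨⟨x, hx, hFx⟩, -⟩, rfl⟩
          exact ⟨x, hx, (congrArg Prod.fst hFx)⟩
  calc (F '' S).ncard = (T1 ∪ T2).ncard := by rw [hsplit]
    _ ≤ T1.ncard + T2.ncard := Set.ncard_union_le _ _
    _ ≤ 3 * R.ncard + (G '' S).ncard := by gcongr
    _ = (G '' S).ncard + 3 * R.ncard := by ring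

lemma mix_hiv {α : Type*} {M : ℕ} (g : Fin M → α → ℝ) (h : α → ℝ) (comb : ℝ → α → α → α)
    (hg : ∀ l x y i, g i (comb l x y) = (1 - l) * g i x + l * g i y)
    (hh : ∀ l x y, h (comb l x y) = (1 - l) * h x + l * h y) :
    ∀ x ∈ (univ : Set α), ∀ y ∈ (univ : Set α),
      (fun i => Real.sign (g i x)) = (fun i => Real.sign (g i y)) →
      Real.sign (h x) ≠ Real.sign (h y) →
      ∃ z ∈ (univ : Set α), (fun i => Real.sign (g i z)) = (fun i => Real.sign (g i x)) ∧
        h z = 0 := by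
  intro x _ y _ hGxy hsne
  by_cases hx0 : h x = 0
  · exact ⟨x, trivial, rfl, hx0⟩
  by_cases hy0 : h y = 0
  · exact ⟨y, trivial, hGxy.symm, hy0⟩
  have hopp : (0 < h x ∧ h y < 0) ∨ (h x < 0 ∧ 0 < h y) := by
    rcases lt_trichotomy (h x) 0 with a1 | a1 | a1 <;>
      rcases lt_trichotomy (h y) 0 with a2 | a2 | a2
    · exact absurd (by rw [Real.sign_of_neg a1, Real.sign_of_neg a2]) hsne
    · exact absurd a2 hy0
    · exact Or.inr ⟨a1, a2⟩
    · exact absurd a1 hx0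
    · exact absurd a1 hx0
    · exact absurd a1 hx0
    · exact Or.inl ⟨a1, a2⟩
    · exact absurd a2 hy0
    · exact absurd (by rw [Real.sign_of_pos a1, Real.sign_of_pos a2]) hsne
  have hden : h x - h y ≠ 0 := by
    rcases hopp with ⟨p, q⟩ | ⟨p, q⟩ <;> intro hc <;> nlinarith
  set l : ℝ := h x / (h x - h y) with hl
  have hl0 : 0 ≤ l := by
    rcases hopp with ⟨p, q⟩ | ⟨p, q⟩
    · exact div_nonneg p.le (by linarith)
    · rw [hl, ← neg_div_neg_eq]
      exact div_nonneg (by linarith) (by linarith)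
  have hl1 : l ≤ 1 := by
    rcases hopp with ⟨p, q⟩ | ⟨p, q⟩
    · rw [hl, div_le_one (by linarith)]; linarith
    · rw [hl, ← neg_div_neg_eq, div_le_one (by linarith)]; linarith
  refine ⟨comb l x y, trivial, ?_, ?_⟩
  · funext i
    rw [hg]
    exact sgn_combo (congrFun hGxy i) hl0 hl1
  · rw [hh, hl]
    field_simp
    ring

lemma dim1 (M : ℕ) (k : Fin M → ℝ) (S : Set ℝ) :
    ((fun t => fun i => Real.sign (k i * t)) '' S).ncard ≤ 3 := by
  set F : ℝ → (Fin M → ℝ) := fun t => fun i => Real.sign (k i * t) with hF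
  have hkey : ∀ t, F t = F (Real.sign t) := by
    intro t
    funext i
    rcases lt_trichotomy t 0 with h | h | h
    · rw [hF]
      simp only
      rw [Real.sign_of_neg h]
      have h1 : k i * t = (-t) * (-(k i)) := by ring
      have h2 : k i * (-1 : ℝ) = -(k i) := by ring
      rw [h1, h2, sgn_pos_mul (by linarith)]
    · simp [hF, h, Real.sign_zero]
    · rw [hF]
      simp only
      rw [Real.sign_of_pos h]
      have h1 : k i * t = t * (k i) := by ring
      have h2 : k i * (1 : ℝ) = k i := by ring
      rw [h1, h2, sgn_pos_mul h]
  have hsub : F '' S ⊆ F '' {-1, 0, 1} := by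
    rintro _ ⟨t, -, rfl⟩
    exact ⟨Real.sign t, sgn_mem t, (hkey t).symm⟩
  have hfin : (F '' ({-1, 0, 1} : Set ℝ)).Finite :=
    Set.Finite.image _ ((Set.finite_singleton 1).insert 0 |>.insert (-1))
  calc (F '' S).ncard ≤ (F '' {-1, 0, 1}).ncard := Set.ncard_le_ncard hsub hfin
    _ ≤ ({-1, 0, 1} : Set ℝ).ncard :=
        Set.ncard_image_le ((Set.finite_singleton 1).insert 0 |>.insert (-1))
    _ ≤ 3 := by
        have h1 : ({-1, 0, 1} : Set ℝ).ncard ≤ ({0, 1} : Set ℝ).ncard + 1 :=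
          Set.ncard_insert_le _ _
        have h2 : ({0, 1} : Set ℝ).ncard ≤ ({1} : Set ℝ).ncard + 1 := Set.ncard_insert_le _ _
        have h3 : ({1} : Set ℝ).ncard = 1 := Set.ncard_singleton _
        omega

lemma dim2 (M : ℕ) : ∀ A : Fin M → ℝ × ℝ,
    ((fun x : ℝ × ℝ => fun i => Real.sign ((A i).1 * x.1 + (A i).2 * x.2)) '' univ).ncard
      ≤ 9 * M + 1 := by
  induction M with
  | zero =>
      intro A
      have hsub : (fun x : ℝ × ℝ => fun i : Fin 0 => Real.sign ((A i).1 * x.1 + (A i).2 * x.2))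
          '' univ ⊆ {fun i : Fin 0 => (0 : ℝ)} := by
        rintro _ ⟨x, -, rfl⟩
        simp only [mem_singleton_iff]
        funext i
        exact i.elim0
      calc _ ≤ ({fun i : Fin 0 => (0 : ℝ)} : Set (Fin 0 → ℝ)).ncard :=
            Set.ncard_le_ncard hsub (finite_singleton _)
        _ = 1 := Set.ncard_singleton _
        _ ≤ 9 * 0 + 1 := by omega
  | succ M ih =>
      intro A
      have hGfin : ((fun x : ℝ × ℝ => fun i : Fin M =>
          Real.sign ((A i.castSucc).1 * x.1 + (A i.castSucc).2 * x.2)) '' univ).Finite :=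
        sign_image_finite M (fun i (x : ℝ × ℝ) => (A i.castSucc).1 * x.1 + (A i.castSucc).2 * x.2) univ
      by_cases hc : A (Fin.last M) = 0
      · have hcomp : (fun x : ℝ × ℝ => fun i : Fin (M+1) =>
            Real.sign ((A i).1 * x.1 + (A i).2 * x.2)) =
            (fun v => Fin.snoc v (0 : ℝ)) ∘ (fun x : ℝ × ℝ => fun i : Fin M =>
              Real.sign ((A i.castSucc).1 * x.1 + (A i.castSucc).2 * x.2)) := by
          funext x
          refine funext (fun i => ?_)
          induction i using Fin.lastCases with
          | last => simp [hc, Real.sign_zero]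
          | cast i => simp
        rw [hcomp, Set.image_comp]
        calc _ ≤ _ := Set.ncard_image_le hGfin
          _ ≤ 9 * M + 1 := ih _
          _ ≤ 9 * (M + 1) + 1 := by omega
      · set c : ℝ := (A (Fin.last M)).1 with hcdef
        set d : ℝ := (A (Fin.last M)).2 with hddef
        set g : Fin M → ℝ × ℝ → ℝ :=
          fun i x => (A i.castSucc).1 * x.1 + (A i.castSucc).2 * x.2 with hgdef
        set G : ℝ × ℝ → (Fin M → ℝ) := fun x => fun i => Real.sign (g i x) with hGdef
        set h : ℝ × ℝ → ℝ := fun x => c * x.1 + d * x.2 with hhdef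
        set P : (Fin (M+1) → ℝ) → (Fin M → ℝ) × ℝ :=
          fun v => (fun i => v i.castSucc, v (Fin.last M)) with hPdef
        have hPinj : Function.Injective P := by
          intro v w hvw
          funext i
          induction i using Fin.lastCases with
          | last => exact congrArg Prod.snd hvw
          | cast i => exact congrFun (congrArg Prod.fst hvw) i
        have hcomp : P ∘ (fun x : ℝ × ℝ => fun i : Fin (M+1) =>
            Real.sign ((A i).1 * x.1 + (A i).2 * x.2)) =
            fun x => (G x, Real.sign (h x)) := rfl
        have h1 : ((fun x : ℝ × ℝ => fun i : Fin (M+1) =>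
            Real.sign ((A i).1 * x.1 + (A i).2 * x.2)) '' univ).ncard =
            ((fun x => (G x, Real.sign (h x))) '' univ).ncard := by
          rw [← hcomp, Set.image_comp]
          exact (Set.ncard_image_of_injective _ hPinj).symm
        rw [h1]
        have hRfin : (G '' (univ ∩ {x | h x = 0})).Finite :=
          sign_image_finite M g _
        have hiv := mix_hiv g h
          (fun l x y => ((1 - l) * x.1 + l * y.1, (1 - l) * x.2 + l * y.2))
          (by intro l x y i; simp only [hgdef]; ring)
          (by intro l x y; simp only [hhdef]; ring)
        have hstep := count_step univ G h hGfin hRfin hiv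
        -- bound the restricted image by the 1-dimensional lemma
        have hres : (G '' (univ ∩ {x | h x = 0})).ncard ≤ 3 := by
          set k : Fin M → ℝ :=
            fun i => (A i.castSucc).1 * d - (A i.castSucc).2 * c with hkdef
          have hsub : G '' (univ ∩ {x | h x = 0}) ⊆
              (fun t => fun i => Real.sign (k i * t)) '' univ := by
            rintro _ ⟨x, ⟨-, hx⟩, rfl⟩
            have hx' : c * x.1 + d * x.2 = 0 := hx
            have hcd : ¬(c = 0 ∧ d = 0) := by
              rintro ⟨h1', h2'⟩
              exact hc (Prod.ext (by rw [← hcdef, h1']; rfl) (by rw [← hddef, h2']; rfl))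
            have hex : ∃ t : ℝ, x.1 = d * t ∧ x.2 = -(c * t) := by
              by_cases hd : d = 0
              · have hcne : c ≠ 0 := fun hc0 => hcd ⟨hc0, hd⟩
                refine ⟨-(x.2 / c), ?_, ?_⟩
                · rw [hd]
                  have : c * x.1 = 0 := by rw [hd] at hx'; linarith
                  have := mul_eq_zero.mp this
                  simp [hcne] at this
                  simp [this]
                · field_simp
              · refine ⟨x.1 / d, ?_, ?_⟩
                · field_simp
                · have : d * x.2 = -(c * x.1) := by linarith
                  field_simp
                  nlinarith [this]
            obtain ⟨t, ht1, ht2⟩ := hex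
            refine ⟨t, trivial, ?_⟩
            funext i
            simp only [hGdef, hgdef, hkdef, ht1, ht2]
            congr 1
            ring
          have hfin1 : ((fun t => fun i => Real.sign (k i * t)) '' (univ : Set ℝ)).Finite :=
            sign_image_finite M (fun i t => k i * t) univ
          exact le_trans (Set.ncard_le_ncard hsub hfin1) (dim1 M k univ)
        calc _ ≤ _ := hstep
          _ ≤ (9 * M + 1) + 3 * 3 := by
              have := ih (fun i => A i.castSucc)
              gcongr
          _ ≤ 9 * (M + 1) + 1 := by omega

lemma dim3 (M : ℕ) : ∀ A : Fin M → ℝ × ℝ × ℝ,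
    ((fun x : ℝ × ℝ × ℝ => fun i =>
      Real.sign ((A i).1 * x.1 + (A i).2.1 * x.2.1 + (A i).2.2 * x.2.2)) '' univ).ncard
      ≤ 14 * M ^ 2 + 3 * M + 1 := by
  induction M with
  | zero =>
      intro A
      have hsub : (fun x : ℝ × ℝ × ℝ => fun i : Fin 0 =>
          Real.sign ((A i).1 * x.1 + (A i).2.1 * x.2.1 + (A i).2.2 * x.2.2))
          '' univ ⊆ {fun i : Fin 0 => (0 : ℝ)} := by
        rintro _ ⟨x, -, rfl⟩
        simp only [mem_singleton_iff]
        funext i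
        exact i.elim0
      calc _ ≤ ({fun i : Fin 0 => (0 : ℝ)} : Set (Fin 0 → ℝ)).ncard :=
            Set.ncard_le_ncard hsub (finite_singleton _)
        _ = 1 := Set.ncard_singleton _
        _ ≤ 14 * 0 ^ 2 + 3 * 0 + 1 := by omega
  | succ M ih =>
      intro A
      have hGfin : ((fun x : ℝ × ℝ × ℝ => fun i : Fin M =>
          Real.sign ((A i.castSucc).1 * x.1 + (A i.castSucc).2.1 * x.2.1 +
            (A i.castSucc).2.2 * x.2.2)) '' univ).Finite :=
        sign_image_finite M (fun i (x : ℝ × ℝ × ℝ) =>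
          (A i.castSucc).1 * x.1 + (A i.castSucc).2.1 * x.2.1 +
            (A i.castSucc).2.2 * x.2.2) univ
      by_cases hc : A (Fin.last M) = 0
      · have hcomp : (fun x : ℝ × ℝ × ℝ => fun i : Fin (M+1) =>
            Real.sign ((A i).1 * x.1 + (A i).2.1 * x.2.1 + (A i).2.2 * x.2.2)) =
            (fun v => Fin.snoc v (0 : ℝ)) ∘ (fun x : ℝ × ℝ × ℝ => fun i : Fin M =>
              Real.sign ((A i.castSucc).1 * x.1 + (A i.castSucc).2.1 * x.2.1 +
                (A i.castSucc).2.2 * x.2.2)) := by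
          funext x
          refine funext (fun i => ?_)
          induction i using Fin.lastCases with
          | last => simp [hc, Real.sign_zero]
          | cast i => simp
        rw [hcomp, Set.image_comp]
        calc _ ≤ _ := Set.ncard_image_le hGfin
          _ ≤ 14 * M ^ 2 + 3 * M + 1 := ih _
          _ ≤ 14 * (M + 1) ^ 2 + 3 * (M + 1) + 1 := by nlinarith
      · set a : ℝ := (A (Fin.last M)).1 with hadef
        set b : ℝ := (A (Fin.last M)).2.1 with hbdef
        set c : ℝ := (A (Fin.last M)).2.2 with hcdef
        set g : Fin M → ℝ × ℝ × ℝ → ℝ :=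
          fun i x => (A i.castSucc).1 * x.1 + (A i.castSucc).2.1 * x.2.1 +
            (A i.castSucc).2.2 * x.2.2 with hgdef
        set G : ℝ × ℝ × ℝ → (Fin M → ℝ) := fun x => fun i => Real.sign (g i x) with hGdef
        set h : ℝ × ℝ × ℝ → ℝ := fun x => a * x.1 + b * x.2.1 + c * x.2.2 with hhdef
        set P : (Fin (M+1) → ℝ) → (Fin M → ℝ) × ℝ :=
          fun v => (fun i => v i.castSucc, v (Fin.last M)) with hPdef
        have hPinj : Function.Injective P := by
          intro v w hvw
          funext i
          induction i using Fin.lastCases with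
          | last => exact congrArg Prod.snd hvw
          | cast i => exact congrFun (congrArg Prod.fst hvw) i
        have hcomp : P ∘ (fun x : ℝ × ℝ × ℝ => fun i : Fin (M+1) =>
            Real.sign ((A i).1 * x.1 + (A i).2.1 * x.2.1 + (A i).2.2 * x.2.2)) =
            fun x => (G x, Real.sign (h x)) := rfl
        have h1 : ((fun x : ℝ × ℝ × ℝ => fun i : Fin (M+1) =>
            Real.sign ((A i).1 * x.1 + (A i).2.1 * x.2.1 + (A i).2.2 * x.2.2)) '' univ).ncard =
            ((fun x => (G x, Real.sign (h x))) '' univ).ncard := by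
          rw [← hcomp, Set.image_comp]
          exact (Set.ncard_image_of_injective _ hPinj).symm
        rw [h1]
        have hRfin : (G '' (univ ∩ {x | h x = 0})).Finite :=
          sign_image_finite M g _
        have hiv := mix_hiv g h
          (fun l x y => ((1 - l) * x.1 + l * y.1,
            ((1 - l) * x.2.1 + l * y.2.1, (1 - l) * x.2.2 + l * y.2.2)))
          (by intro l x y i; simp only [hgdef]; ring)
          (by intro l x y; simp only [hhdef]; ring)
        have hstep := count_step univ G h hGfin hRfin hiv
        -- find a parametrization of the plane {h = 0}
        have hker : ∃ u v : ℝ × ℝ × ℝ, ∀ x : ℝ × ℝ × ℝ, h x = 0 →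
            ∃ s t : ℝ, x = (s * u.1 + t * v.1,
              (s * u.2.1 + t * v.2.1, s * u.2.2 + t * v.2.2)) := by
          have habc : ¬(a = 0 ∧ b = 0 ∧ c = 0) := by
            rintro ⟨h1', h2', h3'⟩
            refine hc (Prod.ext (by rw [← hadef, h1']; rfl)
              (Prod.ext (by rw [← hbdef, h2']; rfl) (by rw [← hcdef, h3']; rfl)))
          by_cases ha : a = 0
          · by_cases hb : b = 0
            · have hcne : c ≠ 0 := fun h0 => habc ⟨ha, hb, h0⟩
              refine ⟨(1, 0, 0), (0, 1, 0), fun x hx => ⟨x.1, x.2.1, ?_⟩⟩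
              have hx' : a * x.1 + b * x.2.1 + c * x.2.2 = 0 := hx
              rw [ha, hb] at hx'
              have h3 : x.2.2 = 0 := by
                have := mul_eq_zero.mp (by linarith : c * x.2.2 = 0)
                tauto
              refine Prod.ext (by simp) (Prod.ext (by simp) (by simp [h3]))
            · refine ⟨(1, 0, 0), (0, -(c / b), 1), fun x hx => ⟨x.1, x.2.2, ?_⟩⟩
              have hx' : a * x.1 + b * x.2.1 + c * x.2.2 = 0 := hx
              rw [ha] at hx'
              refine Prod.ext (by simp) (Prod.ext ?_ (by simp))
              show x.2.1 = x.1 * 0 + x.2.2 * -(c / b)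
              ring_nf at hx'
              have h21 : x.2.1 = (-(c * x.2.2)) / b := by
                rw [eq_div_iff hb]; linarith
              rw [h21]; field_simp; ring
          · refine ⟨(-(b / a), 1, 0), (-(c / a), 0, 1), fun x hx => ⟨x.2.1, x.2.2, ?_⟩⟩
            have hx' : a * x.1 + b * x.2.1 + c * x.2.2 = 0 := hx
            refine Prod.ext ?_ (Prod.ext (by simp) (by simp))
            show x.1 = x.2.1 * -(b / a) + x.2.2 * -(c / a)
            have h11 : x.1 = (-(b * x.2.1) - c * x.2.2) / a := by
              rw [eq_div_iff ha]; linarith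
            rw [h11]; field_simp; ring
        obtain ⟨u, v, huv⟩ := hker
        have hres : (G '' (univ ∩ {x | h x = 0})).ncard ≤ 9 * M + 1 := by
          set B : Fin M → ℝ × ℝ :=
            fun i => (g i u, g i v) with hBdef
          have hsub : G '' (univ ∩ {x | h x = 0}) ⊆
              (fun y : ℝ × ℝ => fun i => Real.sign ((B i).1 * y.1 + (B i).2 * y.2)) '' univ := by
            rintro _ ⟨x, ⟨-, hx⟩, rfl⟩
            obtain ⟨s, t, hst⟩ := huv x hx
            refine ⟨(s, t), trivial, ?_⟩
            funext i
            simp only [hBdef, hGdef, hgdef, hst]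
            congr 1
            ring
          have hfin2 : ((fun y : ℝ × ℝ => fun i =>
              Real.sign ((B i).1 * y.1 + (B i).2 * y.2)) '' univ).Finite :=
            sign_image_finite M (fun i (y : ℝ × ℝ) => (B i).1 * y.1 + (B i).2 * y.2) univ
          exact le_trans (Set.ncard_le_ncard hsub hfin2) (dim2 M B)
        calc _ ≤ _ := hstep
          _ ≤ (14 * M ^ 2 + 3 * M + 1) + 3 * (9 * M + 1) := by
              have := ih (fun i => A i.castSucc)
              gcongr
          _ ≤ 14 * (M + 1) ^ 2 + 3 * (M + 1) + 1 := by nlinarith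

lemma seg_zero {wP wQ : ℝ} (h : 0 < wP ∧ wQ < 0 ∨ wP < 0 ∧ 0 < wQ) :
    ∃ s : ℝ, 0 < s ∧ s < 1 ∧ (1 - s) * wP + s * wQ = 0 := by
  have hden : wP - wQ ≠ 0 := by rcases h with ⟨h1, h2⟩ | ⟨h1, h2⟩ <;> intro hc <;> nlinarith
  refine ⟨wP / (wP - wQ), ?_, ?_, by field_simp; ring⟩
  · rcases h with ⟨h1, h2⟩ | ⟨h1, h2⟩
    · exact div_pos h1 (by linarith)
    · rw [← neg_div_neg_eq]; exact div_pos (by linarith) (by linarith)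
  · rcases h with ⟨h1, h2⟩ | ⟨h1, h2⟩
    · rw [div_lt_one (by linarith)]; linarith
    · rw [← neg_div_neg_eq, div_lt_one (by linarith)]; linarith

lemma cell_char (a b c x0 y0 δ : ℝ) (hδ : 0 < δ) :
    (∃ p : ℝ × ℝ, p ∈ Set.Ico x0 (x0 + δ) ×ˢ Set.Ico y0 (y0 + δ) ∧
      a * p.1 + b * p.2 + c = 0) ↔
    (a * x0 + b * y0 + c = 0 ∨
      ((0 < a * x0 + b * y0 + c ∨ 0 < a * (x0 + δ) + b * y0 + c ∨
        0 < a * x0 + b * (y0 + δ) + c ∨ 0 < a * (x0 + δ) + b * (y0 + δ) + c) ∧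
       (a * x0 + b * y0 + c < 0 ∨ a * (x0 + δ) + b * y0 + c < 0 ∨
        a * x0 + b * (y0 + δ) + c < 0 ∨ a * (x0 + δ) + b * (y0 + δ) + c < 0))) := by
  constructor
  · rintro ⟨⟨x, y⟩, ⟨⟨hx0, hx1⟩, ⟨hy0, hy1⟩⟩, hf⟩
    by_cases h00 : a * x0 + b * y0 + c = 0
    · exact Or.inl h00
    refine Or.inr ⟨?_, ?_⟩
    · -- some corner is positive
      by_contra hcon
      push_neg at hcon
      obtain ⟨c1, c2, c3, c4⟩ := hcon
      have hw00 : a * x0 + b * y0 + c < 0 := lt_of_le_of_ne c1 h00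
      have A1 : 0 < x0 + δ - x := by linarith
      have A2 : 0 < y0 + δ - y := by linarith
      have B1 : 0 ≤ x - x0 := by linarith
      have B2 : 0 ≤ y - y0 := by linarith
      have key : δ ^ 2 * (a * x + b * y + c) =
          (x0 + δ - x) * (y0 + δ - y) * (a * x0 + b * y0 + c) +
          (x - x0) * (y0 + δ - y) * (a * (x0 + δ) + b * y0 + c) +
          (x0 + δ - x) * (y - y0) * (a * x0 + b * (y0 + δ) + c) +
          (x - x0) * (y - y0) * (a * (x0 + δ) + b * (y0 + δ) + c) := by ring
      rw [hf, mul_zero] at key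
      have t1 : (x0 + δ - x) * (y0 + δ - y) * (a * x0 + b * y0 + c) < 0 :=
        mul_neg_of_pos_of_neg (mul_pos A1 A2) hw00
      have t2 : (x - x0) * (y0 + δ - y) * (a * (x0 + δ) + b * y0 + c) ≤ 0 :=
        mul_nonpos_of_nonneg_of_nonpos (mul_nonneg B1 A2.le) c2
      have t3 : (x0 + δ - x) * (y - y0) * (a * x0 + b * (y0 + δ) + c) ≤ 0 :=
        mul_nonpos_of_nonneg_of_nonpos (mul_nonneg A1.le B2) c3
      have t4 : (x - x0) * (y - y0) * (a * (x0 + δ) + b * (y0 + δ) + c) ≤ 0 :=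
        mul_nonpos_of_nonneg_of_nonpos (mul_nonneg B1 B2) c4
      linarith
    · -- some corner is negative
      by_contra hcon
      push_neg at hcon
      obtain ⟨c1, c2, c3, c4⟩ := hcon
      have hw00 : 0 < a * x0 + b * y0 + c := lt_of_le_of_ne c1 (Ne.symm h00)
      have A1 : 0 < x0 + δ - x := by linarith
      have A2 : 0 < y0 + δ - y := by linarith
      have B1 : 0 ≤ x - x0 := by linarith
      have B2 : 0 ≤ y - y0 := by linarith
      have key : δ ^ 2 * (a * x + b * y + c) =
          (x0 + δ - x) * (y0 + δ - y) * (a * x0 + b * y0 + c) +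
          (x - x0) * (y0 + δ - y) * (a * (x0 + δ) + b * y0 + c) +
          (x0 + δ - x) * (y - y0) * (a * x0 + b * (y0 + δ) + c) +
          (x - x0) * (y - y0) * (a * (x0 + δ) + b * (y0 + δ) + c) := by ring
      rw [hf, mul_zero] at key
      have t1 : 0 < (x0 + δ - x) * (y0 + δ - y) * (a * x0 + b * y0 + c) :=
        mul_pos (mul_pos A1 A2) hw00
      have t2 : 0 ≤ (x - x0) * (y0 + δ - y) * (a * (x0 + δ) + b * y0 + c) :=
        mul_nonneg (mul_nonneg B1 A2.le) c2
      have t3 : 0 ≤ (x0 + δ - x) * (y - y0) * (a * x0 + b * (y0 + δ) + c) :=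
        mul_nonneg (mul_nonneg A1.le B2) c3
      have t4 : 0 ≤ (x - x0) * (y - y0) * (a * (x0 + δ) + b * (y0 + δ) + c) :=
        mul_nonneg (mul_nonneg B1 B2) c4
      linarith
  · rintro (h00 | ⟨hpos, hneg⟩)
    · exact ⟨(x0, y0), ⟨⟨le_refl _, by linarith⟩, ⟨le_refl _, by linarith⟩⟩, h00⟩
    · rcases lt_trichotomy (a * x0 + b * y0 + c) 0 with hw | hw | hw
      · -- w00 < 0 : find a positive corner
        rcases hpos with p00 | p10 | p01 | p11
        · linarith
        · obtain ⟨s, hs0, hs1, hz⟩ := seg_zero (Or.inr ⟨hw, p10⟩)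
          refine ⟨(x0 + s * δ, y0), ⟨⟨by show x0 ≤ x0 + s * δ; nlinarith [mul_pos hs0 hδ], by show x0 + s * δ < x0 + δ; nlinarith [mul_pos (by linarith : (0:ℝ) < 1 - s) hδ]⟩, ⟨le_refl _, by show y0 < y0 + δ; linarith⟩⟩, ?_⟩
          have : a * (x0 + s * δ) + b * y0 + c =
              (1 - s) * (a * x0 + b * y0 + c) + s * (a * (x0 + δ) + b * y0 + c) := by ring
          rw [this, hz]
        · obtain ⟨s, hs0, hs1, hz⟩ := seg_zero (Or.inr ⟨hw, p01⟩)
          refine ⟨(x0, y0 + s * δ), ⟨⟨le_refl _, by show x0 < x0 + δ; linarith⟩, ⟨by show y0 ≤ y0 + s * δ; nlinarith [mul_pos hs0 hδ], by show y0 + s * δ < y0 + δ; nlinarith [mul_pos (by linarith : (0:ℝ) < 1 - s) hδ]⟩⟩, ?_⟩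
          have : a * x0 + b * (y0 + s * δ) + c =
              (1 - s) * (a * x0 + b * y0 + c) + s * (a * x0 + b * (y0 + δ) + c) := by ring
          rw [this, hz]
        · obtain ⟨s, hs0, hs1, hz⟩ := seg_zero (Or.inr ⟨hw, p11⟩)
          refine ⟨(x0 + s * δ, y0 + s * δ),
            ⟨⟨by show x0 ≤ x0 + s * δ; nlinarith [mul_pos hs0 hδ], by show x0 + s * δ < x0 + δ; nlinarith [mul_pos (by linarith : (0:ℝ) < 1 - s) hδ]⟩, ⟨by show y0 ≤ y0 + s * δ; nlinarith [mul_pos hs0 hδ], by show y0 + s * δ < y0 + δ; nlinarith [mul_pos (by linarith : (0:ℝ) < 1 - s) hδ]⟩⟩, ?_⟩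
          have : a * (x0 + s * δ) + b * (y0 + s * δ) + c =
              (1 - s) * (a * x0 + b * y0 + c) + s * (a * (x0 + δ) + b * (y0 + δ) + c) := by ring
          rw [this, hz]
      · exact ⟨(x0, y0), ⟨⟨le_refl _, by linarith⟩, ⟨le_refl _, by linarith⟩⟩, hw⟩
      · -- w00 > 0 : find a negative corner
        rcases hneg with n00 | n10 | n01 | n11
        · linarith
        · obtain ⟨s, hs0, hs1, hz⟩ := seg_zero (Or.inl ⟨hw, n10⟩)
          refine ⟨(x0 + s * δ, y0), ⟨⟨by show x0 ≤ x0 + s * δ; nlinarith [mul_pos hs0 hδ], by show x0 + s * δ < x0 + δ; nlinarith [mul_pos (by linarith : (0:ℝ) < 1 - s) hδ]⟩, ⟨le_refl _, by show y0 < y0 + δ; linarith⟩⟩, ?_⟩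
          have : a * (x0 + s * δ) + b * y0 + c =
              (1 - s) * (a * x0 + b * y0 + c) + s * (a * (x0 + δ) + b * y0 + c) := by ring
          rw [this, hz]
        · obtain ⟨s, hs0, hs1, hz⟩ := seg_zero (Or.inl ⟨hw, n01⟩)
          refine ⟨(x0, y0 + s * δ), ⟨⟨le_refl _, by show x0 < x0 + δ; linarith⟩, ⟨by show y0 ≤ y0 + s * δ; nlinarith [mul_pos hs0 hδ], by show y0 + s * δ < y0 + δ; nlinarith [mul_pos (by linarith : (0:ℝ) < 1 - s) hδ]⟩⟩, ?_⟩
          have : a * x0 + b * (y0 + s * δ) + c =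
              (1 - s) * (a * x0 + b * y0 + c) + s * (a * x0 + b * (y0 + δ) + c) := by ring
          rw [this, hz]
        · obtain ⟨s, hs0, hs1, hz⟩ := seg_zero (Or.inl ⟨hw, n11⟩)
          refine ⟨(x0 + s * δ, y0 + s * δ),
            ⟨⟨by show x0 ≤ x0 + s * δ; nlinarith [mul_pos hs0 hδ], by show x0 + s * δ < x0 + δ; nlinarith [mul_pos (by linarith : (0:ℝ) < 1 - s) hδ]⟩, ⟨by show y0 ≤ y0 + s * δ; nlinarith [mul_pos hs0 hδ], by show y0 + s * δ < y0 + δ; nlinarith [mul_pos (by linarith : (0:ℝ) < 1 - s) hδ]⟩⟩, ?_⟩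
          have : a * (x0 + s * δ) + b * (y0 + s * δ) + c =
              (1 - s) * (a * x0 + b * y0 + c) + s * (a * (x0 + δ) + b * (y0 + δ) + c) := by ring
          rw [this, hz]

lemma sgn_eq_one_iff {w : ℝ} : Real.sign w = 1 ↔ 0 < w := by
  constructor
  · intro h
    rcases lt_trichotomy w 0 with hw | hw | hw
    · rw [Real.sign_of_neg hw] at h; norm_num at h
    · rw [hw, Real.sign_zero] at h; norm_num at h
    · exact hw
  · exact Real.sign_of_pos

lemma sgn_eq_neg_one_iff {w : ℝ} : Real.sign w = -1 ↔ w < 0 := by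
  constructor
  · intro h
    rcases lt_trichotomy w 0 with hw | hw | hw
    · exact hw
    · rw [hw, Real.sign_zero] at h; norm_num at h
    · rw [Real.sign_of_pos hw] at h; norm_num at h
  · exact Real.sign_of_neg

/-- The grid cell with indices `(i, j)` in the `N × N` grid of the unit square. -/
noncomputable def gridCell (N : ℕ) (i j : Fin N) : Set (ℝ × ℝ) :=
  Set.Ico ((i : ℝ) / N) (((i : ℝ) + 1) / N) ×ˢ Set.Ico ((j : ℝ) / N) (((j : ℝ) + 1) / N)

/-- For the `N × N` grid in the unit square, the number of distinct signatures of
lines — where the signature of a line is the set of grid cells it intersects — is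
`O(N⁴)`. -/
theorem stmt_16 :
    ∃ C : ℕ, 0 < C ∧ ∀ N : ℕ, 1 ≤ N →
      {s : Set (Fin N × Fin N) | ∃ a b c : ℝ, (a, b) ≠ (0, 0) ∧
        s = {ij | ∃ p : ℝ × ℝ, p ∈ gridCell N ij.1 ij.2 ∧ a * p.1 + b * p.2 + c = 0}}.ncard ≤
      C * N ^ 4 := by
  refine ⟨1000, by norm_num, fun N hN => ?_⟩
  have hN0 : (0 : ℝ) < N := by exact_mod_cast Nat.lt_of_lt_of_le Nat.zero_lt_one hN
  have hδ : (0 : ℝ) < 1 / N := by positivity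
  set M := (N + 1) * (N + 1) with hMdef
  set idx : Fin (N + 1) → Fin (N + 1) → Fin M := fun p q => finProdFinEquiv (p, q) with hidx
  set A : Fin M → ℝ × ℝ × ℝ := fun m =>
    (((finProdFinEquiv.symm m).1 : ℝ), ((finProdFinEquiv.symm m).2 : ℝ), (N : ℝ)) with hA
  set SgnSet : Set (Fin M → ℝ) := (fun x : ℝ × ℝ × ℝ => fun m =>
    Real.sign ((A m).1 * x.1 + (A m).2.1 * x.2.1 + (A m).2.2 * x.2.2)) '' univ with hSgn
  set Ψ : (Fin M → ℝ) → Set (Fin N × Fin N) := fun v =>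
    {ij | v (idx ij.1.castSucc ij.2.castSucc) = 0 ∨
      ((v (idx ij.1.castSucc ij.2.castSucc) = 1 ∨ v (idx ij.1.succ ij.2.castSucc) = 1 ∨
        v (idx ij.1.castSucc ij.2.succ) = 1 ∨ v (idx ij.1.succ ij.2.succ) = 1) ∧
       (v (idx ij.1.castSucc ij.2.castSucc) = -1 ∨ v (idx ij.1.succ ij.2.castSucc) = -1 ∨
        v (idx ij.1.castSucc ij.2.succ) = -1 ∨ v (idx ij.1.succ ij.2.succ) = -1))} with hΨ
  have hsub : {s : Set (Fin N × Fin N) | ∃ a b c : ℝ, (a, b) ≠ (0, 0) ∧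
      s = {ij | ∃ p : ℝ × ℝ, p ∈ gridCell N ij.1 ij.2 ∧ a * p.1 + b * p.2 + c = 0}} ⊆
      Ψ '' SgnSet := by
    rintro s ⟨a, b, c, -, rfl⟩
    refine ⟨fun m => Real.sign ((A m).1 * a + (A m).2.1 * b + (A m).2.2 * c),
      ⟨(a, b, c), trivial, rfl⟩, ?_⟩
    have hv : ∀ p q : Fin (N + 1),
        Real.sign ((A (idx p q)).1 * a + (A (idx p q)).2.1 * b + (A (idx p q)).2.2 * c) =
        Real.sign (a * ((p : ℝ) / N) + b * ((q : ℝ) / N) + c) := by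
      intro p q
      simp only [hA, hidx, Equiv.symm_apply_apply]
      have harg : (p : ℝ) * a + (q : ℝ) * b + (N : ℝ) * c =
          (N : ℝ) * (a * ((p : ℝ) / N) + b * ((q : ℝ) / N) + c) := by
        field_simp
      rw [harg, sgn_pos_mul hN0]
    ext ⟨i, j⟩
    have hgrid : gridCell N i j =
        Set.Ico ((i : ℝ) / N) ((i : ℝ) / N + 1 / N) ×ˢ
          Set.Ico ((j : ℝ) / N) ((j : ℝ) / N + 1 / N) := by
      rw [gridCell]; rw [add_div, add_div]
    have hchar := cell_char a b c ((i : ℝ) / N) ((j : ℝ) / N) (1 / N) hδ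
    have hmem : ((i, j) ∈ {ij : Fin N × Fin N | ∃ p : ℝ × ℝ,
        p ∈ gridCell N ij.1 ij.2 ∧ a * p.1 + b * p.2 + c = 0}) ↔
        (a * ((i : ℝ) / N) + b * ((j : ℝ) / N) + c = 0 ∨
        ((0 < a * ((i : ℝ) / N) + b * ((j : ℝ) / N) + c ∨
          0 < a * ((i : ℝ) / N + 1 / N) + b * ((j : ℝ) / N) + c ∨
          0 < a * ((i : ℝ) / N) + b * ((j : ℝ) / N + 1 / N) + c ∨
          0 < a * ((i : ℝ) / N + 1 / N) + b * ((j : ℝ) / N + 1 / N) + c) ∧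
         (a * ((i : ℝ) / N) + b * ((j : ℝ) / N) + c < 0 ∨
          a * ((i : ℝ) / N + 1 / N) + b * ((j : ℝ) / N) + c < 0 ∨
          a * ((i : ℝ) / N) + b * ((j : ℝ) / N + 1 / N) + c < 0 ∨
          a * ((i : ℝ) / N + 1 / N) + b * ((j : ℝ) / N + 1 / N) + c < 0))) := by
      rw [mem_setOf_eq]
      simp only [hgrid]
      exact hchar
    have hc00 : ((i.castSucc : Fin (N+1)) : ℝ) = (i : ℝ) := by
      norm_cast
    have hc10 : ((i.succ : Fin (N+1)) : ℝ) / N = (i : ℝ) / N + 1 / N := by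
      have : ((i.succ : Fin (N+1)) : ℝ) = (i : ℝ) + 1 := by norm_cast
      rw [this, add_div]
    have hc00' : ((j.castSucc : Fin (N+1)) : ℝ) = (j : ℝ) := by norm_cast
    have hc10' : ((j.succ : Fin (N+1)) : ℝ) / N = (j : ℝ) / N + 1 / N := by
      have : ((j.succ : Fin (N+1)) : ℝ) = (j : ℝ) + 1 := by norm_cast
      rw [this, add_div]
    simp only [hΨ, mem_setOf_eq]
    rw [hv, hv, hv, hv, hc00, hc00', hc10, hc10']
    rw [Real.sign_eq_zero_iff, sgn_eq_one_iff, sgn_eq_one_iff, sgn_eq_one_iff, sgn_eq_one_iff,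
      sgn_eq_neg_one_iff, sgn_eq_neg_one_iff, sgn_eq_neg_one_iff, sgn_eq_neg_one_iff]
    exact (hmem).symm
  have hSfin : SgnSet.Finite :=
    sign_image_finite M (fun m (x : ℝ × ℝ × ℝ) =>
      (A m).1 * x.1 + (A m).2.1 * x.2.1 + (A m).2.2 * x.2.2) univ
  have hcount : ({s : Set (Fin N × Fin N) | ∃ a b c : ℝ, (a, b) ≠ (0, 0) ∧
      s = {ij | ∃ p : ℝ × ℝ, p ∈ gridCell N ij.1 ij.2 ∧
        a * p.1 + b * p.2 + c = 0}}).ncard ≤ 14 * M ^ 2 + 3 * M + 1 := by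
    calc _ ≤ (Ψ '' SgnSet).ncard := Set.ncard_le_ncard hsub (hSfin.image _)
      _ ≤ SgnSet.ncard := Set.ncard_image_le hSfin
      _ ≤ 14 * M ^ 2 + 3 * M + 1 := dim3 M A
  refine le_trans hcount ?_
  have h2N : N + 1 ≤ 2 * N := by omega
  have hA4 : M ≤ 4 * N ^ 2 := by
    rw [hMdef]
    calc (N + 1) * (N + 1) ≤ (2 * N) * (2 * N) := Nat.mul_le_mul h2N h2N
      _ = 4 * N ^ 2 := by ring
  have hM2 : M ^ 2 ≤ 16 * N ^ 4 := by
    calc M ^ 2 ≤ (4 * N ^ 2) ^ 2 := Nat.pow_le_pow_left hA4 2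
      _ = 16 * N ^ 4 := by ring
  have hN2 : N ^ 2 ≤ N ^ 4 := Nat.pow_le_pow_right (by omega) (by omega)
  have hN4 : 1 ≤ N ^ 4 := Nat.one_le_pow _ _ (by omega)
  linarith
end
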